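/- arXiv:1804.07107 — 4 statements merged into one kernel-verified Lean document; each statement's English description precedes it below -/
import Mathlib

section
/- Let G be a symmetric network congestion game on a series-parallel graph with n players and common action set 𝒜, let m < n, let P_1,…,P_m ∈ 𝒜, and let G' be the subgame of G induced by (P_1,…,P_m). Then for every 1-lookahead outcome B' of G' and every 1-lookahead outcome B of G, the worst cost of B' in G' is at most the worst cost of B in G: W_{B'} ≤ W_B. -/
/-- A congestion game with `n` players on a finite resource type `R`:
each player has a finite set of actions (each action a set of resources),
and each resource has a delay function `ℕ → ℝ`. -/
structure CGame (R : Type) [DecidableEq R] [Fintype R] (n : ℕ) where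
  actions : Fin n → Finset (Finset R)
  delay : R → ℕ → ℝ

namespace CGame

variable {R : Type} [DecidableEq R] [Fintype R] {n : ℕ}

/-- The congestion `x(A)_r`: number of players using resource `r` in profile `A`. -/
def congestion (_G : CGame R n) (A : Fin n → Finset R) (r : R) : ℕ :=
  (Finset.univ.filter fun i => r ∈ A i).card

/-- The cost of player `i` in profile `A`. -/
def cost (G : CGame R n) (A : Fin n → Finset R) (i : Fin n) : ℝ :=
  ∑ r ∈ A i, G.delay r (G.congestion A r)

/-- `A` is an outcome: each player plays one of his actions. -/
def IsOutcome (G : CGame R n) (A : Fin n → Finset R) : Prop :=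
  ∀ i, A i ∈ G.actions i

/-- `A` is a (pure) Nash equilibrium. -/
def IsNash (G : CGame R n) (A : Fin n → Finset R) : Prop :=
  G.IsOutcome A ∧ ∀ i, ∀ B ∈ G.actions i, G.cost A i ≤ G.cost (Function.update A i B) i

/-- The subgame induced by the first player playing `a`. -/
def subgame (G : CGame R (n + 1)) (a : Finset R) : CGame R n where
  actions := fun i => G.actions i.succ
  delay := fun r y => G.delay r (y + if r ∈ a then 1 else 0)

/-- The subgame induced by the first `m` players playing `P`. -/
def subgameMany {m k : ℕ} (G : CGame R (m + k)) (P : Fin m → Finset R) : CGame R k where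
  actions := fun i => G.actions (Fin.natAdd m i)
  delay := fun r y => G.delay r (y + (Finset.univ.filter fun i : Fin m => r ∈ P i).card)

/-- `G^k`: the game on the first `min k n` players. -/
def truncate (G : CGame R n) (k : ℕ) : CGame R (min k n) where
  actions := fun i => G.actions (Fin.castLE (min_le_right k n) i)
  delay := G.delay

/-- The game reordered so that the player in position `i` is player `σ i`. -/
def reorder (G : CGame R n) (σ : Equiv.Perm (Fin n)) : CGame R n where
  actions := fun i => G.actions (σ i)
  delay := G.delay

/-- Subgame-perfect outcomes with respect to the order `1, …, n`. -/
def IsSPO : {n : ℕ} → CGame R n → (Fin n → Finset R) → Prop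
  | 0, _, _ => True
  | _ + 1, G, A =>
      A 0 ∈ G.actions 0 ∧
      ∃ f : Finset R → (Fin _ → Finset R),
        (∀ a ∈ G.actions 0, IsSPO (G.subgame a) (f a)) ∧
        f (A 0) = Fin.tail A ∧
        ∀ a ∈ G.actions 0,
          G.cost (Fin.cons (A 0) (f (A 0))) 0 ≤ G.cost (Fin.cons a (f a)) 0

/-- `k`-lookahead outcomes with respect to the order `1, …, n`. -/
def IsKLA (k : ℕ) : {n : ℕ} → CGame R n → (Fin n → Finset R) → Prop
  | 0, _, _ => True
  | n + 1, G, A =>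
      (∃ (hk : 0 < min k (n + 1)) (B : Fin (min k (n + 1)) → Finset R),
          IsSPO (G.truncate k) B ∧ B ⟨0, hk⟩ = A 0) ∧
      IsKLA k (G.subgame (A 0)) (Fin.tail A)

/-- `A` is a subgame-perfect outcome of `G` with respect to some order of the players. -/
def IsSPOutcome (G : CGame R n) (A : Fin n → Finset R) : Prop :=
  ∃ σ : Equiv.Perm (Fin n), IsSPO (G.reorder σ) (A ∘ σ)

/-- `A` is a `k`-lookahead outcome of `G` with respect to some order of the players. -/
def IsKLO (k : ℕ) (G : CGame R n) (A : Fin n → Finset R) : Prop :=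
  ∃ σ : Equiv.Perm (Fin n), IsKLA k (G.reorder σ) (A ∘ σ)

/-- The cost of player `i` when only the players in `s` play (profile restricted to `s`). -/
def costOn (G : CGame R n) (s : Finset (Fin n)) (A : Fin n → Finset R) (i : Fin n) : ℝ :=
  ∑ r ∈ A i, G.delay r ((s.filter fun j => r ∈ A j).card)

/-- `G` is generic: in every restriction of the game to a subset of the players,
a player's cost changes whenever his own action changes. -/
def Generic (G : CGame R n) : Prop :=
  ∀ s : Finset (Fin n), ∀ A B : Fin n → Finset R,
    (∀ i ∈ s, A i ∈ G.actions i) → (∀ i ∈ s, B i ∈ G.actions i) →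
    ∀ j ∈ s, A j ≠ B j → G.costOn s A j ≠ G.costOn s B j

/-- Utilitarian social cost. -/
def SC (G : CGame R n) (A : Fin n → Finset R) : ℝ :=
  ∑ i, G.cost A i

/-- Minimum social cost over all outcomes. -/
noncomputable def optSC (G : CGame R n) : ℝ :=
  sInf {y | ∃ A, G.IsOutcome A ∧ y = G.SC A}

/-- The `k`-Lookahead Price of Anarchy. -/
noncomputable def kLPoA (G : CGame R n) (k : ℕ) : ℝ :=
  sSup {y | ∃ A, IsKLO k G A ∧ y = G.SC A / G.optSC}

/-- The Price of Anarchy. -/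
noncomputable def PoA (G : CGame R n) : ℝ :=
  sSup {y | ∃ A, G.IsNash A ∧ y = G.SC A / G.optSC}

/-- Opportunity cost `O_A` of an outcome `A` in a symmetric game with action set `𝒜`. -/
noncomputable def oppCost (G : CGame R n) (𝒜 : Finset (Finset R)) (A : Fin n → Finset R) : ℝ :=
  sInf {y | ∃ P ∈ 𝒜, y = ∑ r ∈ P, G.delay r (G.congestion A r + 1)}

/-- Worst cost (egalitarian social cost) `W_A` of an outcome `A`. -/
noncomputable def worstCost (G : CGame R n) (A : Fin n → Finset R) : ℝ :=
  sSup {y | ∃ i, y = G.cost A i}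

/-- Rosenthal's potential function. -/
def potential (G : CGame R n) (A : Fin n → Finset R) : ℝ :=
  ∑ r : R, ∑ i ∈ Finset.Icc 1 (G.congestion A r), G.delay r i

end CGame
/-- Syntax trees of extension-parallel graphs: a single arc; parallel composition;
series composition of a single arc with an EP graph (arc first or arc last). -/
inductive EPTree : Type
  | edge : EPTree
  | parallel : EPTree → EPTree → EPTree
  | extHead : EPTree → EPTree
  | extTail : EPTree → EPTree

namespace EPTree

/-- The arcs of an extension-parallel graph. -/
def Arc : EPTree → Type
  | edge => Unit
  | parallel t₁ t₂ => t₁.Arc ⊕ t₂.Arc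
  | extHead t => Unit ⊕ t.Arc
  | extTail t => t.Arc ⊕ Unit

def arcDecEq : (t : EPTree) → DecidableEq t.Arc
  | edge => inferInstanceAs (DecidableEq Unit)
  | parallel t₁ t₂ =>
      letI := t₁.arcDecEq; letI := t₂.arcDecEq
      inferInstanceAs (DecidableEq (t₁.Arc ⊕ t₂.Arc))
  | extHead t =>
      letI := t.arcDecEq
      inferInstanceAs (DecidableEq (Unit ⊕ t.Arc))
  | extTail t =>
      letI := t.arcDecEq
      inferInstanceAs (DecidableEq (t.Arc ⊕ Unit))

instance (t : EPTree) : DecidableEq t.Arc := t.arcDecEq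

def arcFintype : (t : EPTree) → Fintype t.Arc
  | edge => inferInstanceAs (Fintype Unit)
  | parallel t₁ t₂ =>
      letI := t₁.arcFintype; letI := t₂.arcFintype
      inferInstanceAs (Fintype (t₁.Arc ⊕ t₂.Arc))
  | extHead t =>
      letI := t.arcFintype
      inferInstanceAs (Fintype (Unit ⊕ t.Arc))
  | extTail t =>
      letI := t.arcFintype
      inferInstanceAs (Fintype (t.Arc ⊕ Unit))

instance (t : EPTree) : Fintype t.Arc := t.arcFintype

/-- The set of arc sets of directed `o`–`d` paths of an extension-parallel graph. -/
def paths : (t : EPTree) → Finset (Finset t.Arc)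
  | edge => {(Finset.univ : Finset Unit)}
  | parallel t₁ t₂ =>
      (t₁.paths.image fun P => P.image Sum.inl) ∪ (t₂.paths.image fun P => P.image Sum.inr)
  | extHead t => t.paths.image fun P => insert (Sum.inl ()) (P.image Sum.inr)
  | extTail t => t.paths.image fun P => insert (Sum.inr ()) (P.image Sum.inl)

end EPTree

/-- Syntax trees of series-parallel graphs: a single arc; series composition;
parallel composition. -/
inductive SPTree : Type
  | edge : SPTree
  | series : SPTree → SPTree → SPTree
  | parallel : SPTree → SPTree → SPTree

namespace SPTree

/-- The arcs of a series-parallel graph. -/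
def Arc : SPTree → Type
  | edge => Unit
  | series t₁ t₂ => t₁.Arc ⊕ t₂.Arc
  | parallel t₁ t₂ => t₁.Arc ⊕ t₂.Arc

def arcDecEq : (t : SPTree) → DecidableEq t.Arc
  | edge => inferInstanceAs (DecidableEq Unit)
  | series t₁ t₂ =>
      letI := t₁.arcDecEq; letI := t₂.arcDecEq
      inferInstanceAs (DecidableEq (t₁.Arc ⊕ t₂.Arc))
  | parallel t₁ t₂ =>
      letI := t₁.arcDecEq; letI := t₂.arcDecEq
      inferInstanceAs (DecidableEq (t₁.Arc ⊕ t₂.Arc))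

instance (t : SPTree) : DecidableEq t.Arc := t.arcDecEq

def arcFintype : (t : SPTree) → Fintype t.Arc
  | edge => inferInstanceAs (Fintype Unit)
  | series t₁ t₂ =>
      letI := t₁.arcFintype; letI := t₂.arcFintype
      inferInstanceAs (Fintype (t₁.Arc ⊕ t₂.Arc))
  | parallel t₁ t₂ =>
      letI := t₁.arcFintype; letI := t₂.arcFintype
      inferInstanceAs (Fintype (t₁.Arc ⊕ t₂.Arc))

instance (t : SPTree) : Fintype t.Arc := t.arcFintype

/-- The set of arc sets of directed `o`–`d` paths of a series-parallel graph. -/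
def paths : (t : SPTree) → Finset (Finset t.Arc)
  | edge => {(Finset.univ : Finset Unit)}
  | series t₁ t₂ =>
      (t₁.paths ×ˢ t₂.paths).image fun p => p.1.image Sum.inl ∪ p.2.image Sum.inr
  | parallel t₁ t₂ =>
      (t₁.paths.image fun P => P.image Sum.inl) ∪ (t₂.paths.image fun P => P.image Sum.inr)

/-- A series-parallel graph is extension-parallel if in every series composition one of
the two parts is a single arc. -/
def IsEP : SPTree → Prop
  | edge => True
  | series t₁ t₂ => (t₁ = edge ∧ t₂.IsEP) ∨ (t₂ = edge ∧ t₁.IsEP)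
  | parallel t₁ t₂ => t₁.IsEP ∧ t₂.IsEP

end SPTree

/-- The symmetric network congestion game with `n` players on an extension-parallel
graph `t` with delay functions `d`. -/
def SNCGep (t : EPTree) (d : t.Arc → ℕ → ℝ) (n : ℕ) : CGame t.Arc n where
  actions := fun _ => t.paths
  delay := d

/-- The symmetric network congestion game with `n` players on a series-parallel
graph `t` with delay functions `d`. -/
def SNCGsp (t : SPTree) (d : t.Arc → ℕ → ℝ) (n : ℕ) : CGame t.Arc n where
  actions := fun _ => t.paths
  delay := d


set_option linter.unusedSectionVars false
set_option linter.unnecessarySeqFocus false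

namespace SPaux

variable {R : Type} [DecidableEq R] [Fintype R]

/-- Add one path to a load vector. -/
def bump (x : R → ℕ) (P : Finset R) : R → ℕ := fun r => x r + if r ∈ P then 1 else 0

/-- Cost of path `P` under load `x`. -/
def Dc (d : R → ℕ → ℝ) (P : Finset R) (x : R → ℕ) : ℝ := ∑ r ∈ P, d r (x r)

/-- Arrival cost: cost of a new player choosing `P` given existing load `x`. -/
def arrC (d : R → ℕ → ℝ) (P : Finset R) (x : R → ℕ) : ℝ := Dc d P (bump x P)

/-- Load after a list of paths on top of `x`. -/
def loadL (x : R → ℕ) : List (Finset R) → R → ℕ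
  | [] => x
  | P :: L => loadL (bump x P) L

/-- Greedy (one-round best response) sequence starting from load `x`. -/
def IsGr (Pths : Finset (Finset R)) (d : R → ℕ → ℝ) : (R → ℕ) → List (Finset R) → Prop
  | _, [] => True
  | x, Q :: L => Q ∈ Pths ∧ (∀ P ∈ Pths, arrC d Q x ≤ arrC d P x) ∧ IsGr Pths d (bump x Q) L

/-- Minimum arrival cost. -/
noncomputable def mu (Pths : Finset (Finset R)) (h : Pths.Nonempty) (d : R → ℕ → ℝ)
    (x : R → ℕ) : ℝ := (Pths.image fun P => arrC d P x).min' (h.image _)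

theorem mu_le {Pths : Finset (Finset R)} (h : Pths.Nonempty) {d} {x : R → ℕ} {P : Finset R}
    (hP : P ∈ Pths) : mu Pths h d x ≤ arrC d P x :=
  Finset.min'_le _ _ (Finset.mem_image_of_mem _ hP)

theorem exists_mu {Pths : Finset (Finset R)} (h : Pths.Nonempty) (d) (x : R → ℕ) :
    ∃ P ∈ Pths, mu Pths h d x = arrC d P x := by
  have := (Pths.image fun P => arrC d P x).min'_mem (h.image _)
  rw [Finset.mem_image] at this
  obtain ⟨P, hP, hmin⟩ := this
  exact ⟨P, hP, hmin.symm⟩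

theorem Dc_mono {d : R → ℕ → ℝ} (hmono : ∀ r, Monotone (d r)) {P : Finset R}
    {x y : R → ℕ} (hxy : ∀ r, x r ≤ y r) : Dc d P x ≤ Dc d P y :=
  Finset.sum_le_sum fun r _ => hmono r (hxy r)

theorem bump_mono {x y : R → ℕ} (hxy : ∀ r, x r ≤ y r) (P : Finset R) (r : R) :
    bump x P r ≤ bump y P r := by
  simp only [bump]; exact Nat.add_le_add_right (hxy r) _

theorem arrC_mono {d : R → ℕ → ℝ} (hmono : ∀ r, Monotone (d r)) {P : Finset R}
    {x y : R → ℕ} (hxy : ∀ r, x r ≤ y r) : arrC d P x ≤ arrC d P y :=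
  Dc_mono hmono (bump_mono hxy P)

theorem mu_mono {Pths : Finset (Finset R)} (h : Pths.Nonempty) {d : R → ℕ → ℝ}
    (hmono : ∀ r, Monotone (d r)) {x y : R → ℕ} (hxy : ∀ r, x r ≤ y r) :
    mu Pths h d x ≤ mu Pths h d y := by
  obtain ⟨P, hP, hPy⟩ := exists_mu h d y
  exact hPy ▸ le_trans (mu_le h hP) (arrC_mono hmono hxy)

theorem loadL_append (x : R → ℕ) (L M : List (Finset R)) :
    loadL x (L ++ M) = loadL (loadL x L) M := by
  induction L generalizing x with
  | nil => rfl
  | cons Q L ih => simp only [List.cons_append, loadL]; exact ih _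

theorem loadL_concat (x : R → ℕ) (L : List (Finset R)) (Q : Finset R) :
    loadL x (L ++ [Q]) = bump (loadL x L) Q := by
  rw [loadL_append]; rfl

theorem le_loadL (x : R → ℕ) (L : List (Finset R)) (r : R) : x r ≤ loadL x L r := by
  induction L generalizing x with
  | nil => exact le_refl _
  | cons Q L ih =>
      exact le_trans (by simp [bump]) (ih (bump x Q))

theorem loadL_mono_base {x y : R → ℕ} (hxy : ∀ r, x r ≤ y r) (L : List (Finset R)) (r : R) :
    loadL x L r ≤ loadL y L r := by
  induction L generalizing x y with
  | nil => exact hxy r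
  | cons Q L ih => exact ih (bump_mono hxy Q)

theorem IsGr.mem {Pths : Finset (Finset R)} {d} {x : R → ℕ} {L : List (Finset R)}
    (h : IsGr Pths d x L) {Q : Finset R} (hQ : Q ∈ L) : Q ∈ Pths := by
  induction L generalizing x with
  | nil => simp at hQ
  | cons P L ih =>
      rcases List.mem_cons.1 hQ with rfl | hQ
      · exact h.1
      · exact ih h.2.2 hQ

/-- Greedy optimality of the path at a given position. -/
theorem IsGr.split {Pths : Finset (Finset R)} {d} {x : R → ℕ} {M S : List (Finset R)}
    {p : Finset R} (h : IsGr Pths d x (M ++ p :: S)) :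
    p ∈ Pths ∧ (∀ P ∈ Pths, arrC d p (loadL x M) ≤ arrC d P (loadL x M)) ∧
      IsGr Pths d (bump (loadL x M) p) S := by
  induction M generalizing x with
  | nil => exact ⟨h.1, h.2.1, h.2.2⟩
  | cons Q M ih => exact ih h.2.2

theorem IsGr.dropLast {Pths : Finset (Finset R)} {d} {x : R → ℕ} {L : List (Finset R)}
    (h : IsGr Pths d x L) : IsGr Pths d x L.dropLast := by
  induction L generalizing x with
  | nil => trivial
  | cons Q L ih =>
      cases L with
      | nil => trivial
      | cons Q' L' =>
          exact ⟨h.1, h.2.1, ih h.2.2⟩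

/-- Decompose a list around its last element satisfying a (decidable) predicate. -/
theorem exists_last_pred {α : Type*} (p : α → Prop) [DecidablePred p] :
    ∀ (L : List α), (∃ a ∈ L, p a) →
      ∃ M q S, L = M ++ q :: S ∧ p q ∧ ∀ b ∈ S, ¬ p b := by
  intro L
  induction L using List.reverseRecOn with
  | nil => rintro ⟨a, ha, -⟩; simp at ha
  | append_singleton M a ih =>
      intro hex
      by_cases hpa : p a
      · exact ⟨M, a, [], rfl, hpa, by simp⟩
      · obtain ⟨b, hb, hpb⟩ := hex
        rw [List.mem_append] at hb
        rcases hb with hb | hb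
        · obtain ⟨M', q, S, hMeq, hq, hS⟩ := ih ⟨b, hb, hpb⟩
          refine ⟨M', q, S ++ [a], by rw [hMeq]; simp, hq, ?_⟩
          intro c hc
          rcases List.mem_append.1 hc with hc | hc
          · exact hS c hc
          · rwa [List.mem_singleton.1 hc]
        · rw [List.mem_singleton.1 hb] at hpb; exact absurd hpb hpa

theorem loadL_count (x : R → ℕ) (L : List (Finset R)) (r : R) :
    loadL x L r = x r + (L.filter fun P => r ∈ P).length := by
  induction L generalizing x with
  | nil => simp [loadL]
  | cons Q L ih =>
      rw [loadL, ih, List.filter_cons]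
      by_cases h : r ∈ Q <;> simp [bump, h] <;> omega

end SPaux

namespace SPaux

section Proj

variable {α β : Type} [DecidableEq α] [Fintype α] [DecidableEq β] [Fintype β]

/-- Left projection of a set of arcs of a sum type. -/
noncomputable def lset (Q : Finset (α ⊕ β)) : Finset α := Q.preimage Sum.inl Sum.inl_injective.injOn

noncomputable def rset (Q : Finset (α ⊕ β)) : Finset β := Q.preimage Sum.inr Sum.inr_injective.injOn

@[simp] theorem mem_lset {Q : Finset (α ⊕ β)} {a : α} : a ∈ lset Q ↔ Sum.inl a ∈ Q :=
  Finset.mem_preimage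

@[simp] theorem mem_rset {Q : Finset (α ⊕ β)} {b : β} : b ∈ rset Q ↔ Sum.inr b ∈ Q :=
  Finset.mem_preimage

theorem lset_inl (P : Finset α) : lset ((P.image Sum.inl : Finset (α ⊕ β))) = P := by
  ext a; simp

theorem lset_inr (P : Finset β) : lset ((P.image Sum.inr : Finset (α ⊕ β))) = ∅ := by
  ext a; simp

theorem rset_inr (P : Finset β) : rset ((P.image Sum.inr : Finset (α ⊕ β))) = P := by
  ext a; simp

theorem rset_inl (P : Finset α) : rset ((P.image Sum.inl : Finset (α ⊕ β))) = ∅ := by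
  ext a; simp

theorem lset_union (Q Q' : Finset (α ⊕ β)) : lset (Q ∪ Q') = lset Q ∪ lset Q' := by
  ext a; simp

theorem rset_union (Q Q' : Finset (α ⊕ β)) : rset (Q ∪ Q') = rset Q ∪ rset Q' := by
  ext a; simp

/-- Cost decomposition for an embedded left path. -/
theorem Dc_inl (d : (α ⊕ β) → ℕ → ℝ) (P : Finset α) (x : α ⊕ β → ℕ) :
    Dc d (P.image Sum.inl) x = Dc (fun a => d (Sum.inl a)) P (x ∘ Sum.inl) :=
  Finset.sum_image fun _ _ _ _ h => Sum.inl_injective h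

theorem Dc_inr (d : (α ⊕ β) → ℕ → ℝ) (P : Finset β) (x : α ⊕ β → ℕ) :
    Dc d (P.image Sum.inr) x = Dc (fun b => d (Sum.inr b)) P (x ∘ Sum.inr) :=
  Finset.sum_image fun _ _ _ _ h => Sum.inr_injective h

theorem Dc_union_sum (d : (α ⊕ β) → ℕ → ℝ) (P₁ : Finset α) (P₂ : Finset β) (x : α ⊕ β → ℕ) :
    Dc d (P₁.image Sum.inl ∪ P₂.image Sum.inr) x =
      Dc (fun a => d (Sum.inl a)) P₁ (x ∘ Sum.inl) +
        Dc (fun b => d (Sum.inr b)) P₂ (x ∘ Sum.inr) := by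
  rw [Dc, Finset.sum_union, ← Dc_inl, ← Dc_inr] <;> try rfl
  simp [Finset.disjoint_left]

theorem bump_inl_comp_inl (x : α ⊕ β → ℕ) (P : Finset α) :
    bump x ((P.image Sum.inl : Finset (α ⊕ β))) ∘ Sum.inl = bump (x ∘ Sum.inl) P := by
  funext a; simp [bump, Function.comp]

theorem bump_inl_comp_inr (x : α ⊕ β → ℕ) (P : Finset α) :
    bump x ((P.image Sum.inl : Finset (α ⊕ β))) ∘ Sum.inr = x ∘ Sum.inr := by
  funext b; simp [bump, Function.comp]

theorem bump_inr_comp_inr (x : α ⊕ β → ℕ) (P : Finset β) :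
    bump x ((P.image Sum.inr : Finset (α ⊕ β))) ∘ Sum.inr = bump (x ∘ Sum.inr) P := by
  funext b; simp [bump, Function.comp]

theorem bump_inr_comp_inl (x : α ⊕ β → ℕ) (P : Finset β) :
    bump x ((P.image Sum.inr : Finset (α ⊕ β))) ∘ Sum.inl = x ∘ Sum.inl := by
  funext a; simp [bump, Function.comp]

theorem bump_union_comp_inl (x : α ⊕ β → ℕ) (P₁ : Finset α) (P₂ : Finset β) :
    bump x (P₁.image Sum.inl ∪ P₂.image Sum.inr) ∘ Sum.inl = bump (x ∘ Sum.inl) P₁ := by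
  funext a; simp [bump, Function.comp]

theorem bump_union_comp_inr (x : α ⊕ β → ℕ) (P₁ : Finset α) (P₂ : Finset β) :
    bump x (P₁.image Sum.inl ∪ P₂.image Sum.inr) ∘ Sum.inr = bump (x ∘ Sum.inr) P₂ := by
  funext b; simp [bump, Function.comp]

theorem arrC_inl (d : (α ⊕ β) → ℕ → ℝ) (P : Finset α) (x : α ⊕ β → ℕ) :
    arrC d ((P.image Sum.inl : Finset (α ⊕ β))) x = arrC (fun a => d (Sum.inl a)) P (x ∘ Sum.inl) := by
  rw [arrC, Dc_inl, bump_inl_comp_inl]; rfl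

theorem arrC_inr (d : (α ⊕ β) → ℕ → ℝ) (P : Finset β) (x : α ⊕ β → ℕ) :
    arrC d ((P.image Sum.inr : Finset (α ⊕ β))) x = arrC (fun b => d (Sum.inr b)) P (x ∘ Sum.inr) := by
  rw [arrC, Dc_inr, bump_inr_comp_inr]; rfl

theorem arrC_union_sum (d : (α ⊕ β) → ℕ → ℝ) (P₁ : Finset α) (P₂ : Finset β) (x : α ⊕ β → ℕ) :
    arrC d (P₁.image Sum.inl ∪ P₂.image Sum.inr) x =
      arrC (fun a => d (Sum.inl a)) P₁ (x ∘ Sum.inl) +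
        arrC (fun b => d (Sum.inr b)) P₂ (x ∘ Sum.inr) := by
  rw [arrC, Dc_union_sum, bump_union_comp_inl, bump_union_comp_inr]; rfl

end Proj

end SPaux

namespace SPaux

open SPTree

theorem paths_nonempty : ∀ t : SPTree, t.paths.Nonempty
  | SPTree.edge => ⟨Finset.univ, Finset.mem_singleton_self _⟩
  | SPTree.series t₁ t₂ => by
      obtain ⟨P₁, h₁⟩ := paths_nonempty t₁
      obtain ⟨P₂, h₂⟩ := paths_nonempty t₂
      exact ⟨_, Finset.mem_image_of_mem _ (Finset.mem_product (p := (P₁, P₂)).2 ⟨h₁, h₂⟩)⟩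
  | SPTree.parallel t₁ t₂ => by
      obtain ⟨P₁, h₁⟩ := paths_nonempty t₁
      exact ⟨_, Finset.mem_union_left _ (Finset.mem_image_of_mem _ h₁)⟩

theorem paths_mem_nonempty : ∀ (t : SPTree) (P : Finset t.Arc), P ∈ t.paths → P.Nonempty
  | SPTree.edge, P, hP => by
      erw [SPTree.paths, Finset.mem_singleton] at hP
      subst hP; exact ⟨(), Finset.mem_univ _⟩
  | SPTree.series t₁ t₂, P, hP => by
      rw [SPTree.paths, Finset.mem_image] at hP
      obtain ⟨p, hp, rfl⟩ := hP
      rw [Finset.mem_product] at hp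
      obtain ⟨a, ha⟩ := paths_mem_nonempty t₁ p.1 hp.1
      exact ⟨Sum.inl a, Finset.mem_union_left _ (Finset.mem_image_of_mem _ ha)⟩
  | SPTree.parallel t₁ t₂, P, hP => by
      rw [SPTree.paths, Finset.mem_union, Finset.mem_image, Finset.mem_image] at hP
      rcases hP with ⟨Q, hQ, rfl⟩ | ⟨Q, hQ, rfl⟩
      · obtain ⟨a, ha⟩ := paths_mem_nonempty t₁ Q hQ
        exact ⟨Sum.inl a, Finset.mem_image_of_mem _ ha⟩
      · obtain ⟨a, ha⟩ := paths_mem_nonempty t₂ Q hQ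
        exact ⟨Sum.inr a, Finset.mem_image_of_mem _ ha⟩

theorem mem_paths_series {t₁ t₂ : SPTree} {Q : Finset (t₁.Arc ⊕ t₂.Arc)} :
    Q ∈ (SPTree.series t₁ t₂).paths ↔
      ∃ P₁ ∈ t₁.paths, ∃ P₂ ∈ t₂.paths, Q = P₁.image Sum.inl ∪ P₂.image Sum.inr := by
  erw [SPTree.paths, Finset.mem_image]
  constructor
  · rintro ⟨p, hp, rfl⟩
    rw [Finset.mem_product] at hp
    exact ⟨p.1, hp.1, p.2, hp.2, rfl⟩
  · rintro ⟨P₁, h₁, P₂, h₂, rfl⟩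
    exact ⟨(P₁, P₂), Finset.mem_product.2 ⟨by exact h₁, by exact h₂⟩, rfl⟩

theorem mem_paths_parallel {t₁ t₂ : SPTree} {Q : Finset (t₁.Arc ⊕ t₂.Arc)} :
    Q ∈ (SPTree.parallel t₁ t₂).paths ↔
      (∃ P₁ ∈ t₁.paths, Q = P₁.image Sum.inl) ∨ ∃ P₂ ∈ t₂.paths, Q = P₂.image Sum.inr := by
  erw [SPTree.paths, Finset.mem_union, Finset.mem_image, Finset.mem_image]
  constructor
  · rintro (⟨P, hP, rfl⟩ | ⟨P, hP, rfl⟩)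
    · exact Or.inl ⟨P, hP, rfl⟩
    · exact Or.inr ⟨P, hP, rfl⟩
  · rintro (⟨P, hP, rfl⟩ | ⟨P, hP, rfl⟩)
    · exact Or.inl ⟨P, hP, rfl⟩
    · exact Or.inr ⟨P, hP, rfl⟩

/-- Shape of a series path in terms of its projections. -/
theorem series_shape {t₁ t₂ : SPTree} {Q : Finset (t₁.Arc ⊕ t₂.Arc)}
    (hQ : Q ∈ (SPTree.series t₁ t₂).paths) :
    lset Q ∈ t₁.paths ∧ rset Q ∈ t₂.paths ∧
      Q = (lset Q).image Sum.inl ∪ (rset Q).image Sum.inr := by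
  obtain ⟨P₁, h₁, P₂, h₂, rfl⟩ := mem_paths_series.1 hQ
  rw [lset_union, rset_union, lset_inl, lset_inr, rset_inl, rset_inr,
    Finset.union_empty, Finset.empty_union]
  exact ⟨h₁, h₂, rfl⟩

/-- Classification of a parallel path. -/
theorem parallel_shape {t₁ t₂ : SPTree} {Q : Finset (t₁.Arc ⊕ t₂.Arc)}
    (hQ : Q ∈ (SPTree.parallel t₁ t₂).paths) :
    (rset Q = ∅ ∧ lset Q ∈ t₁.paths ∧ Q = (lset Q).image Sum.inl) ∨
      (lset Q = ∅ ∧ rset Q ∈ t₂.paths ∧ Q = (rset Q).image Sum.inr) := by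
  rcases mem_paths_parallel.1 hQ with ⟨P, hP, rfl⟩ | ⟨P, hP, rfl⟩
  · exact Or.inl ⟨rset_inl P, by rw [lset_inl]; exact hP, by rw [lset_inl]⟩
  · exact Or.inr ⟨lset_inr P, by rw [rset_inr]; exact hP, by rw [rset_inr]⟩

theorem parallel_left_not_lset_empty {t₁ t₂ : SPTree} {Q : Finset (t₁.Arc ⊕ t₂.Arc)}
    (hQ : Q ∈ (SPTree.parallel t₁ t₂).paths) (h : rset Q = ∅) : ¬ lset Q = ∅ := by
  rcases parallel_shape hQ with ⟨-, hp, -⟩ | ⟨he, hp, -⟩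
  · exact (paths_mem_nonempty _ _ hp).ne_empty
  · exact fun _ => (paths_mem_nonempty _ _ hp).ne_empty h

end SPaux

namespace SPaux

variable {t₁ t₂ : SPTree}

/-! ### Decomposition helpers -/

theorem bump_comp_inl_series (x : t₁.Arc ⊕ t₂.Arc → ℕ) {Q : Finset (t₁.Arc ⊕ t₂.Arc)}
    (hQ : Q ∈ (SPTree.series t₁ t₂).paths) :
    bump x Q ∘ Sum.inl = bump (x ∘ Sum.inl) (lset Q) := by
  obtain ⟨-, -, hsh⟩ := series_shape hQ
  conv_lhs => rw [hsh]
  rw [bump_union_comp_inl]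

theorem bump_comp_inr_series (x : t₁.Arc ⊕ t₂.Arc → ℕ) {Q : Finset (t₁.Arc ⊕ t₂.Arc)}
    (hQ : Q ∈ (SPTree.series t₁ t₂).paths) :
    bump x Q ∘ Sum.inr = bump (x ∘ Sum.inr) (rset Q) := by
  obtain ⟨-, -, hsh⟩ := series_shape hQ
  conv_lhs => rw [hsh]
  rw [bump_union_comp_inr]

theorem arrC_series_split (d : t₁.Arc ⊕ t₂.Arc → ℕ → ℝ) (x : t₁.Arc ⊕ t₂.Arc → ℕ)
    {Q : Finset (t₁.Arc ⊕ t₂.Arc)} (hQ : Q ∈ (SPTree.series t₁ t₂).paths) :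
    arrC d Q x = arrC (fun a => d (Sum.inl a)) (lset Q) (x ∘ Sum.inl) +
      arrC (fun b => d (Sum.inr b)) (rset Q) (x ∘ Sum.inr) := by
  obtain ⟨-, -, hsh⟩ := series_shape hQ
  conv_lhs => rw [hsh]
  rw [arrC_union_sum]

theorem Dc_series_split (d : t₁.Arc ⊕ t₂.Arc → ℕ → ℝ) (x : t₁.Arc ⊕ t₂.Arc → ℕ)
    {Q : Finset (t₁.Arc ⊕ t₂.Arc)} (hQ : Q ∈ (SPTree.series t₁ t₂).paths) :
    Dc d Q x = Dc (fun a => d (Sum.inl a)) (lset Q) (x ∘ Sum.inl) +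
      Dc (fun b => d (Sum.inr b)) (rset Q) (x ∘ Sum.inr) := by
  obtain ⟨-, -, hsh⟩ := series_shape hQ
  conv_lhs => rw [hsh]
  rw [Dc_union_sum]

/-- A parallel path with empty right projection. -/
theorem bump_comp_inl_parL (x : t₁.Arc ⊕ t₂.Arc → ℕ) {Q : Finset (t₁.Arc ⊕ t₂.Arc)}
    (hQ : Q ∈ (SPTree.parallel t₁ t₂).paths) (hre : rset Q = ∅) :
    bump x Q ∘ Sum.inl = bump (x ∘ Sum.inl) (lset Q) := by
  rcases parallel_shape hQ with ⟨-, -, hsh⟩ | ⟨-, hp, hsh⟩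
  · conv_lhs => rw [hsh]
    rw [bump_inl_comp_inl]
  · exfalso
    rw [hsh, rset_inr] at hre
    exact (paths_mem_nonempty _ _ hp).ne_empty hre

theorem parL_shape {Q : Finset (t₁.Arc ⊕ t₂.Arc)}
    (hQ : Q ∈ (SPTree.parallel t₁ t₂).paths) (hre : rset Q = ∅) :
    lset Q ∈ t₁.paths ∧ Q = (lset Q).image Sum.inl := by
  rcases parallel_shape hQ with ⟨-, hp, hsh⟩ | ⟨-, hp, hsh⟩
  · exact ⟨hp, hsh⟩
  · rw [hsh, rset_inr] at hre
    exact absurd hre (paths_mem_nonempty _ _ hp).ne_empty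

theorem parR_shape {Q : Finset (t₁.Arc ⊕ t₂.Arc)}
    (hQ : Q ∈ (SPTree.parallel t₁ t₂).paths) (hle : lset Q = ∅) :
    rset Q ∈ t₂.paths ∧ Q = (rset Q).image Sum.inr := by
  rcases parallel_shape hQ with ⟨-, hp, hsh⟩ | ⟨-, hp, hsh⟩
  · rw [hsh, lset_inl] at hle
    exact absurd hle (paths_mem_nonempty _ _ hp).ne_empty
  · exact ⟨hp, hsh⟩

theorem par_not_both {Q : Finset (t₁.Arc ⊕ t₂.Arc)}
    (hQ : Q ∈ (SPTree.parallel t₁ t₂).paths) (hre : rset Q = ∅) : ¬ lset Q = ∅ :=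
  fun hle => absurd ((parL_shape hQ hre).2 ▸ rfl : Q = (lset Q).image Sum.inl)
    (by rw [hle]; rw [Finset.image_empty]; exact (paths_mem_nonempty _ _ hQ).ne_empty)

end SPaux

namespace SPaux

variable {t₁ t₂ : SPTree}

theorem par_side {Q : Finset (t₁.Arc ⊕ t₂.Arc)}
    (hQ : Q ∈ (SPTree.parallel t₁ t₂).paths) : rset Q = ∅ ∨ lset Q = ∅ := by
  rcases parallel_shape hQ with ⟨h, -, -⟩ | ⟨h, -, -⟩
  · exact Or.inl h
  · exact Or.inr h

theorem bump_comp_inr_parL (x : t₁.Arc ⊕ t₂.Arc → ℕ) {Q : Finset (t₁.Arc ⊕ t₂.Arc)}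
    (hQ : Q ∈ (SPTree.parallel t₁ t₂).paths) (hre : rset Q = ∅) :
    bump x Q ∘ Sum.inr = x ∘ Sum.inr := by
  obtain ⟨-, hsh⟩ := parL_shape hQ hre
  conv_lhs => rw [hsh]
  rw [bump_inl_comp_inr]

theorem bump_comp_inr_parR (x : t₁.Arc ⊕ t₂.Arc → ℕ) {Q : Finset (t₁.Arc ⊕ t₂.Arc)}
    (hQ : Q ∈ (SPTree.parallel t₁ t₂).paths) (hle : lset Q = ∅) :
    bump x Q ∘ Sum.inr = bump (x ∘ Sum.inr) (rset Q) := by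
  obtain ⟨-, hsh⟩ := parR_shape hQ hle
  conv_lhs => rw [hsh]
  rw [bump_inr_comp_inr]

theorem bump_comp_inl_parR (x : t₁.Arc ⊕ t₂.Arc → ℕ) {Q : Finset (t₁.Arc ⊕ t₂.Arc)}
    (hQ : Q ∈ (SPTree.parallel t₁ t₂).paths) (hle : lset Q = ∅) :
    bump x Q ∘ Sum.inl = x ∘ Sum.inl := by
  obtain ⟨-, hsh⟩ := parR_shape hQ hle
  conv_lhs => rw [hsh]
  rw [bump_inr_comp_inl]

theorem arrC_parL (d : t₁.Arc ⊕ t₂.Arc → ℕ → ℝ) (x : t₁.Arc ⊕ t₂.Arc → ℕ)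
    {Q : Finset (t₁.Arc ⊕ t₂.Arc)} (hQ : Q ∈ (SPTree.parallel t₁ t₂).paths)
    (hre : rset Q = ∅) :
    arrC d Q x = arrC (fun a => d (Sum.inl a)) (lset Q) (x ∘ Sum.inl) := by
  obtain ⟨-, hsh⟩ := parL_shape hQ hre
  conv_lhs => rw [hsh]
  rw [arrC_inl]

theorem arrC_parR (d : t₁.Arc ⊕ t₂.Arc → ℕ → ℝ) (x : t₁.Arc ⊕ t₂.Arc → ℕ)
    {Q : Finset (t₁.Arc ⊕ t₂.Arc)} (hQ : Q ∈ (SPTree.parallel t₁ t₂).paths)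
    (hle : lset Q = ∅) :
    arrC d Q x = arrC (fun b => d (Sum.inr b)) (rset Q) (x ∘ Sum.inr) := by
  obtain ⟨-, hsh⟩ := parR_shape hQ hle
  conv_lhs => rw [hsh]
  rw [arrC_inr]

theorem Dc_parL (d : t₁.Arc ⊕ t₂.Arc → ℕ → ℝ) (x : t₁.Arc ⊕ t₂.Arc → ℕ)
    {Q : Finset (t₁.Arc ⊕ t₂.Arc)} (hQ : Q ∈ (SPTree.parallel t₁ t₂).paths)
    (hre : rset Q = ∅) :
    Dc d Q x = Dc (fun a => d (Sum.inl a)) (lset Q) (x ∘ Sum.inl) := by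
  obtain ⟨-, hsh⟩ := parL_shape hQ hre
  conv_lhs => rw [hsh]
  rw [Dc_inl]

theorem Dc_parR (d : t₁.Arc ⊕ t₂.Arc → ℕ → ℝ) (x : t₁.Arc ⊕ t₂.Arc → ℕ)
    {Q : Finset (t₁.Arc ⊕ t₂.Arc)} (hQ : Q ∈ (SPTree.parallel t₁ t₂).paths)
    (hle : lset Q = ∅) :
    Dc d Q x = Dc (fun b => d (Sum.inr b)) (rset Q) (x ∘ Sum.inr) := by
  obtain ⟨-, hsh⟩ := parR_shape hQ hle
  conv_lhs => rw [hsh]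
  rw [Dc_inr]

/-! ### Series list projections -/

theorem loadL_series_inl (x : t₁.Arc ⊕ t₂.Arc → ℕ) (L : List (Finset (t₁.Arc ⊕ t₂.Arc)))
    (hL : ∀ Q ∈ L, Q ∈ (SPTree.series t₁ t₂).paths) :
    loadL x L ∘ Sum.inl = loadL (x ∘ Sum.inl) (L.map lset) := by
  induction L generalizing x with
  | nil => rfl
  | cons Q L ih =>
      rw [List.map_cons, loadL, loadL, ih _ fun Q' hQ' => hL Q' (by simp [hQ']),
        bump_comp_inl_series x (hL Q (by simp))]

theorem loadL_series_inr (x : t₁.Arc ⊕ t₂.Arc → ℕ) (L : List (Finset (t₁.Arc ⊕ t₂.Arc)))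
    (hL : ∀ Q ∈ L, Q ∈ (SPTree.series t₁ t₂).paths) :
    loadL x L ∘ Sum.inr = loadL (x ∘ Sum.inr) (L.map rset) := by
  induction L generalizing x with
  | nil => rfl
  | cons Q L ih =>
      rw [List.map_cons, loadL, loadL, ih _ fun Q' hQ' => hL Q' (by simp [hQ']),
        bump_comp_inr_series x (hL Q (by simp))]

theorem IsGr_series_left {d : t₁.Arc ⊕ t₂.Arc → ℕ → ℝ} {x : t₁.Arc ⊕ t₂.Arc → ℕ}
    {L : List (Finset (t₁.Arc ⊕ t₂.Arc))} (h : IsGr (SPTree.series t₁ t₂).paths d x L) :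
    IsGr t₁.paths (fun a => d (Sum.inl a)) (x ∘ Sum.inl) (L.map lset) := by
  induction L generalizing x with
  | nil => trivial
  | cons Q L ih =>
      obtain ⟨hQ, hmin, hrest⟩ := h
      obtain ⟨h1, h2, -⟩ := series_shape hQ
      refine ⟨h1, ?_, ?_⟩
      · intro P hP
        have hP' : (P.image Sum.inl ∪ (rset Q).image Sum.inr) ∈ (SPTree.series t₁ t₂).paths :=
          mem_paths_series.2 ⟨P, hP, rset Q, h2, rfl⟩
        have h' := hmin _ hP'
        erw [arrC_union_sum, arrC_series_split d x hQ] at h'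
        linarith
      · have := ih hrest
        erw [bump_comp_inl_series x hQ] at this; exact this

theorem IsGr_series_right {d : t₁.Arc ⊕ t₂.Arc → ℕ → ℝ} {x : t₁.Arc ⊕ t₂.Arc → ℕ}
    {L : List (Finset (t₁.Arc ⊕ t₂.Arc))} (h : IsGr (SPTree.series t₁ t₂).paths d x L) :
    IsGr t₂.paths (fun b => d (Sum.inr b)) (x ∘ Sum.inr) (L.map rset) := by
  induction L generalizing x with
  | nil => trivial
  | cons Q L ih =>
      obtain ⟨hQ, hmin, hrest⟩ := h
      obtain ⟨h1, h2, -⟩ := series_shape hQ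
      refine ⟨h2, ?_, ?_⟩
      · intro P hP
        have hP' : ((lset Q).image Sum.inl ∪ P.image Sum.inr) ∈ (SPTree.series t₁ t₂).paths :=
          mem_paths_series.2 ⟨lset Q, h1, P, hP, rfl⟩
        have h' := hmin _ hP'
        erw [arrC_union_sum, arrC_series_split d x hQ] at h'
        linarith
      · have := ih hrest
        erw [bump_comp_inr_series x hQ] at this; exact this

theorem mu_series (d : t₁.Arc ⊕ t₂.Arc → ℕ → ℝ) (x : t₁.Arc ⊕ t₂.Arc → ℕ) :
    mu (SPTree.series t₁ t₂).paths (paths_nonempty _) d x =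
      mu t₁.paths (paths_nonempty _) (fun a => d (Sum.inl a)) (x ∘ Sum.inl) +
        mu t₂.paths (paths_nonempty _) (fun b => d (Sum.inr b)) (x ∘ Sum.inr) := by
  apply le_antisymm
  · obtain ⟨P₁, h₁, e₁⟩ := exists_mu (paths_nonempty t₁) (fun a => d (Sum.inl a)) (x ∘ Sum.inl)
    obtain ⟨P₂, h₂, e₂⟩ := exists_mu (paths_nonempty t₂) (fun b => d (Sum.inr b)) (x ∘ Sum.inr)
    rw [e₁, e₂, ← arrC_union_sum]
    exact mu_le _ (mem_paths_series.2 ⟨P₁, h₁, P₂, h₂, rfl⟩)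
  · obtain ⟨Q, hQ, e⟩ := exists_mu (paths_nonempty (SPTree.series t₁ t₂)) d x
    obtain ⟨h1, h2, -⟩ := series_shape hQ
    erw [e, arrC_series_split d x hQ]
    exact add_le_add (mu_le _ h1) (mu_le _ h2)

/-! ### Parallel list projections -/

noncomputable def leftL (L : List (Finset (t₁.Arc ⊕ t₂.Arc))) : List (Finset t₁.Arc) :=
  (L.filter fun Q => rset Q = ∅).map lset

noncomputable def rightL (L : List (Finset (t₁.Arc ⊕ t₂.Arc))) : List (Finset t₂.Arc) :=
  (L.filter fun Q => lset Q = ∅).map rset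

@[simp] theorem leftL_nil : leftL (t₁ := t₁) (t₂ := t₂) [] = [] := rfl
@[simp] theorem rightL_nil : rightL (t₁ := t₁) (t₂ := t₂) [] = [] := rfl

theorem leftL_cons_pos {Q : Finset (t₁.Arc ⊕ t₂.Arc)} (L : List (Finset (t₁.Arc ⊕ t₂.Arc)))
    (h : rset Q = ∅) : leftL (Q :: L) = lset Q :: leftL L := by
  simp only [leftL, List.filter_cons, decide_eq_true_eq, if_pos h, List.map_cons]

theorem leftL_cons_neg {Q : Finset (t₁.Arc ⊕ t₂.Arc)} (L : List (Finset (t₁.Arc ⊕ t₂.Arc)))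
    (h : ¬ rset Q = ∅) : leftL (Q :: L) = leftL L := by
  simp only [leftL, List.filter_cons, decide_eq_true_eq, if_neg h]

theorem rightL_cons_pos {Q : Finset (t₁.Arc ⊕ t₂.Arc)} (L : List (Finset (t₁.Arc ⊕ t₂.Arc)))
    (h : lset Q = ∅) : rightL (Q :: L) = rset Q :: rightL L := by
  simp only [rightL, List.filter_cons, decide_eq_true_eq, if_pos h, List.map_cons]

theorem rightL_cons_neg {Q : Finset (t₁.Arc ⊕ t₂.Arc)} (L : List (Finset (t₁.Arc ⊕ t₂.Arc)))
    (h : ¬ lset Q = ∅) : rightL (Q :: L) = rightL L := by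
  simp only [rightL, List.filter_cons, decide_eq_true_eq, if_neg h]

theorem leftL_append (L M : List (Finset (t₁.Arc ⊕ t₂.Arc))) :
    leftL (t₂ := t₂) (L ++ M) = leftL L ++ leftL M := by
  simp [leftL]

theorem rightL_append (L M : List (Finset (t₁.Arc ⊕ t₂.Arc))) :
    rightL (t₁ := t₁) (L ++ M) = rightL L ++ rightL M := by
  simp [rightL]

theorem loadL_par_inl (x : t₁.Arc ⊕ t₂.Arc → ℕ) (L : List (Finset (t₁.Arc ⊕ t₂.Arc)))
    (hL : ∀ Q ∈ L, Q ∈ (SPTree.parallel t₁ t₂).paths) :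
    loadL x L ∘ Sum.inl = loadL (x ∘ Sum.inl) (leftL L) := by
  induction L generalizing x with
  | nil => rfl
  | cons Q L ih =>
      have hmem := hL Q (by simp)
      have ih' := ih (bump x Q) fun Q' hQ' => hL Q' (by simp [hQ'])
      by_cases hre : rset Q = ∅
      · rw [loadL, ih', leftL_cons_pos L hre, loadL, bump_comp_inl_parL x hmem hre]
      · have hle : lset Q = ∅ := (par_side hmem).resolve_left hre
        rw [loadL, ih', leftL_cons_neg L hre, bump_comp_inl_parR x hmem hle]

theorem loadL_par_inr (x : t₁.Arc ⊕ t₂.Arc → ℕ) (L : List (Finset (t₁.Arc ⊕ t₂.Arc)))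
    (hL : ∀ Q ∈ L, Q ∈ (SPTree.parallel t₁ t₂).paths) :
    loadL x L ∘ Sum.inr = loadL (x ∘ Sum.inr) (rightL L) := by
  induction L generalizing x with
  | nil => rfl
  | cons Q L ih =>
      have hmem := hL Q (by simp)
      have ih' := ih (bump x Q) fun Q' hQ' => hL Q' (by simp [hQ'])
      by_cases hle : lset Q = ∅
      · rw [loadL, ih', rightL_cons_pos L hle, loadL, bump_comp_inr_parR x hmem hle]
      · have hre : rset Q = ∅ := by
          rcases par_side hmem with h | h
          · exact h
          · exact (hle h).elim
        rw [loadL, ih', rightL_cons_neg L hle, bump_comp_inr_parL x hmem hre]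

theorem IsGr_par_left {d : t₁.Arc ⊕ t₂.Arc → ℕ → ℝ} {x : t₁.Arc ⊕ t₂.Arc → ℕ}
    {L : List (Finset (t₁.Arc ⊕ t₂.Arc))} (h : IsGr (SPTree.parallel t₁ t₂).paths d x L) :
    IsGr t₁.paths (fun a => d (Sum.inl a)) (x ∘ Sum.inl) (leftL L) := by
  induction L generalizing x with
  | nil => trivial
  | cons Q L ih =>
      obtain ⟨hQ, hmin, hrest⟩ := h
      by_cases hre : rset Q = ∅
      · obtain ⟨hp, -⟩ := parL_shape hQ hre
        rw [leftL_cons_pos L hre]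
        refine ⟨hp, ?_, ?_⟩
        · intro P hP
          have h' := hmin _ (mem_paths_parallel.2 (Or.inl ⟨P, hP, rfl⟩))
          erw [arrC_inl, arrC_parL d x hQ hre] at h'
          exact h'
        · have := ih hrest
          erw [bump_comp_inl_parL x hQ hre] at this; exact this
      · have hle : lset Q = ∅ := (par_side hQ).resolve_left hre
        rw [leftL_cons_neg L hre]
        have := ih hrest
        erw [bump_comp_inl_parR x hQ hle] at this; exact this

theorem IsGr_par_right {d : t₁.Arc ⊕ t₂.Arc → ℕ → ℝ} {x : t₁.Arc ⊕ t₂.Arc → ℕ}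
    {L : List (Finset (t₁.Arc ⊕ t₂.Arc))} (h : IsGr (SPTree.parallel t₁ t₂).paths d x L) :
    IsGr t₂.paths (fun b => d (Sum.inr b)) (x ∘ Sum.inr) (rightL L) := by
  induction L generalizing x with
  | nil => trivial
  | cons Q L ih =>
      obtain ⟨hQ, hmin, hrest⟩ := h
      by_cases hle : lset Q = ∅
      · obtain ⟨hp, -⟩ := parR_shape hQ hle
        rw [rightL_cons_pos L hle]
        refine ⟨hp, ?_, ?_⟩
        · intro P hP
          have h' := hmin _ (mem_paths_parallel.2 (Or.inr ⟨P, hP, rfl⟩))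
          erw [arrC_inr, arrC_parR d x hQ hle] at h'
          exact h'
        · have := ih hrest
          erw [bump_comp_inr_parR x hQ hle] at this; exact this
      · have hre : rset Q = ∅ := by
          rcases par_side hQ with h | h
          · exact h
          · exact (hle h).elim
        rw [rightL_cons_neg L hle]
        have := ih hrest
        erw [bump_comp_inr_parL x hQ hre] at this; exact this

theorem mu_par_le_left (d : t₁.Arc ⊕ t₂.Arc → ℕ → ℝ) (x : t₁.Arc ⊕ t₂.Arc → ℕ) :
    mu (SPTree.parallel t₁ t₂).paths (paths_nonempty _) d x ≤
      mu t₁.paths (paths_nonempty _) (fun a => d (Sum.inl a)) (x ∘ Sum.inl) := by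
  obtain ⟨P₁, h₁, e₁⟩ := exists_mu (paths_nonempty t₁) (fun a => d (Sum.inl a)) (x ∘ Sum.inl)
  rw [e₁, ← arrC_inl]
  exact mu_le _ (mem_paths_parallel.2 (Or.inl ⟨P₁, h₁, rfl⟩))

theorem mu_par_le_right (d : t₁.Arc ⊕ t₂.Arc → ℕ → ℝ) (x : t₁.Arc ⊕ t₂.Arc → ℕ) :
    mu (SPTree.parallel t₁ t₂).paths (paths_nonempty _) d x ≤
      mu t₂.paths (paths_nonempty _) (fun b => d (Sum.inr b)) (x ∘ Sum.inr) := by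
  obtain ⟨P₂, h₂, e₂⟩ := exists_mu (paths_nonempty t₂) (fun b => d (Sum.inr b)) (x ∘ Sum.inr)
  rw [e₂, ← arrC_inr]
  exact mu_le _ (mem_paths_parallel.2 (Or.inr ⟨P₂, h₂, rfl⟩))

theorem leftL_rightL_length (L : List (Finset (t₁.Arc ⊕ t₂.Arc)))
    (hL : ∀ Q ∈ L, Q ∈ (SPTree.parallel t₁ t₂).paths) :
    (leftL (t₂ := t₂) L).length + (rightL (t₁ := t₁) L).length = L.length := by
  induction L with
  | nil => rfl
  | cons Q L ih =>
      have hmem := hL Q (by simp)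
      have ih' := ih fun Q' hQ' => hL Q' (by simp [hQ'])
      by_cases hre : rset Q = ∅
      · rw [leftL_cons_pos L hre, rightL_cons_neg L (par_not_both hmem hre)]
        simp only [List.length_cons]
        omega
      · have hle : lset Q = ∅ := (par_side hmem).resolve_left hre
        rw [leftL_cons_neg L hre, rightL_cons_pos L hle]
        simp only [List.length_cons]
        omega

theorem IsGr.prefix {R : Type} [DecidableEq R] [Fintype R] {Pths : Finset (Finset R)} {d}
    {x : R → ℕ} {L M : List (Finset R)} (h : IsGr Pths d x (L ++ M)) : IsGr Pths d x L := by
  induction L generalizing x with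
  | nil => trivial
  | cons Q L ih => exact ⟨h.1, h.2.1, ih h.2.2⟩

theorem loadL_le_of_prefix {R : Type} [DecidableEq R] [Fintype R] {x : R → ℕ}
    {L M : List (Finset R)} (h : L <+: M) (r : R) : loadL x L r ≤ loadL x M r := by
  obtain ⟨tl, rfl⟩ := h
  rw [loadL_append]
  exact le_loadL _ _ _

end SPaux

namespace SPaux

variable {t₁ t₂ : SPTree}

theorem mu_eq_singleton {R : Type} [DecidableEq R] [Fintype R] {Pths : Finset (Finset R)}
    (h : Pths.Nonempty) {P : Finset R} (hP : Pths = {P}) (d : R → ℕ → ℝ) (x : R → ℕ) :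
    mu Pths h d x = arrC d P x := by
  subst hP
  apply le_antisymm (mu_le h (Finset.mem_singleton_self P))
  apply Finset.le_min'
  intro y hy
  obtain ⟨Q, hQ, rfl⟩ := Finset.mem_image.1 hy
  rw [Finset.mem_singleton.1 hQ]

theorem mem_leftL {Q : Finset (t₁.Arc ⊕ t₂.Arc)} {L : List (Finset (t₁.Arc ⊕ t₂.Arc))}
    (hQmem : Q ∈ L) (hre : rset Q = ∅) : lset Q ∈ leftL L :=
  List.mem_map_of_mem (List.mem_filter.2 ⟨hQmem, by simpa using hre⟩)

theorem mem_rightL {Q : Finset (t₁.Arc ⊕ t₂.Arc)} {L : List (Finset (t₁.Arc ⊕ t₂.Arc))}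
    (hQmem : Q ∈ L) (hle : lset Q = ∅) : rset Q ∈ rightL L :=
  List.mem_map_of_mem (List.mem_filter.2 ⟨hQmem, by simpa using hle⟩)

theorem leftL_mem_paths {L : List (Finset (t₁.Arc ⊕ t₂.Arc))}
    (hL : ∀ Q ∈ L, Q ∈ (SPTree.parallel t₁ t₂).paths) {Q' : Finset t₁.Arc}
    (h : Q' ∈ leftL L) : Q' ∈ t₁.paths := by
  obtain ⟨Q, hQ, rfl⟩ := List.mem_map.1 h
  have := List.mem_filter.1 hQ
  exact (parL_shape (hL Q this.1) (by simpa using this.2)).1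

theorem rightL_mem_paths {L : List (Finset (t₁.Arc ⊕ t₂.Arc))}
    (hL : ∀ Q ∈ L, Q ∈ (SPTree.parallel t₁ t₂).paths) {Q' : Finset t₂.Arc}
    (h : Q' ∈ rightL L) : Q' ∈ t₂.paths := by
  obtain ⟨Q, hQ, rfl⟩ := List.mem_map.1 h
  have := List.mem_filter.1 hQ
  exact (parR_shape (hL Q this.1) (by simpa using this.2)).1

theorem leftL_eq_nil {L : List (Finset (t₁.Arc ⊕ t₂.Arc))}
    (h : ∀ Q ∈ L, ¬ rset Q = ∅) : leftL (t₂ := t₂) L = [] := by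
  have : L.filter (fun Q => rset Q = ∅) = [] :=
    List.filter_eq_nil_iff.2 fun Q hQ => by simpa using h Q hQ
  rw [leftL, this]; rfl

theorem rightL_eq_nil {L : List (Finset (t₁.Arc ⊕ t₂.Arc))}
    (h : ∀ Q ∈ L, ¬ lset Q = ∅) : rightL (t₁ := t₁) L = [] := by
  have : L.filter (fun Q => lset Q = ∅) = [] :=
    List.filter_eq_nil_iff.2 fun Q hQ => by simpa using h Q hQ
  rw [rightL, this]; rfl

/-- **Key structural lemma for series-parallel graphs.** In a greedy sequence, every
player's cost under the final load is at most the minimum arrival cost at the load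
just before the last player. -/
theorem LW : ∀ (t : SPTree) (d : t.Arc → ℕ → ℝ), (∀ r, Monotone (d r)) →
    ∀ (x : t.Arc → ℕ) (M : List (Finset t.Arc)) (qN Q : Finset t.Arc),
      IsGr t.paths d x (M ++ [qN]) → Q ∈ M ++ [qN] →
      Dc d Q (loadL x (M ++ [qN])) ≤ mu t.paths (paths_nonempty t) d (loadL x M) := by
  intro t
  induction t with
  | edge =>
      intro d hmono x M qN Q hgr hQmem
      have hQu : Q = Finset.univ := Finset.mem_singleton.1 (hgr.mem hQmem)
      have hqN : qN = Finset.univ := Finset.mem_singleton.1 (hgr.mem (by simp))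
      rw [mu_eq_singleton (paths_nonempty SPTree.edge)
        (rfl : SPTree.edge.paths = {Finset.univ}) d (loadL x M), loadL_concat, hQu, hqN]
      exact le_of_eq rfl
  | series t₁ t₂ ih₁ ih₂ =>
      intro d hmono x M qN Q hgr hQmem
      have hQp := hgr.mem hQmem
      have hmemL : ∀ Q' ∈ M ++ [qN], Q' ∈ (SPTree.series t₁ t₂).paths := fun _ h => hgr.mem h
      have hmemM : ∀ Q' ∈ M, Q' ∈ (SPTree.series t₁ t₂).paths :=
        fun Q' h => hmemL Q' (by simp [h])
      have e1 := loadL_series_inl x (M ++ [qN]) hmemL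
      have e2 := loadL_series_inr x (M ++ [qN]) hmemL
      have hmap : (M ++ [qN]).map lset = M.map lset ++ [lset qN] := by exact List.map_append
      have hmap' : (M ++ [qN]).map rset = M.map rset ++ [rset qN] := by exact List.map_append
      have h1 := ih₁ (fun a => d (Sum.inl a)) (fun a => hmono _) (x ∘ Sum.inl)
        (M.map lset) (lset qN) (lset Q) (by rw [← hmap]; exact IsGr_series_left hgr)
        (by rw [← hmap]; exact List.mem_map_of_mem hQmem)
      have h2 := ih₂ (fun b => d (Sum.inr b)) (fun b => hmono _) (x ∘ Sum.inr)
        (M.map rset) (rset qN) (rset Q) (by rw [← hmap']; exact IsGr_series_right hgr)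
        (by rw [← hmap']; exact List.mem_map_of_mem hQmem)
      erw [← hmap, ← e1] at h1
      erw [← hmap', ← e2] at h2
      erw [Dc_series_split d _ hQp, mu_series,
        loadL_series_inl x M hmemM, loadL_series_inr x M hmemM]
      exact add_le_add h1 h2
  | parallel t₁ t₂ ih₁ ih₂ =>
      intro d hmono x M qN Q hgr hQmem
      have hQp := hgr.mem hQmem
      have hmemL : ∀ Q' ∈ M ++ [qN], Q' ∈ (SPTree.parallel t₁ t₂).paths := fun _ h => hgr.mem h
      obtain ⟨Pstar, hPstar, emu⟩ :=
        exists_mu (paths_nonempty (SPTree.parallel t₁ t₂)) d (loadL x M)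
      rcases par_side hQp with hre | hle
      · -- Q is a left path
        have hQ1 : lset Q ∈ leftL (M ++ [qN]) := mem_leftL hQmem hre
        have hne : leftL (M ++ [qN]) ≠ [] := List.ne_nil_of_mem hQ1
        have hdg := (List.dropLast_append_getLast hne).symm
        have hIH := ih₁ (fun a => d (Sum.inl a)) (fun a => hmono _) (x ∘ Sum.inl)
          ((leftL (M ++ [qN])).dropLast) ((leftL (M ++ [qN])).getLast hne) (lset Q)
          (by rw [← hdg]; exact IsGr_par_left hgr) (by rw [← hdg]; exact hQ1)
        erw [← hdg, ← loadL_par_inl x _ hmemL] at hIH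
        have hLHS : Dc d Q (loadL x (M ++ [qN])) =
            Dc (fun a => d (Sum.inl a)) (lset Q) (loadL x (M ++ [qN]) ∘ Sum.inl) :=
          Dc_parL d _ hQp hre
        rw [hLHS]
        refine le_trans hIH ?_
        -- now bound mu₁ at the left-load before the last left player
        obtain ⟨Mp, p, Sp, hdec, hpre, hSp⟩ :=
          exists_last_pred (fun Q' => rset Q' = ∅) (M ++ [qN]) ⟨Q, hQmem, hre⟩
        have hmemMp : ∀ Q' ∈ Mp, Q' ∈ (SPTree.parallel t₁ t₂).paths :=
          fun Q' h => hmemL Q' (by rw [hdec]; exact List.mem_append_left _ h)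
        have hp : p ∈ (SPTree.parallel t₁ t₂).paths := hmemL p (by rw [hdec]; exact List.mem_append_right _ (List.mem_cons_self ..))
        have hgr' : IsGr (SPTree.parallel t₁ t₂).paths d x (Mp ++ p :: Sp) := by
          rwa [← hdec]
        obtain ⟨-, hminp, -⟩ := hgr'.split
        have hll : leftL (M ++ [qN]) = leftL Mp ++ [lset p] := by
          rw [hdec, leftL_append, leftL_cons_pos _ hpre, leftL_eq_nil hSp]
        have hdl : (leftL (M ++ [qN])).dropLast = leftL Mp := by
          rw [hll, List.dropLast_concat]
        erw [hdl, ← loadL_par_inl x Mp hmemMp]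
        -- Mp is a prefix of M
        have hpre' : Mp <+: M := by
          have h1 : Mp <+: M ++ [qN] := ⟨p :: Sp, hdec.symm⟩
          have h2 : M <+: M ++ [qN] := ⟨[qN], rfl⟩
          have hlen : Mp.length ≤ M.length := by
            have := congrArg List.length hdec
            erw [List.length_append, List.length_append, List.length_cons, List.length_cons] at this
            simp at this
            have hMp : @List.length (Finset (SPTree.parallel t₁ t₂).Arc) Mp = @List.length (Finset (t₁.Arc ⊕ t₂.Arc)) Mp := rfl
            omega
          exact List.prefix_of_prefix_length_le h1 h2 hlen
        calc mu t₁.paths (paths_nonempty t₁) (fun a => d (Sum.inl a)) (loadL x Mp ∘ Sum.inl)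
            ≤ arrC (fun a => d (Sum.inl a)) (lset p) (loadL x Mp ∘ Sum.inl) :=
              mu_le _ (parL_shape hp hpre).1
          _ = arrC d p (loadL x Mp) := (arrC_parL d _ hp hpre).symm
          _ ≤ arrC d Pstar (loadL x Mp) := hminp _ hPstar
          _ ≤ arrC d Pstar (loadL x M) := arrC_mono hmono (loadL_le_of_prefix hpre')
          _ = mu _ (paths_nonempty (SPTree.parallel t₁ t₂)) d (loadL x M) := emu.symm
      · -- Q is a right path
        have hQ1 : rset Q ∈ rightL (M ++ [qN]) := mem_rightL hQmem hle
        have hne : rightL (M ++ [qN]) ≠ [] := List.ne_nil_of_mem hQ1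
        have hdg := (List.dropLast_append_getLast hne).symm
        have hIH := ih₂ (fun b => d (Sum.inr b)) (fun b => hmono _) (x ∘ Sum.inr)
          ((rightL (M ++ [qN])).dropLast) ((rightL (M ++ [qN])).getLast hne) (rset Q)
          (by rw [← hdg]; exact IsGr_par_right hgr) (by rw [← hdg]; exact hQ1)
        erw [← hdg, ← loadL_par_inr x _ hmemL] at hIH
        have hLHS : Dc d Q (loadL x (M ++ [qN])) =
            Dc (fun b => d (Sum.inr b)) (rset Q) (loadL x (M ++ [qN]) ∘ Sum.inr) :=
          Dc_parR d _ hQp hle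
        rw [hLHS]
        refine le_trans hIH ?_
        obtain ⟨Mp, p, Sp, hdec, hple, hSp⟩ :=
          exists_last_pred (fun Q' => lset Q' = ∅) (M ++ [qN]) ⟨Q, hQmem, hle⟩
        have hmemMp : ∀ Q' ∈ Mp, Q' ∈ (SPTree.parallel t₁ t₂).paths :=
          fun Q' h => hmemL Q' (by rw [hdec]; exact List.mem_append_left _ h)
        have hp : p ∈ (SPTree.parallel t₁ t₂).paths := hmemL p (by rw [hdec]; exact List.mem_append_right _ (List.mem_cons_self ..))
        have hgr' : IsGr (SPTree.parallel t₁ t₂).paths d x (Mp ++ p :: Sp) := by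
          rwa [← hdec]
        obtain ⟨-, hminp, -⟩ := hgr'.split
        have hll : rightL (M ++ [qN]) = rightL Mp ++ [rset p] := by
          rw [hdec, rightL_append, rightL_cons_pos _ hple, rightL_eq_nil hSp]
        have hdl : (rightL (M ++ [qN])).dropLast = rightL Mp := by
          rw [hll, List.dropLast_concat]
        erw [hdl, ← loadL_par_inr x Mp hmemMp]
        have hpre' : Mp <+: M := by
          have h1 : Mp <+: M ++ [qN] := ⟨p :: Sp, hdec.symm⟩
          have h2 : M <+: M ++ [qN] := ⟨[qN], rfl⟩
          have hlen : Mp.length ≤ M.length := by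
            have := congrArg List.length hdec
            erw [List.length_append, List.length_append, List.length_cons, List.length_cons] at this
            simp at this
            have hMp : @List.length (Finset (SPTree.parallel t₁ t₂).Arc) Mp = @List.length (Finset (t₁.Arc ⊕ t₂.Arc)) Mp := rfl
            omega
          exact List.prefix_of_prefix_length_le h1 h2 hlen
        calc mu t₂.paths (paths_nonempty t₂) (fun b => d (Sum.inr b)) (loadL x Mp ∘ Sum.inr)
            ≤ arrC (fun b => d (Sum.inr b)) (rset p) (loadL x Mp ∘ Sum.inr) :=
              mu_le _ (parR_shape hp hple).1
          _ = arrC d p (loadL x Mp) := (arrC_parR d _ hp hple).symm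
          _ ≤ arrC d Pstar (loadL x Mp) := hminp _ hPstar
          _ ≤ arrC d Pstar (loadL x M) := arrC_mono hmono (loadL_le_of_prefix hpre')
          _ = mu _ (paths_nonempty (SPTree.parallel t₁ t₂)) d (loadL x M) := emu.symm

end SPaux

namespace SPaux

/-- **Greedy loads are worst case for the next arrival.** Among loads formed by at most
as many paths, any load gives a smaller minimum arrival cost than a greedy load. -/
theorem Zp : ∀ (t : SPTree) (d : t.Arc → ℕ → ℝ), (∀ r, Monotone (d r)) →
    ∀ (Lx Ly : List (Finset t.Arc)), (∀ Q ∈ Lx, Q ∈ t.paths) →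
      IsGr t.paths d (fun _ => 0) Ly → Lx.length ≤ Ly.length →
      mu t.paths (paths_nonempty t) d (loadL (fun _ => 0) Lx) ≤
        mu t.paths (paths_nonempty t) d (loadL (fun _ => 0) Ly) := by
  intro t
  induction t with
  | edge =>
      intro d hmono Lx Ly hLx hgry hlen
      rw [mu_eq_singleton (paths_nonempty SPTree.edge)
          (rfl : SPTree.edge.paths = {Finset.univ}) d (loadL (fun _ => 0) Lx),
        mu_eq_singleton (paths_nonempty SPTree.edge)
          (rfl : SPTree.edge.paths = {Finset.univ}) d (loadL (fun _ => 0) Ly)]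
      apply arrC_mono hmono
      intro r
      rw [loadL_count, loadL_count]
      have h1 : (Lx.filter fun P => r ∈ P).length ≤ Lx.length := (List.length_filter_le _ _)
      have h2 : (Ly.filter fun P => r ∈ P) = Ly := by
        rw [List.filter_eq_self]
        intro Q hQ
        have : Q = Finset.univ := Finset.mem_singleton.1 (hgry.mem hQ)
        simp [this]
      rw [h2]
      simp only [Nat.zero_add]
      omega
  | series t₁ t₂ ih₁ ih₂ =>
      intro d hmono Lx Ly hLx hgry hlen
      have hLy : ∀ Q ∈ Ly, Q ∈ (SPTree.series t₁ t₂).paths := fun _ h => hgry.mem h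
      erw [mu_series, mu_series, loadL_series_inl _ _ hLx, loadL_series_inr _ _ hLx,
        loadL_series_inl _ _ hLy, loadL_series_inr _ _ hLy]
      have h1 := ih₁ (fun a => d (Sum.inl a)) (fun a => hmono _) (Lx.map lset) (Ly.map lset)
        (fun Q' h => by
          obtain ⟨Q, hQ, rfl⟩ := List.mem_map.1 h
          exact (series_shape (hLx Q hQ)).1)
        (IsGr_series_left hgry) ((List.length_map ..).trans_le (hlen.trans_eq (List.length_map ..).symm))
      have h2 := ih₂ (fun b => d (Sum.inr b)) (fun b => hmono _) (Lx.map rset) (Ly.map rset)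
        (fun Q' h => by
          obtain ⟨Q, hQ, rfl⟩ := List.mem_map.1 h
          exact (series_shape (hLx Q hQ)).2.1)
        (IsGr_series_right hgry) ((List.length_map ..).trans_le (hlen.trans_eq (List.length_map ..).symm))
      exact add_le_add h1 h2
  | parallel t₁ t₂ ih₁ ih₂ =>
      intro d hmono Lx Ly hLx hgry hlen
      have hLy : ∀ Q ∈ Ly, Q ∈ (SPTree.parallel t₁ t₂).paths := fun _ h => hgry.mem h
      have hkx := leftL_rightL_length Lx hLx
      have hky := leftL_rightL_length Ly hLy
      -- the two side bounds
      have hS1 : mu (SPTree.parallel t₁ t₂).paths (paths_nonempty _) d (loadL (fun _ => 0) Lx) ≤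
          mu t₁.paths (paths_nonempty t₁) (fun a => d (Sum.inl a))
            (loadL (fun _ => 0) (leftL Ly)) := by
        by_cases hk : (leftL (t₂ := t₂) Lx).length ≤ (leftL (t₂ := t₂) Ly).length
        · refine le_trans (mu_par_le_left d _) ?_
          erw [loadL_par_inl _ _ hLx]
          exact ih₁ (fun a => d (Sum.inl a)) (fun a => hmono _) (leftL Lx) (leftL Ly)
            (fun Q' h => leftL_mem_paths hLx h) (IsGr_par_left hgry) hk
        · -- there are strictly more right players in Ly than in Lx
          push_neg at hk
          have hrg : (rightL (t₁ := t₁) Lx).length + 1 ≤ (rightL (t₁ := t₁) Ly).length := by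
            have hlen' : @List.length (Finset (t₁.Arc ⊕ t₂.Arc)) Lx ≤ @List.length (Finset (t₁.Arc ⊕ t₂.Arc)) Ly := hlen
            omega
          -- find the last right path of Ly
          have hrne : rightL (t₁ := t₁) Ly ≠ [] := by
            intro h
            rw [h] at hrg
            simp at hrg
          have hex : ∃ Q0 ∈ Ly, lset Q0 = ∅ := by
            by_contra hcon
            push_neg at hcon
            exact hrne (rightL_eq_nil fun Q hQ h => (hcon Q hQ).ne_empty h)
          obtain ⟨Mp, p, Sp, hdec, hple, hSp⟩ :=
            exists_last_pred (fun Q' => lset Q' = ∅) Ly hex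
          have hmemMp : ∀ Q' ∈ Mp, Q' ∈ (SPTree.parallel t₁ t₂).paths :=
            fun Q' h => hLy Q' (by rw [hdec]; exact List.mem_append_left _ h)
          have hp : p ∈ (SPTree.parallel t₁ t₂).paths := hLy p (by rw [hdec]; exact List.mem_append_right _ (List.mem_cons_self ..))
          have hgr' : IsGr (SPTree.parallel t₁ t₂).paths d (fun _ => 0) (Mp ++ p :: Sp) := by
            rwa [← hdec]
          obtain ⟨-, hminp, -⟩ := hgr'.split
          have hrr : rightL (t₁ := t₁) Ly = rightL Mp ++ [rset p] := by
            rw [hdec, rightL_append, rightL_cons_pos _ hple, rightL_eq_nil hSp]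
          have hlenMp : (rightL (t₁ := t₁) Lx).length ≤ (rightL (t₁ := t₁) Mp).length := by
            have := congrArg List.length hrr
            simp at this
            omega
          have hIH := ih₂ (fun b => d (Sum.inr b)) (fun b => hmono _) (rightL Lx) (rightL Mp)
            (fun Q' h => rightL_mem_paths hLx h)
            (IsGr_par_right (hgr'.prefix)) hlenMp
          obtain ⟨P₁, hP₁, e₁⟩ := exists_mu (paths_nonempty t₁) (fun a => d (Sum.inl a))
            (loadL (fun _ => 0) (leftL Ly))
          have hwle : ∀ r, loadL (fun _ => 0) Mp r ≤ loadL (fun _ => 0) Ly r := by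
            intro r
            exact loadL_le_of_prefix (by rw [hdec]; exact ⟨p :: Sp, rfl⟩) r
          calc mu (SPTree.parallel t₁ t₂).paths (paths_nonempty _) d (loadL (fun _ => 0) Lx)
              ≤ mu t₂.paths (paths_nonempty t₂) (fun b => d (Sum.inr b))
                  (loadL (fun _ => 0) Lx ∘ Sum.inr) := mu_par_le_right d _
            _ = mu t₂.paths (paths_nonempty t₂) (fun b => d (Sum.inr b))
                  (loadL (fun _ => 0) (rightL Lx)) := by erw [loadL_par_inr _ _ hLx]; exact rfl
            _ ≤ mu t₂.paths (paths_nonempty t₂) (fun b => d (Sum.inr b))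
                  (loadL (fun _ => 0) (rightL Mp)) := hIH
            _ = mu t₂.paths (paths_nonempty t₂) (fun b => d (Sum.inr b))
                  (loadL (fun _ => 0) Mp ∘ Sum.inr) := by rw [loadL_par_inr _ _ hmemMp]; exact rfl
            _ ≤ arrC (fun b => d (Sum.inr b)) (rset p) (loadL (fun _ => 0) Mp ∘ Sum.inr) :=
                mu_le _ (parR_shape hp hple).1
            _ = arrC d p (loadL (fun _ => 0) Mp) := (arrC_parR d _ hp hple).symm
            _ ≤ arrC d (P₁.image Sum.inl) (loadL (fun _ => 0) Mp) :=
                hminp _ (mem_paths_parallel.2 (Or.inl ⟨P₁, hP₁, rfl⟩))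
            _ = arrC (fun a => d (Sum.inl a)) P₁ (loadL (fun _ => 0) Mp ∘ Sum.inl) :=
                arrC_inl d P₁ _
            _ ≤ arrC (fun a => d (Sum.inl a)) P₁ (loadL (fun _ => 0) Ly ∘ Sum.inl) :=
                arrC_mono (fun a => hmono _) (fun a => hwle (Sum.inl a))
            _ = arrC (fun a => d (Sum.inl a)) P₁ (loadL (fun _ => 0) (leftL Ly)) := by
                erw [loadL_par_inl _ _ hLy]; exact rfl
            _ = mu t₁.paths (paths_nonempty t₁) (fun a => d (Sum.inl a))
                  (loadL (fun _ => 0) (leftL Ly)) := e₁.symm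
      have hS2 : mu (SPTree.parallel t₁ t₂).paths (paths_nonempty _) d (loadL (fun _ => 0) Lx) ≤
          mu t₂.paths (paths_nonempty t₂) (fun b => d (Sum.inr b))
            (loadL (fun _ => 0) (rightL Ly)) := by
        by_cases hk : (rightL (t₁ := t₁) Lx).length ≤ (rightL (t₁ := t₁) Ly).length
        · refine le_trans (mu_par_le_right d _) ?_
          erw [loadL_par_inr _ _ hLx]
          exact ih₂ (fun b => d (Sum.inr b)) (fun b => hmono _) (rightL Lx) (rightL Ly)
            (fun Q' h => rightL_mem_paths hLx h) (IsGr_par_right hgry) hk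
        · push_neg at hk
          have hrg : (leftL (t₂ := t₂) Lx).length + 1 ≤ (leftL (t₂ := t₂) Ly).length := by
            have hlen' : @List.length (Finset (t₁.Arc ⊕ t₂.Arc)) Lx ≤ @List.length (Finset (t₁.Arc ⊕ t₂.Arc)) Ly := hlen
            omega
          have hrne : leftL (t₂ := t₂) Ly ≠ [] := by
            intro h
            rw [h] at hrg
            simp at hrg
          have hex : ∃ Q0 ∈ Ly, rset Q0 = ∅ := by
            by_contra hcon
            push_neg at hcon
            exact hrne (leftL_eq_nil fun Q hQ h => (hcon Q hQ).ne_empty h)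
          obtain ⟨Mp, p, Sp, hdec, hpre, hSp⟩ :=
            exists_last_pred (fun Q' => rset Q' = ∅) Ly hex
          have hmemMp : ∀ Q' ∈ Mp, Q' ∈ (SPTree.parallel t₁ t₂).paths :=
            fun Q' h => hLy Q' (by rw [hdec]; exact List.mem_append_left _ h)
          have hp : p ∈ (SPTree.parallel t₁ t₂).paths := hLy p (by rw [hdec]; exact List.mem_append_right _ (List.mem_cons_self ..))
          have hgr' : IsGr (SPTree.parallel t₁ t₂).paths d (fun _ => 0) (Mp ++ p :: Sp) := by
            rwa [← hdec]
          obtain ⟨-, hminp, -⟩ := hgr'.split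
          have hrr : leftL (t₂ := t₂) Ly = leftL Mp ++ [lset p] := by
            rw [hdec, leftL_append, leftL_cons_pos _ hpre, leftL_eq_nil hSp]
          have hlenMp : (leftL (t₂ := t₂) Lx).length ≤ (leftL (t₂ := t₂) Mp).length := by
            have := congrArg List.length hrr
            simp at this
            omega
          have hIH := ih₁ (fun a => d (Sum.inl a)) (fun a => hmono _) (leftL Lx) (leftL Mp)
            (fun Q' h => leftL_mem_paths hLx h)
            (IsGr_par_left (hgr'.prefix)) hlenMp
          obtain ⟨P₂, hP₂, e₂⟩ := exists_mu (paths_nonempty t₂) (fun b => d (Sum.inr b))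
            (loadL (fun _ => 0) (rightL Ly))
          have hwle : ∀ r, loadL (fun _ => 0) Mp r ≤ loadL (fun _ => 0) Ly r := by
            intro r
            exact loadL_le_of_prefix (by rw [hdec]; exact ⟨p :: Sp, rfl⟩) r
          calc mu (SPTree.parallel t₁ t₂).paths (paths_nonempty _) d (loadL (fun _ => 0) Lx)
              ≤ mu t₁.paths (paths_nonempty t₁) (fun a => d (Sum.inl a))
                  (loadL (fun _ => 0) Lx ∘ Sum.inl) := mu_par_le_left d _
            _ = mu t₁.paths (paths_nonempty t₁) (fun a => d (Sum.inl a))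
                  (loadL (fun _ => 0) (leftL Lx)) := by erw [loadL_par_inl _ _ hLx]; exact rfl
            _ ≤ mu t₁.paths (paths_nonempty t₁) (fun a => d (Sum.inl a))
                  (loadL (fun _ => 0) (leftL Mp)) := hIH
            _ = mu t₁.paths (paths_nonempty t₁) (fun a => d (Sum.inl a))
                  (loadL (fun _ => 0) Mp ∘ Sum.inl) := by rw [loadL_par_inl _ _ hmemMp]; exact rfl
            _ ≤ arrC (fun a => d (Sum.inl a)) (lset p) (loadL (fun _ => 0) Mp ∘ Sum.inl) :=
                mu_le _ (parL_shape hp hpre).1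
            _ = arrC d p (loadL (fun _ => 0) Mp) := (arrC_parL d _ hp hpre).symm
            _ ≤ arrC d (P₂.image Sum.inr) (loadL (fun _ => 0) Mp) :=
                hminp _ (mem_paths_parallel.2 (Or.inr ⟨P₂, hP₂, rfl⟩))
            _ = arrC (fun b => d (Sum.inr b)) P₂ (loadL (fun _ => 0) Mp ∘ Sum.inr) :=
                arrC_inr d P₂ _
            _ ≤ arrC (fun b => d (Sum.inr b)) P₂ (loadL (fun _ => 0) Ly ∘ Sum.inr) :=
                arrC_mono (fun b => hmono _) (fun b => hwle (Sum.inr b))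
            _ = arrC (fun b => d (Sum.inr b)) P₂ (loadL (fun _ => 0) (rightL Ly)) := by
                erw [loadL_par_inr _ _ hLy]; exact rfl
            _ = mu t₂.paths (paths_nonempty t₂) (fun b => d (Sum.inr b))
                  (loadL (fun _ => 0) (rightL Ly)) := e₂.symm
      -- conclude via the minimizer of the greedy side
      obtain ⟨Qs, hQs, es⟩ :=
        exists_mu (paths_nonempty (SPTree.parallel t₁ t₂)) d (loadL (fun _ => 0) Ly)
      rw [es]
      rcases par_side hQs with hre | hle
      · erw [arrC_parL d _ hQs hre, loadL_par_inl _ _ hLy]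
        exact le_trans hS1 (mu_le _ (parL_shape hQs hre).1)
      · erw [arrC_parR d _ hQs hle, loadL_par_inr _ _ hLy]
        exact le_trans hS2 (mu_le _ (parR_shape hQs hle).1)

end SPaux

namespace SPaux

variable {R : Type} [DecidableEq R] [Fintype R]

theorem fin_cons_const (a : Finset R) (g : Fin 0 → Finset R) :
    (Fin.cons a g : Fin 1 → Finset R) = fun _ => a := by
  funext i
  refine Fin.cases ?_ (fun j => j.elim0) i
  rw [Fin.cons_zero]

theorem spo_one_aux : ∀ {k : ℕ} (_ : k = 1) (G1 : CGame R k) (Bt : Fin k → Finset R),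
    CGame.IsSPO G1 Bt →
    Bt ⟨0, by omega⟩ ∈ G1.actions ⟨0, by omega⟩ ∧
      ∀ a ∈ G1.actions ⟨0, by omega⟩,
        G1.cost (fun _ => Bt ⟨0, by omega⟩) ⟨0, by omega⟩ ≤ G1.cost (fun _ => a) ⟨0, by omega⟩ := by
  intro k hk
  subst hk
  intro G1 Bt h
  obtain ⟨hmem, f, hf, hfeq, hmin⟩ := h
  refine ⟨hmem, fun a ha => ?_⟩
  have h' := hmin a ha
  rwa [fin_cons_const, fin_cons_const] at h'

/-- 1-lookahead outcomes are greedy sequences. -/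
theorem kla_to_greedy {Pths : Finset (Finset R)} {d : R → ℕ → ℝ} :
    ∀ {n : ℕ} (G : CGame R n) (x0 : R → ℕ),
      (∀ i, G.actions i = Pths) → (∀ r y, G.delay r y = d r (y + x0 r)) →
      ∀ A : Fin n → Finset R, CGame.IsKLA 1 G A → IsGr Pths d x0 (List.ofFn A) := by
  intro n
  induction n with
  | zero =>
      intro G x0 hact hdel A h
      rw [List.ofFn_zero]
      trivial
  | succ n ih =>
      intro G x0 hact hdel A h
      obtain ⟨⟨hk, Bt, hSPO, hB0⟩, htail⟩ := h
      have h1 := spo_one_aux (Nat.min_eq_left (by omega)) (G.truncate 1) Bt hSPO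
      have hcost : ∀ a : Finset R,
          (G.truncate 1).cost (fun _ => a) ⟨0, by omega⟩ = arrC d a x0 := by
        intro a
        simp only [CGame.cost, CGame.congestion, arrC, Dc]
        apply Finset.sum_congr rfl
        intro r hr
        have hcard : (Finset.univ.filter fun _ : Fin (min 1 (n + 1)) => r ∈ a).card = 1 := by
          rw [Finset.filter_true_of_mem (fun _ _ => hr), Finset.card_univ, Fintype.card_fin]
          omega
        rw [hcard]
        show G.delay r 1 = d r (bump x0 a r)
        rw [hdel]
        congr 1
        simp [bump, hr]
        omega
      have hBA : Bt ⟨0, by omega⟩ = A 0 := hB0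
      have hA0 : A 0 ∈ Pths := by
        rw [← hBA, ← hact 0]
        exact h1.1
      have hmin : ∀ Q ∈ Pths, arrC d (A 0) x0 ≤ arrC d Q x0 := by
        intro Q hQ
        have h2 := h1.2 Q (by rw [show (G.truncate 1).actions ⟨0, by omega⟩ =
          G.actions 0 from rfl, hact 0]; exact hQ)
        rw [hcost, hcost, hBA] at h2
        exact h2
      have htail' := ih (G.subgame (A 0)) (bump x0 (A 0)) (fun i => hact i.succ)
        (fun r y => by
          show G.delay r (y + if r ∈ A 0 then 1 else 0) = d r (y + bump x0 (A 0) r)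
          rw [hdel]
          congr 1
          by_cases hc : r ∈ A 0 <;> simp [bump, hc] <;> omega)
        (Fin.tail A) htail
      rw [List.ofFn_succ]
      exact ⟨hA0, hmin, htail'⟩

theorem loadL_ofFn : ∀ {n : ℕ} (x : R → ℕ) (A : Fin n → Finset R) (r : R),
    loadL x (List.ofFn A) r = x r + (Finset.univ.filter fun i => r ∈ A i).card := by
  intro n
  induction n with
  | zero => intro x A r; rw [List.ofFn_zero]; simp [loadL]
  | succ n ih =>
      intro x A r
      rw [List.ofFn_succ, loadL, ih (bump x (A 0))]
      have hsplit : (Finset.univ.filter fun i : Fin (n + 1) => r ∈ A i).card =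
          (if r ∈ A 0 then 1 else 0) +
            (Finset.univ.filter fun i : Fin n => r ∈ A i.succ).card := by
        rw [Finset.card_filter, Finset.card_filter, Fin.sum_univ_succ]
      rw [hsplit]
      by_cases hc : r ∈ A 0 <;> simp [bump, hc] <;> omega

theorem cost_eq {d : R → ℕ → ℝ} {n : ℕ} (G : CGame R n) (x0 : R → ℕ)
    (hdel : ∀ r y, G.delay r y = d r (y + x0 r)) (A : Fin n → Finset R) (i : Fin n) :
    G.cost A i = Dc d (A i) (loadL x0 (List.ofFn A)) := by
  simp only [CGame.cost, Dc]
  apply Finset.sum_congr rfl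
  intro r hr
  rw [hdel, loadL_ofFn]
  congr 1
  simp only [CGame.congestion]
  omega

theorem congestion_reorder {n : ℕ} (G : CGame R n) (σ : Equiv.Perm (Fin n))
    (A : Fin n → Finset R) (r : R) :
    CGame.congestion (G.reorder σ) (A ∘ σ) r = G.congestion A r := by
  simp only [CGame.congestion]
  rw [Finset.card_filter, Finset.card_filter]
  exact Fintype.sum_equiv σ _ _ fun i => rfl

theorem cost_reorder {n : ℕ} (G : CGame R n) (σ : Equiv.Perm (Fin n))
    (A : Fin n → Finset R) (j : Fin n) :
    (G.reorder σ).cost (A ∘ σ) j = G.cost A (σ j) := by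
  simp only [CGame.cost]
  apply Finset.sum_congr rfl
  intro r hr
  show G.delay r _ = G.delay r _
  rw [congestion_reorder]

theorem worstCost_le {n : ℕ} (G : CGame R n) (A : Fin n → Finset R) (hn : 0 < n) {c : ℝ}
    (h : ∀ i, G.cost A i ≤ c) : G.worstCost A ≤ c := by
  unfold CGame.worstCost
  refine csSup_le ?_ ?_
  · exact ⟨G.cost A ⟨0, hn⟩, ⟨0, hn⟩, rfl⟩
  · rintro y ⟨i, rfl⟩
    exact h i

theorem le_worstCost {n : ℕ} (G : CGame R n) (A : Fin n → Finset R) (i : Fin n) :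
    G.cost A i ≤ G.worstCost A := by
  apply le_csSup
  · have he : {y | ∃ i, y = G.cost A i} = Set.range fun i => G.cost A i := by
      ext y
      simp [eq_comm]
    rw [he]
    exact (Set.finite_range _).bddAbove
  · exact ⟨i, rfl⟩

end SPaux
/-- Let `G` be an SNCG on a series-parallel graph with `m + n'`
players (`n' ≥ 1`), and let `G'` be the subgame induced by paths `P_1,…,P_m`. Then the
worst cost of any 1-lookahead outcome of `G'` is at most the worst cost of any
1-lookahead outcome of `G`. -/
theorem sp_subgame_worst_cost (t : SPTree) (d : t.Arc → ℕ → ℝ)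
    (hmono : ∀ r, Monotone (d r)) (hnonneg : ∀ r m, 0 ≤ d r m)
    (m n' : ℕ) (hn' : 0 < n')
    (P : Fin m → Finset t.Arc) (hP : ∀ i, P i ∈ t.paths)
    (B' : Fin n' → Finset t.Arc)
    (hB' : CGame.IsKLO 1 (CGame.subgameMany (SNCGsp t d (m + n')) P) B')
    (B : Fin (m + n') → Finset t.Arc)
    (hB : CGame.IsKLO 1 (SNCGsp t d (m + n')) B) :
    CGame.worstCost (CGame.subgameMany (SNCGsp t d (m + n')) P) B' ≤
      CGame.worstCost (SNCGsp t d (m + n')) B := by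
  classical
  obtain ⟨σ, hσ⟩ := hB'
  obtain ⟨τ, hτ⟩ := hB
  set G : CGame t.Arc (m + n') := SNCGsp t d (m + n') with hGdef
  set G' : CGame t.Arc n' := CGame.subgameMany G P with hG'def
  set x0 : t.Arc → ℕ := fun r => (Finset.univ.filter fun i : Fin m => r ∈ P i).card with hx0
  have hact' : ∀ i, (G'.reorder σ).actions i = t.paths := fun i => rfl
  have hdel' : ∀ r y, (G'.reorder σ).delay r y = d r (y + x0 r) := fun r y => rfl
  have hactG : ∀ i, (G.reorder τ).actions i = t.paths := fun i => rfl
  have hdelG : ∀ r y, (G.reorder τ).delay r y = d r (y + (fun _ => 0 : t.Arc → ℕ) r) :=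
    fun r y => by show d r y = d r (y + 0); rw [Nat.add_zero]
  have hgr' : SPaux.IsGr t.paths d x0 (List.ofFn (B' ∘ σ)) :=
    SPaux.kla_to_greedy _ x0 hact' hdel' _ hσ
  have hgrB : SPaux.IsGr t.paths d (fun _ => 0) (List.ofFn (B ∘ τ)) :=
    SPaux.kla_to_greedy _ _ hactG hdelG _ hτ
  set L' : List (Finset t.Arc) := List.ofFn (B' ∘ σ) with hL'
  set LB : List (Finset t.Arc) := List.ofFn (B ∘ τ) with hLB
  have hlenL' : L'.length = n' := List.length_ofFn
  have hlenLB : LB.length = m + n' := List.length_ofFn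
  have hneL' : L' ≠ [] := by
    intro h; rw [h] at hlenL'; simp at hlenL'; omega
  have hneLB : LB ≠ [] := by
    intro h; rw [h] at hlenLB; simp at hlenLB; omega
  -- the last player of B
  have hqBmem : LB.getLast hneLB ∈ t.paths := hgrB.mem (List.getLast_mem hneLB)
  obtain ⟨j0, hj0⟩ := Set.mem_range.1 ((List.mem_ofFn' _ _).1 (List.getLast_mem hneLB))
  -- cost of the last player of B bounds mu at the penultimate load of B
  have hmuB : SPaux.mu t.paths (SPaux.paths_nonempty t) d
      (SPaux.loadL (fun _ => 0) LB.dropLast) ≤ CGame.worstCost G B := by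
    have h1 : SPaux.mu t.paths (SPaux.paths_nonempty t) d
        (SPaux.loadL (fun _ => 0) LB.dropLast) ≤
        SPaux.arrC d (LB.getLast hneLB) (SPaux.loadL (fun _ => 0) LB.dropLast) :=
      SPaux.mu_le _ hqBmem
    have h2 : SPaux.arrC d (LB.getLast hneLB) (SPaux.loadL (fun _ => 0) LB.dropLast) =
        SPaux.Dc d (LB.getLast hneLB) (SPaux.loadL (fun _ => 0) LB) := by
      rw [SPaux.arrC]
      congr 1
      conv_rhs => rw [← List.dropLast_append_getLast hneLB]
      rw [SPaux.loadL_concat]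
    have h3 : SPaux.Dc d (LB.getLast hneLB) (SPaux.loadL (fun _ => 0) LB) =
        CGame.cost G B (τ j0) := by
      rw [← SPaux.cost_reorder G τ B j0, SPaux.cost_eq (G.reorder τ) (fun _ => 0) hdelG]
      rw [← hLB, hj0]
    calc SPaux.mu t.paths (SPaux.paths_nonempty t) d (SPaux.loadL (fun _ => 0) LB.dropLast)
        ≤ SPaux.arrC d (LB.getLast hneLB) (SPaux.loadL (fun _ => 0) LB.dropLast) := h1
      _ = CGame.cost G B (τ j0) := by rw [h2, h3]
      _ ≤ CGame.worstCost G B := SPaux.le_worstCost G B (τ j0)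
  -- preload as a load of paths
  have hx0load : x0 = SPaux.loadL (fun _ => 0) (List.ofFn P) := by
    funext r
    rw [SPaux.loadL_ofFn]
    simp [hx0]
  -- bound each player's cost in B'
  have key : ∀ i : Fin n', CGame.cost G' B' i ≤ CGame.worstCost G B := by
    intro i
    have hc1 : CGame.cost G' B' i = SPaux.Dc d ((B' ∘ σ) (σ.symm i))
        (SPaux.loadL x0 L') := by
      rw [← SPaux.cost_eq (G'.reorder σ) x0 hdel' (B' ∘ σ) (σ.symm i),
        SPaux.cost_reorder G' σ B' (σ.symm i), Equiv.apply_symm_apply]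
    have hmemQ : (B' ∘ σ) (σ.symm i) ∈ L'.dropLast ++ [L'.getLast hneL'] := by
      rw [List.dropLast_append_getLast hneL']
      exact (List.mem_ofFn' _ _).2 ⟨σ.symm i, rfl⟩
    have hLW := SPaux.LW t d hmono x0 L'.dropLast (L'.getLast hneL')
      ((B' ∘ σ) (σ.symm i))
      (by rw [List.dropLast_append_getLast hneL']; exact hgr') hmemQ
    rw [List.dropLast_append_getLast hneL'] at hLW
    rw [hc1]
    refine le_trans hLW ?_
    -- rewrite the preloaded load as a load from the empty load
    have hcomb : SPaux.loadL x0 L'.dropLast =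
        SPaux.loadL (fun _ => 0) (List.ofFn P ++ L'.dropLast) := by
      rw [SPaux.loadL_append, ← hx0load]
    rw [hcomb]
    refine le_trans (SPaux.Zp t d hmono (List.ofFn P ++ L'.dropLast) LB.dropLast ?_
      hgrB.dropLast ?_) hmuB
    · intro Q hQ
      rcases List.mem_append.1 hQ with hQ | hQ
      · obtain ⟨ip, hip⟩ := Set.mem_range.1 ((List.mem_ofFn' _ _).1 hQ)
        rw [← hip]
        exact hP ip
      · exact hgr'.mem ((List.dropLast_sublist _).subset hQ)
    · rw [List.length_append, List.length_dropLast, List.length_dropLast, List.length_ofFn,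
        hlenL', hlenLB]
      omega
  exact SPaux.worstCost_le G' B' hn' key
end

section
/- Let G be a symmetric network congestion game on an extension-parallel graph. Then every subgame-perfect outcome A of G has optimal egalitarian social cost: for every subgame-perfect outcome A and every 1-lookahead outcome B of G, max_{i∈N} c_i(A) = max_{i∈N} c_i(B). -/
namespace EPWork

variable {α : Type} [DecidableEq α]

/-- Congestion of resource `r` in a list profile. -/
def congL (X : List (Finset α)) (r : α) : ℕ := X.countP (fun S => r ∈ S)

/-- Shifted delay functions (one extra player on `P`). -/
def shiftD (d : α → ℕ → ℝ) (P : Finset α) : α → ℕ → ℝ :=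
  fun r y => d r (y + if r ∈ P then 1 else 0)

/-- Cost of a player playing `P` when the other players are `X`. -/
def pcost (d : α → ℕ → ℝ) (P : Finset α) (X : List (Finset α)) : ℝ :=
  ∑ r ∈ P, d r (congL X r + 1)

/-- Worst (maximal) player cost in a list profile. -/
def worstL (d : α → ℕ → ℝ) : List (Finset α) → ℝ
  | [] => 0
  | P :: T => max (pcost d P T) (worstL (shiftD d P) T)

def MonoD (d : α → ℕ → ℝ) : Prop := ∀ r, Monotone (d r)
def NonnegD (d : α → ℕ → ℝ) : Prop := ∀ r m, 0 ≤ d r m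

lemma congL_nil (r : α) : congL ([] : List (Finset α)) r = 0 := rfl

lemma congL_cons (S : Finset α) (X : List (Finset α)) (r : α) :
    congL (S :: X) r = congL X r + (if r ∈ S then 1 else 0) := by
  simp [congL, List.countP_cons]

lemma shiftD_mono {d : α → ℕ → ℝ} (hd : MonoD d) (P : Finset α) : MonoD (shiftD d P) :=
  fun r _ _ h => hd r (by omega)

lemma shiftD_nonneg {d : α → ℕ → ℝ} (hd : NonnegD d) (P : Finset α) : NonnegD (shiftD d P) :=
  fun r m => hd r _

lemma pcost_nonneg {d : α → ℕ → ℝ} (hd : NonnegD d) (P : Finset α) (X : List (Finset α)) :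
    0 ≤ pcost d P X :=
  Finset.sum_nonneg fun r _ => hd r _

lemma worstL_nonneg {d : α → ℕ → ℝ} (hd : NonnegD d) (X : List (Finset α)) :
    0 ≤ worstL d X := by
  induction X generalizing d with
  | nil => simp [worstL]
  | cons S X ih => exact le_trans (ih (shiftD_nonneg hd S)) (le_max_right _ _)

lemma pcost_mono_profile {d : α → ℕ → ℝ} (hd : MonoD d) (P : Finset α)
    {X Y : List (Finset α)} (h : ∀ r, congL X r ≤ congL Y r) :
    pcost d P X ≤ pcost d P Y :=
  Finset.sum_le_sum fun r _ => hd r (by have := h r; omega)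

lemma pcost_mono_d {d d' : α → ℕ → ℝ} (h : ∀ r y, d r y ≤ d' r y) (P : Finset α)
    (X : List (Finset α)) : pcost d P X ≤ pcost d' P X :=
  Finset.sum_le_sum fun r _ => h r _

lemma worstL_mono_d {d d' : α → ℕ → ℝ} (h : ∀ r y, d r y ≤ d' r y) (X : List (Finset α)) :
    worstL d X ≤ worstL d' X := by
  induction X generalizing d d' with
  | nil => simp [worstL]
  | cons S X ih =>
      exact max_le_max (pcost_mono_d h S X) (ih fun r y => h r _)

lemma le_shiftD {d : α → ℕ → ℝ} (hd : MonoD d) (P : Finset α) (r : α) (y : ℕ) :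
    d r y ≤ shiftD d P r y := hd r (by by_cases h : r ∈ P <;> simp [shiftD, h])

lemma worstL_le_cons {d : α → ℕ → ℝ} (hd : MonoD d) (P : Finset α) (X : List (Finset α)) :
    worstL d X ≤ worstL d (P :: X) :=
  le_trans (worstL_mono_d (le_shiftD hd P) X) (le_max_right _ _)

lemma worstL_cons (d : α → ℕ → ℝ) (P : Finset α) (X : List (Finset α)) :
    worstL d (P :: X) = max (pcost d P X) (worstL (shiftD d P) X) := rfl

/-- All profiles of `n` players with actions in `PS`. -/
def listProfiles (PS : Finset (Finset α)) : ℕ → Finset (List (Finset α))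
  | 0 => {[]}
  | n+1 => (PS ×ˢ listProfiles PS n).image fun p => p.1 :: p.2

lemma mem_listProfiles {PS : Finset (Finset α)} :
    ∀ {n : ℕ} {X : List (Finset α)},
      X ∈ listProfiles PS n ↔ X.length = n ∧ ∀ S ∈ X, S ∈ PS := by
  intro n
  induction n with
  | zero =>
      intro X
      constructor
      · intro hX
        simp only [listProfiles, Finset.mem_singleton] at hX
        subst hX; simp
      · rintro ⟨hlen, -⟩
        simp only [listProfiles, Finset.mem_singleton]
        exact List.length_eq_zero_iff.1 hlen
  | succ n ih =>
      intro X
      constructor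
      · intro hX
        simp only [listProfiles, Finset.mem_image, Finset.mem_product] at hX
        obtain ⟨⟨P, T⟩, ⟨hP, hT⟩, rfl⟩ := hX
        obtain ⟨hlen, hmem⟩ := ih.1 hT
        refine ⟨by simp [hlen], ?_⟩
        intro S hS
        rcases List.mem_cons.1 hS with rfl | h
        · exact hP
        · exact hmem _ h
      · rintro ⟨hlen, hmem⟩
        cases X with
        | nil => simp at hlen
        | cons P T =>
            simp only [listProfiles, Finset.mem_image, Finset.mem_product]
            exact ⟨⟨P, T⟩, ⟨hmem _ (by simp), ih.2 ⟨by simpa using hlen,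
              fun S hS => hmem _ (List.mem_cons_of_mem _ hS)⟩⟩, rfl⟩

lemma listProfiles_nonempty {PS : Finset (Finset α)} (hPS : PS.Nonempty) (n : ℕ) :
    (listProfiles PS n).Nonempty := by
  induction n with
  | zero => exact ⟨[], by simp [listProfiles]⟩
  | succ n ih =>
      obtain ⟨P, hP⟩ := hPS
      obtain ⟨X, hX⟩ := ih
      refine ⟨P :: X, ?_⟩
      simp only [listProfiles, Finset.mem_image, Finset.mem_product]
      exact ⟨⟨P, X⟩, ⟨⟨hP, hX⟩, rfl⟩⟩

/-- Optimal egalitarian social cost over all `n`-player profiles. -/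
noncomputable def Lmin (PS : Finset (Finset α)) (d : α → ℕ → ℝ) (n : ℕ) : ℝ :=
  sInf (worstL d '' (listProfiles PS n : Set (List (Finset α))))

lemma Lmin_le {PS : Finset (Finset α)} {d : α → ℕ → ℝ} {n : ℕ}
    {X : List (Finset α)} (hX : X ∈ listProfiles PS n) : Lmin PS d n ≤ worstL d X :=
  csInf_le (((listProfiles PS n).finite_toSet.image _).bddBelow)
    (Set.mem_image_of_mem _ (by exact_mod_cast hX))

lemma le_Lmin {PS : Finset (Finset α)} (hPS : PS.Nonempty) {d : α → ℕ → ℝ} {n : ℕ} {c : ℝ}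
    (h : ∀ X ∈ listProfiles PS n, c ≤ worstL d X) : c ≤ Lmin PS d n := by
  apply le_csInf (((listProfiles_nonempty hPS n).to_set).image _)
  rintro y ⟨X, hX, rfl⟩
  exact h X (by exact_mod_cast hX)

lemma exists_Lmin {PS : Finset (Finset α)} (hPS : PS.Nonempty) (d : α → ℕ → ℝ) (n : ℕ) :
    ∃ X ∈ listProfiles PS n, Lmin PS d n = worstL d X := by
  have : Lmin PS d n ∈ worstL d '' (listProfiles PS n : Set (List (Finset α))) :=
    Set.Nonempty.csInf_mem (((listProfiles_nonempty hPS n).to_set).image _)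
      ((listProfiles PS n).finite_toSet.image _)
  obtain ⟨X, hX, hXe⟩ := this
  exact ⟨X, by exact_mod_cast hX, hXe.symm⟩

lemma Lmin_zero (PS : Finset (Finset α)) (d : α → ℕ → ℝ) :
    Lmin PS d 0 = 0 := by
  simp [Lmin, listProfiles, worstL]

lemma Lmin_nonneg {PS : Finset (Finset α)} (hPS : PS.Nonempty) {d : α → ℕ → ℝ}
    (hd : NonnegD d) (n : ℕ) : 0 ≤ Lmin PS d n :=
  le_Lmin hPS fun X _ => worstL_nonneg hd X

lemma Lmin_mono {PS : Finset (Finset α)} (hPS : PS.Nonempty) {d : α → ℕ → ℝ}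
    (hd : MonoD d) (n : ℕ) : Lmin PS d n ≤ Lmin PS d (n+1) := by
  obtain ⟨Y, hY, hYe⟩ := exists_Lmin hPS d (n+1)
  obtain ⟨hlen, hmem⟩ := mem_listProfiles.1 hY
  cases Y with
  | nil => simp at hlen
  | cons S Y' =>
      have hY' : Y' ∈ listProfiles PS n :=
        mem_listProfiles.2 ⟨by simpa using hlen, fun S hS => hmem _ (List.mem_cons_of_mem _ hS)⟩
      calc Lmin PS d n ≤ worstL d Y' := Lmin_le hY'
        _ ≤ worstL d (S :: Y') := worstL_le_cons hd S Y'
        _ = Lmin PS d (n+1) := hYe.symm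

end EPWork
namespace EPWork

variable {α β : Type} [DecidableEq α] [DecidableEq β]

lemma congL_append (X Y : List (Finset α)) (r : α) :
    congL (X ++ Y) r = congL X r + congL Y r := by
  simp [congL, List.countP_append]

lemma congL_map_image {f : α → β} (hf : Function.Injective f) (X : List (Finset α)) (a : α) :
    congL (X.map fun P => P.image f) (f a) = congL X a := by
  simp only [congL, List.countP_map]
  apply List.countP_congr
  intro P _
  simp [Function.comp, Finset.mem_image, hf.eq_iff]

lemma congL_map_image_ne {f : α → β} {r : β} (hr : ∀ a, f a ≠ r) (X : List (Finset α)) :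
    congL (X.map fun P => P.image f) r = 0 := by
  simp only [congL, List.countP_map]
  rw [List.countP_eq_zero]
  intro P _
  simp only [Function.comp, decide_eq_true_eq, Finset.mem_image]
  rintro ⟨a, -, ha⟩
  exact hr a ha

lemma pcost_image {f : α → β} (hf : Function.Injective f) (D : β → ℕ → ℝ) (P : Finset α)
    {X : List (Finset β)} {X' : List (Finset α)} (hc : ∀ a, congL X (f a) = congL X' a) :
    pcost D (P.image f) X = pcost (fun a y => D (f a) y) P X' := by
  unfold pcost
  rw [Finset.sum_image (fun x _ y _ h => hf h)]
  exact Finset.sum_congr rfl fun a _ => by rw [hc a]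

lemma shift_res_self {f : α → β} (hf : Function.Injective f) (D : β → ℕ → ℝ) (P : Finset α) :
    (fun a y => shiftD D (P.image f) (f a) y) = shiftD (fun a y => D (f a) y) P := by
  funext a y
  simp only [shiftD]
  congr 1
  simp [Finset.mem_image, hf.eq_iff]

lemma shift_res_other {f : α → β} {S : Finset β} (h : ∀ a, f a ∉ S) (D : β → ℕ → ℝ) :
    (fun a y => shiftD D S (f a) y) = fun a y => D (f a) y := by
  funext a y
  simp [shiftD, h a]

section ExtPattern

variable (emb : α → β) (u : β)

/-- the path extension map -/
def extE (P : Finset α) : Finset β := insert u (P.image emb)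

variable (hinj : Function.Injective emb) (hu : ∀ a, emb a ≠ u)

lemma congL_map_extE_u (X : List (Finset α)) :
    congL (X.map (extE emb u)) u = X.length := by
  simp only [congL, List.countP_map]
  rw [List.countP_eq_length.2 (by intro P _; simp [Function.comp, extE])]

include hinj hu in
lemma congL_map_extE_emb (X : List (Finset α)) (a : α) :
    congL (X.map (extE emb u)) (emb a) = congL X a := by
  simp only [congL, List.countP_map]
  apply List.countP_congr
  intro P _
  simp [Function.comp, extE, Finset.mem_insert, hu a, Finset.mem_image, hinj.eq_iff]

include hinj hu in
lemma pcost_extE (D : β → ℕ → ℝ) (P : Finset α)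
    {X : List (Finset β)} {X' : List (Finset α)} (hcu : congL X u = X'.length)
    (hc : ∀ a, congL X (emb a) = congL X' a) :
    pcost D (extE emb u P) X
      = D u (X'.length + 1) + pcost (fun a y => D (emb a) y) P X' := by
  unfold extE pcost
  rw [Finset.sum_insert (by simp only [Finset.mem_image]; rintro ⟨a, -, ha⟩; exact hu a ha)]
  rw [hcu, Finset.sum_image (fun x _ y _ h => hinj h)]
  congr 1
  exact Finset.sum_congr rfl fun a _ => by rw [hc a]

include hinj hu in
lemma shift_res_extE (D : β → ℕ → ℝ) (P : Finset α) :
    (fun a y => shiftD D (extE emb u P) (emb a) y) = shiftD (fun a y => D (emb a) y) P := by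
  funext a y
  simp only [shiftD]
  congr 1
  simp [extE, Finset.mem_insert, hu a, Finset.mem_image, hinj.eq_iff]

lemma shift_extE_u (D : β → ℕ → ℝ) (P : Finset α) (y : ℕ) :
    shiftD D (extE emb u P) u y = D u (y + 1) := by
  simp [shiftD, extE]

include hinj hu in
lemma ext_worst : ∀ (Xin : List (Finset α)) (D : β → ℕ → ℝ), NonnegD D → Xin ≠ [] →
    worstL D (Xin.map (extE emb u))
      = D u Xin.length + worstL (fun a y => D (emb a) y) Xin := by
  intro Xin
  induction Xin with
  | nil => intro D _ h; exact absurd rfl h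
  | cons P Xin' ih =>
      intro D hD _
      rcases eq_or_ne Xin' [] with rfl | hne
      · simp only [List.map_cons, List.map_nil, worstL, List.length_cons, List.length_nil]
        rw [pcost_extE emb u hinj hu D P (X' := []) (by simp [congL]) (fun a => by simp [congL])]
        rw [max_eq_left (add_nonneg (hD u _) (pcost_nonneg (fun a m => hD (emb a) m) P [])),
            max_eq_left (pcost_nonneg (fun a m => hD (emb a) m) P [])]
        rfl
      · simp only [List.map_cons, worstL, List.length_cons]
        rw [pcost_extE emb u hinj hu D P
            (by rw [congL_map_extE_u]) (fun a => congL_map_extE_emb emb u hinj hu Xin' a)]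
        rw [ih (shiftD D (extE emb u P)) (shiftD_nonneg hD _) hne]
        rw [shift_extE_u, shift_res_extE emb u hinj hu]
        rw [max_add_add_left]

lemma strip_ext {PS : Finset (Finset α)} :
    ∀ (X : List (Finset β)), (∀ S ∈ X, S ∈ PS.image (extE emb u)) →
      ∃ Xin : List (Finset α), X = Xin.map (extE emb u) ∧ ∀ P ∈ Xin, P ∈ PS := by
  intro X
  induction X with
  | nil => exact fun _ => ⟨[], rfl, by simp⟩
  | cons S X' ih =>
      intro h
      obtain ⟨Xin', h1, h2⟩ := ih fun S hS => h S (List.mem_cons_of_mem _ hS)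
      obtain ⟨P, hP, hPe⟩ := Finset.mem_image.1 (h S (by simp))
      exact ⟨P :: Xin', by simp [h1, hPe.symm], by
        intro Q hQ
        rcases List.mem_cons.1 hQ with rfl | hQ
        · exact hP
        · exact h2 _ hQ⟩

include hinj hu in
lemma Lmin_ext {PS : Finset (Finset α)} (hPS : PS.Nonempty) (D : β → ℕ → ℝ) (hD : NonnegD D)
    (n : ℕ) (hn : 1 ≤ n) :
    Lmin (PS.image (extE emb u)) D n
      = D u n + Lmin PS (fun a y => D (emb a) y) n := by
  apply le_antisymm
  · obtain ⟨Zin, hZin, hZe⟩ := exists_Lmin hPS (fun a y => D (emb a) y) n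
    obtain ⟨hlen, hmem⟩ := mem_listProfiles.1 hZin
    have hne : Zin ≠ [] := by intro h; rw [h] at hlen; simp at hlen; omega
    have hZ : Zin.map (extE emb u) ∈ listProfiles (PS.image (extE emb u)) n :=
      mem_listProfiles.2 ⟨by simp [hlen], by
        intro S hS
        obtain ⟨P, hP, rfl⟩ := List.mem_map.1 hS
        exact Finset.mem_image_of_mem _ (hmem _ hP)⟩
    calc Lmin (PS.image (extE emb u)) D n ≤ worstL D (Zin.map (extE emb u)) := Lmin_le hZ
      _ = D u n + Lmin PS (fun a y => D (emb a) y) n := by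
          rw [ext_worst emb u hinj hu Zin D hD hne, hlen, hZe]
  · obtain ⟨Y, hY, hYe⟩ := exists_Lmin (hPS.image (extE emb u)) D n
    obtain ⟨hlen, hmem⟩ := mem_listProfiles.1 hY
    obtain ⟨Yin, rfl, hYin⟩ := strip_ext emb u Y hmem
    have hYlen : Yin.length = n := by simpa using hlen
    have hne : Yin ≠ [] := by
      intro h; rw [h] at hYlen; simp at hYlen; omega
    rw [hYe, ext_worst emb u hinj hu Yin D hD hne, hYlen]
    have : Yin ∈ listProfiles PS n := mem_listProfiles.2 ⟨hYlen, hYin⟩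
    exact add_le_add le_rfl (Lmin_le this)

end ExtPattern

end EPWork
namespace EPWork

section ParPattern

variable {α₁ α₂ β : Type} [DecidableEq α₁] [DecidableEq α₂] [DecidableEq β]
variable {e₁ : α₁ → β} {e₂ : α₂ → β}

lemma worst_map_image (h₁ : Function.Injective e₁) :
    ∀ (X : List (Finset α₁)) (D : β → ℕ → ℝ),
      worstL D (X.map fun P => P.image e₁) = worstL (fun a y => D (e₁ a) y) X := by
  intro X
  induction X with
  | nil => intro D; rfl
  | cons P X' ih =>
      intro D
      simp only [List.map_cons, worstL_cons]
      rw [pcost_image h₁ D P (fun a => congL_map_image h₁ X' a), ih, shift_res_self h₁]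

lemma par_decomp (h₁ : Function.Injective e₁) (h₂ : Function.Injective e₂)
    (hdisj : ∀ a b, e₁ a ≠ e₂ b)
    {PS₁ : Finset (Finset α₁)} {PS₂ : Finset (Finset α₂)} :
    ∀ (X : List (Finset β)),
      (∀ S ∈ X, S ∈ PS₁.image (fun P => P.image e₁) ∪ PS₂.image (fun P => P.image e₂)) →
      ∃ (Xl : List (Finset α₁)) (Xr : List (Finset α₂)),
        (∀ P ∈ Xl, P ∈ PS₁) ∧ (∀ P ∈ Xr, P ∈ PS₂) ∧
        Xl.length + Xr.length = X.length ∧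
        (∀ a, congL X (e₁ a) = congL Xl a) ∧ (∀ b, congL X (e₂ b) = congL Xr b) ∧
        (∀ D : β → ℕ → ℝ, worstL D X
          = max (worstL (fun a y => D (e₁ a) y) Xl) (worstL (fun b y => D (e₂ b) y) Xr)) := by
  intro X
  induction X with
  | nil =>
      intro _
      exact ⟨[], [], by simp, by simp, rfl, fun a => rfl, fun b => rfl,
        fun D => by simp [worstL]⟩
  | cons S X' ih =>
      intro hX
      obtain ⟨Xl, Xr, hXl, hXr, hlen, hca, hcb, hw⟩ :=
        ih fun S hS => hX S (List.mem_cons_of_mem _ hS)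
      rcases Finset.mem_union.1 (hX S (by simp)) with hS | hS
      · obtain ⟨P₁, hP₁, rfl⟩ := Finset.mem_image.1 hS
        refine ⟨P₁ :: Xl, Xr, ?_, hXr, by simp only [List.length_cons]; omega, ?_, ?_, ?_⟩
        · intro Q hQ
          rcases List.mem_cons.1 hQ with rfl | hQ
          · exact hP₁
          · exact hXl _ hQ
        · intro a
          rw [congL_cons, congL_cons, hca a]
          congr 1
          simp [Finset.mem_image, h₁.eq_iff]
        · intro b
          rw [congL_cons, hcb b, if_neg (by
            simp only [Finset.mem_image]
            rintro ⟨a, -, ha⟩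
            exact hdisj a b ha)]
          simp
        · intro D
          rw [worstL_cons, pcost_image h₁ D P₁ hca, hw (shiftD D (P₁.image e₁)),
            shift_res_self h₁, shift_res_other (fun b => by
              simp only [Finset.mem_image]
              rintro ⟨a, -, ha⟩
              exact hdisj a b ha), worstL_cons]
          exact (max_assoc _ _ _).symm
      · obtain ⟨P₂, hP₂, rfl⟩ := Finset.mem_image.1 hS
        refine ⟨Xl, P₂ :: Xr, hXl, ?_, by simp only [List.length_cons]; omega, ?_, ?_, ?_⟩
        · intro Q hQ
          rcases List.mem_cons.1 hQ with rfl | hQ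
          · exact hP₂
          · exact hXr _ hQ
        · intro a
          rw [congL_cons, hca a, if_neg (by
            simp only [Finset.mem_image]
            rintro ⟨b, -, hb⟩
            exact hdisj a b hb.symm)]
          simp
        · intro b
          rw [congL_cons, congL_cons, hcb b]
          congr 1
          simp [Finset.mem_image, h₂.eq_iff]
        · intro D
          rw [worstL_cons, pcost_image h₂ D P₂ hcb, hw (shiftD D (P₂.image e₂)),
            shift_res_self h₂, shift_res_other (fun a => by
              simp only [Finset.mem_image]
              rintro ⟨b, -, hb⟩
              exact hdisj a b hb.symm), worstL_cons]
          exact max_left_comm _ _ _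

lemma congL_combined_l (h₁ : Function.Injective e₁) (hdisj : ∀ a b, e₁ a ≠ e₂ b)
    (Xl : List (Finset α₁)) (Xr : List (Finset α₂)) (a : α₁) :
    congL ((Xl.map fun P => P.image e₁) ++ (Xr.map fun P => P.image e₂)) (e₁ a)
      = congL Xl a := by
  rw [congL_append, congL_map_image h₁, congL_map_image_ne (fun b => (hdisj a b).symm)]
  simp

lemma congL_combined_r (h₂ : Function.Injective e₂) (hdisj : ∀ a b, e₁ a ≠ e₂ b)
    (Xl : List (Finset α₁)) (Xr : List (Finset α₂)) (b : α₂) :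
    congL ((Xl.map fun P => P.image e₁) ++ (Xr.map fun P => P.image e₂)) (e₂ b)
      = congL Xr b := by
  rw [congL_append, congL_map_image h₂, congL_map_image_ne (fun a => hdisj a b)]
  simp

lemma par_combine (h₁ : Function.Injective e₁) (h₂ : Function.Injective e₂)
    (hdisj : ∀ a b, e₁ a ≠ e₂ b) :
    ∀ (Xl : List (Finset α₁)) (Xr : List (Finset α₂)) (D : β → ℕ → ℝ), NonnegD D →
      worstL D ((Xl.map fun P => P.image e₁) ++ (Xr.map fun P => P.image e₂))
        = max (worstL (fun a y => D (e₁ a) y) Xl) (worstL (fun b y => D (e₂ b) y) Xr) := by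
  intro Xl
  induction Xl with
  | nil =>
      intro Xr D hD
      rw [List.map_nil, List.nil_append, worst_map_image h₂]
      exact (max_eq_right (worstL_nonneg (fun b m => hD (e₂ b) m) Xr)).symm
  | cons P₁ Xl' ih =>
      intro Xr D hD
      simp only [List.map_cons, List.cons_append, worstL_cons]
      rw [pcost_image h₁ D P₁ (congL_combined_l h₁ hdisj Xl' Xr),
        ih Xr (shiftD D (P₁.image e₁)) (shiftD_nonneg hD _),
        shift_res_self h₁, shift_res_other (fun b => by
          simp only [Finset.mem_image]
          rintro ⟨a, -, ha⟩
          exact hdisj a b ha)]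
      exact (max_assoc _ _ _).symm

end ParPattern

end EPWork
namespace EPWork

lemma paths_parallel (t₁ t₂ : EPTree) :
    (EPTree.parallel t₁ t₂).paths
      = t₁.paths.image (fun P => P.image Sum.inl) ∪ t₂.paths.image (fun P => P.image Sum.inr) :=
  rfl

lemma paths_extHead (t : EPTree) :
    (EPTree.extHead t).paths = t.paths.image (extE Sum.inr (Sum.inl ())) := rfl

lemma paths_extTail (t : EPTree) :
    (EPTree.extTail t).paths = t.paths.image (extE Sum.inl (Sum.inr ())) := rfl

lemma paths_edge : EPTree.edge.paths = {(Finset.univ : Finset Unit)} := rfl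

lemma paths_nonempty (t : EPTree) : t.paths.Nonempty := by
  induction t with
  | edge => exact ⟨_, by rw [paths_edge]; exact Finset.mem_singleton_self _⟩
  | parallel t₁ t₂ ih₁ ih₂ =>
      obtain ⟨P, hP⟩ := ih₁
      exact ⟨P.image Sum.inl, by
        rw [paths_parallel]
        exact Finset.mem_union_left _ (Finset.mem_image_of_mem _ hP)⟩
  | extHead t ih =>
      obtain ⟨P, hP⟩ := ih
      exact ⟨_, by rw [paths_extHead]; exact Finset.mem_image_of_mem _ hP⟩
  | extTail t ih =>
      obtain ⟨P, hP⟩ := ih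
      exact ⟨_, by rw [paths_extTail]; exact Finset.mem_image_of_mem _ hP⟩

/-- The `MaxHead` property of a path system: if `P` is a cheapest path at load 1 and the
(nonempty) profile `T` joins afterwards, some member of `T` pays at least as much as the
player on `P`. -/
def MaxHeadProp {α : Type} [DecidableEq α] (PS : Finset (Finset α)) : Prop :=
  ∀ d : α → ℕ → ℝ, MonoD d → NonnegD d → ∀ P ∈ PS,
    (∀ R ∈ PS, pcost d P [] ≤ pcost d R []) →
    ∀ T : List (Finset α), (∀ S ∈ T, S ∈ PS) → T ≠ [] →
      pcost d P T ≤ worstL (shiftD d P) T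

section Aux

variable {α₁ α₂ β : Type} [DecidableEq α₁] [DecidableEq α₂] [DecidableEq β]

lemma pcost_image_nil {α β : Type} [DecidableEq α] [DecidableEq β] {f : α → β}
    (hf : Function.Injective f) (D : β → ℕ → ℝ) (P : Finset α) :
    pcost D (P.image f) [] = pcost (fun a y => D (f a) y) P [] :=
  pcost_image hf D P (X := []) (X' := []) (fun _ => rfl)

lemma maxHead_par_aux {e₁ : α₁ → β} {e₂ : α₂ → β}
    (h₁ : Function.Injective e₁) (h₂ : Function.Injective e₂)
    (hdisj : ∀ a b, e₁ a ≠ e₂ b)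
    {PS₁ : Finset (Finset α₁)} {PS₂ : Finset (Finset α₂)}
    (IH₁ : MaxHeadProp PS₁)
    (D : β → ℕ → ℝ) (hm : MonoD D) (hnn : NonnegD D)
    (P₁ : Finset α₁) (hP₁ : P₁ ∈ PS₁)
    (hmin : ∀ R ∈ PS₁.image (fun P => P.image e₁) ∪ PS₂.image (fun P => P.image e₂),
      pcost D (P₁.image e₁) [] ≤ pcost D R [])
    (T : List (Finset β))
    (hT : ∀ S ∈ T, S ∈ PS₁.image (fun P => P.image e₁) ∪ PS₂.image (fun P => P.image e₂))
    (hTne : T ≠ []) :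
    pcost D (P₁.image e₁) T ≤ worstL (shiftD D (P₁.image e₁)) T := by
  obtain ⟨Xl, Xr, hXl, hXr, hlen, hca, hcb, hw⟩ := par_decomp h₁ h₂ hdisj T hT
  rw [pcost_image h₁ D P₁ hca]
  rw [hw (shiftD D (P₁.image e₁)), shift_res_self h₁, shift_res_other (fun b => by
    simp only [Finset.mem_image]
    rintro ⟨a, -, ha⟩
    exact hdisj a b ha)]
  rcases eq_or_ne Xl [] with rfl | hXlne
  · cases Xr with
    | nil =>
        exfalso
        apply hTne
        rw [← List.length_eq_zero_iff]
        simp at hlen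
        omega
    | cons R₂ Xr' =>
        have h1 : pcost (fun a y => D (e₁ a) y) P₁ ([] : List (Finset α₁))
            = pcost D (P₁.image e₁) [] := (pcost_image_nil h₁ D P₁).symm
        have h2 : pcost D (P₁.image e₁) [] ≤ pcost D (R₂.image e₂) [] :=
          hmin _ (Finset.mem_union_right _ (Finset.mem_image_of_mem _ (hXr R₂ (by simp))))
        have h3 : pcost D (R₂.image e₂) ([] : List (Finset β))
            = pcost (fun b y => D (e₂ b) y) R₂ [] := pcost_image_nil h₂ D R₂
        have h4 : pcost (fun b y => D (e₂ b) y) R₂ [] ≤ pcost (fun b y => D (e₂ b) y) R₂ Xr' :=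
          pcost_mono_profile (fun b => hm (e₂ b)) R₂ (fun r => Nat.zero_le _)
        calc pcost (fun a y => D (e₁ a) y) P₁ [] ≤ pcost (fun b y => D (e₂ b) y) R₂ Xr' := by
              rw [h1]; exact le_trans h2 (le_of_eq h3 |>.trans h4)
          _ ≤ worstL (fun b y => D (e₂ b) y) (R₂ :: Xr') := le_max_left _ _
          _ ≤ _ := le_max_right _ _
  · refine le_trans (IH₁ (fun a y => D (e₁ a) y) (fun a => hm (e₁ a)) (fun a m => hnn (e₁ a) m)
      P₁ hP₁ ?_ Xl hXl hXlne) (le_max_left _ _)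
    intro R hR
    rw [← pcost_image_nil h₁ D P₁, ← pcost_image_nil h₁ D R]
    exact hmin _ (Finset.mem_union_left _ (Finset.mem_image_of_mem _ hR))

lemma maxHead_ext_aux {emb : α₁ → β} {u : β}
    (hinj : Function.Injective emb) (hu : ∀ a, emb a ≠ u)
    {PS : Finset (Finset α₁)} (IH : MaxHeadProp PS)
    (D : β → ℕ → ℝ) (hm : MonoD D) (hnn : NonnegD D)
    (P' : Finset α₁) (hP' : P' ∈ PS)
    (hmin : ∀ R ∈ PS.image (extE emb u), pcost D (extE emb u P') [] ≤ pcost D R [])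
    (T : List (Finset β)) (hT : ∀ S ∈ T, S ∈ PS.image (extE emb u)) (hTne : T ≠ []) :
    pcost D (extE emb u P') T ≤ worstL (shiftD D (extE emb u P')) T := by
  obtain ⟨Tin, rfl, hTin⟩ := strip_ext emb u T hT
  have hTinne : Tin ≠ [] := by
    intro h; subst h; exact hTne rfl
  rw [pcost_extE emb u hinj hu D P' (congL_map_extE_u emb u Tin)
    (congL_map_extE_emb emb u hinj hu Tin)]
  rw [ext_worst emb u hinj hu Tin (shiftD D (extE emb u P')) (shiftD_nonneg hnn _) hTinne,
    shift_extE_u, shift_res_extE emb u hinj hu]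
  apply add_le_add le_rfl
  refine IH (fun a y => D (emb a) y) (fun a => hm (emb a)) (fun a m => hnn (emb a) m)
    P' hP' ?_ Tin hTin hTinne
  intro R hR
  have := hmin (extE emb u R) (Finset.mem_image_of_mem _ hR)
  rw [pcost_extE emb u hinj hu D P' (X := []) (X' := []) (by simp [congL]) (fun a => rfl),
    pcost_extE emb u hinj hu D R (X := []) (X' := []) (by simp [congL]) (fun a => rfl)] at this
  exact le_of_add_le_add_left this

end Aux

theorem maxHead (t : EPTree) : MaxHeadProp t.paths := by
  induction t with
  | edge =>
      intro d hm hnn P hP hmin T hT hTne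
      rw [paths_edge] at hP
      replace hP := Finset.mem_singleton.1 hP
      subst hP
      cases T with
      | nil => exact absurd rfl hTne
      | cons R T' =>
          have hR : R = Finset.univ := by
            have := hT R (by simp)
            rw [paths_edge] at this
            exact Finset.mem_singleton.1 this
          subst hR
          refine le_trans (le_of_eq ?_) (le_max_left _ _)
          unfold pcost shiftD
          refine Finset.sum_congr rfl fun r _ => ?_
          rw [congL_cons, if_pos (Finset.mem_univ r)]
          split_ifs with h
          · rfl
          · exact absurd (Finset.mem_univ _) h
  | parallel t₁ t₂ ih₁ ih₂ =>
      intro d hm hnn P hP hmin T hT hTne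
      rw [paths_parallel] at hP hmin hT
      rcases Finset.mem_union.1 hP with hP' | hP'
      · obtain ⟨P₁, hP₁, rfl⟩ := Finset.mem_image.1 hP'
        exact maxHead_par_aux Sum.inl_injective Sum.inr_injective (fun a b => Sum.inl_ne_inr)
          ih₁ d hm hnn P₁ hP₁ hmin T hT hTne
      · obtain ⟨P₂, hP₂, rfl⟩ := Finset.mem_image.1 hP'
        rw [Finset.union_comm] at hmin hT
        exact maxHead_par_aux Sum.inr_injective Sum.inl_injective (fun a b => Sum.inr_ne_inl)
          ih₂ d hm hnn P₂ hP₂ hmin T hT hTne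
  | extHead t ih =>
      intro d hm hnn P hP hmin T hT hTne
      rw [paths_extHead] at hP hmin hT
      obtain ⟨P', hP', rfl⟩ := Finset.mem_image.1 hP
      exact maxHead_ext_aux Sum.inr_injective (fun a => Sum.inr_ne_inl) ih d hm hnn
        P' hP' hmin T hT hTne
  | extTail t ih =>
      intro d hm hnn P hP hmin T hT hTne
      rw [paths_extTail] at hP hmin hT
      obtain ⟨P', hP', rfl⟩ := Finset.mem_image.1 hP
      exact maxHead_ext_aux Sum.inl_injective (fun a => Sum.inl_ne_inr) ih d hm hnn
        P' hP' hmin T hT hTne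

end EPWork
namespace EPWork

lemma worst_univ_profile {α : Type} [DecidableEq α] [Fintype α] [Unique α] :
    ∀ (X : List (Finset α)) (d : α → ℕ → ℝ), NonnegD d → (∀ S ∈ X, S = Finset.univ) →
      worstL d X = if X = [] then 0 else d default X.length := by
  intro X
  induction X with
  | nil => intro d _ _; simp [worstL]
  | cons S X' ih =>
      intro d hnn hmem
      have hS : S = Finset.univ := hmem S (by simp)
      subst hS
      have hcong : congL X' (default : α) = X'.length := by
        rw [congL, List.countP_eq_length]
        intro P hP
        rw [hmem P (List.mem_cons_of_mem _ hP)]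
        simp
      have hpc : pcost d Finset.univ X' = d default (X'.length + 1) := by
        rw [pcost, Finset.univ_unique, Finset.sum_singleton, hcong]
      rw [worstL_cons, hpc, ih (shiftD d Finset.univ) (shiftD_nonneg hnn _)
        (fun S hS => hmem S (List.mem_cons_of_mem _ hS))]
      rcases eq_or_ne X' [] with rfl | hne
      · rw [if_pos rfl, if_neg (List.cons_ne_nil _ _)]
        exact max_eq_left (hnn _ _)
      · rw [if_neg hne, if_neg (by simp : ¬(Finset.univ :: X' : List (Finset α)) = [])]
        have : shiftD d Finset.univ default X'.length = d default (X'.length + 1) := by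
          simp [shiftD]
        rw [this, List.length_cons, max_self]

/-- The key exchange property: adding a fixed path `P` can only raise the optimal
egalitarian social cost by at most rising from `n` to `n+1` players. -/
def ExclProp {α : Type} [DecidableEq α] (PS : Finset (Finset α)) : Prop :=
  ∀ d : α → ℕ → ℝ, MonoD d → NonnegD d → ∀ P ∈ PS, ∀ n : ℕ,
    Lmin PS (shiftD d P) n ≤ Lmin PS d (n+1)

section ExclAux

variable {α₁ α₂ β : Type} [DecidableEq α₁] [DecidableEq α₂] [DecidableEq β]

lemma excl_ext_aux {emb : α₁ → β} {u : β}
    (hinj : Function.Injective emb) (hu : ∀ a, emb a ≠ u)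
    {PS : Finset (Finset α₁)} (hPS : PS.Nonempty) (IH : ExclProp PS) :
    ExclProp (PS.image (extE emb u)) := by
  intro d hm hnn P hP n
  obtain ⟨P', hP', rfl⟩ := Finset.mem_image.1 hP
  cases n with
  | zero => rw [Lmin_zero]; exact Lmin_nonneg (hPS.image _) hnn 1
  | succ k =>
      rw [Lmin_ext emb u hinj hu hPS (shiftD d (extE emb u P')) (shiftD_nonneg hnn _)
        (k+1) (by omega)]
      rw [Lmin_ext emb u hinj hu hPS d hnn (k+2) (by omega)]
      rw [shift_extE_u, shift_res_extE emb u hinj hu]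
      exact add_le_add (hm u (by omega))
        (IH (fun a y => d (emb a) y) (fun a => hm (emb a)) (fun a m => hnn (emb a) m)
          P' hP' (k+1))

lemma excl_par_aux {e₁ : α₁ → β} {e₂ : α₂ → β}
    (h₁ : Function.Injective e₁) (h₂ : Function.Injective e₂)
    (hdisj : ∀ a b, e₁ a ≠ e₂ b)
    {PS₁ : Finset (Finset α₁)} {PS₂ : Finset (Finset α₂)}
    (hPS₁ : PS₁.Nonempty) (hPS₂ : PS₂.Nonempty) (IH₁ : ExclProp PS₁)
    (D : β → ℕ → ℝ) (hm : MonoD D) (hnn : NonnegD D)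
    (P₁ : Finset α₁) (hP₁ : P₁ ∈ PS₁) (n : ℕ) :
    Lmin (PS₁.image (fun P => P.image e₁) ∪ PS₂.image (fun P => P.image e₂))
        (shiftD D (P₁.image e₁)) n
      ≤ Lmin (PS₁.image (fun P => P.image e₁) ∪ PS₂.image (fun P => P.image e₂)) D (n+1) := by
  set PS := PS₁.image (fun P => P.image e₁) ∪ PS₂.image (fun P => P.image e₂) with hPSdef
  have hPS : PS.Nonempty := Finset.Nonempty.inl (hPS₁.image _)
  obtain ⟨Y, hY, hYe⟩ := exists_Lmin hPS D (n+1)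
  obtain ⟨hYlen, hYmem⟩ := mem_listProfiles.1 hY
  obtain ⟨Yl, Yr, hYl, hYr, hlen, hca, hcb, hwY⟩ := par_decomp h₁ h₂ hdisj Y hYmem
  have hmonoL : MonoD (fun a y => D (e₁ a) y) := fun a => hm (e₁ a)
  have hmonoR : MonoD (fun b y => D (e₂ b) y) := fun b => hm (e₂ b)
  have hnnL : NonnegD (fun a y => D (e₁ a) y) := fun a m => hnn (e₁ a) m
  have hnnR : NonnegD (fun b y => D (e₂ b) y) := fun b m => hnn (e₂ b) m
  rcases Nat.eq_zero_or_pos Yl.length with h0 | hpos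
  · -- all of the optimum is on the right side
    have hYlnil : Yl = [] := List.length_eq_zero_iff.1 h0
    subst hYlnil
    obtain ⟨Zr, hZr, hZre⟩ := exists_Lmin hPS₂ (fun b y => D (e₂ b) y) n
    obtain ⟨hZrlen, hZrmem⟩ := mem_listProfiles.1 hZr
    have hZmem : Zr.map (fun P => P.image e₂) ∈ listProfiles PS n :=
      mem_listProfiles.2 ⟨by simpa using hZrlen, by
        intro S hS
        obtain ⟨Q, hQ, rfl⟩ := List.mem_map.1 hS
        exact Finset.mem_union_right _ (Finset.mem_image_of_mem _ (hZrmem _ hQ))⟩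
    have hcomb := par_combine h₁ h₂ hdisj [] Zr (shiftD D (P₁.image e₁)) (shiftD_nonneg hnn _)
    rw [List.map_nil, List.nil_append] at hcomb
    have hYrmem : Yr ∈ listProfiles PS₂ (n+1) :=
      mem_listProfiles.2 ⟨by omega, hYr⟩
    calc Lmin PS (shiftD D (P₁.image e₁)) n
        ≤ worstL (shiftD D (P₁.image e₁)) (Zr.map (fun P => P.image e₂)) := Lmin_le hZmem
      _ = max (worstL (fun a y => shiftD D (P₁.image e₁) (e₁ a) y) [])
            (worstL (fun b y => shiftD D (P₁.image e₁) (e₂ b) y) Zr) := hcomb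
      _ = worstL (fun b y => D (e₂ b) y) Zr := by
            rw [shift_res_other (f := e₂) (S := P₁.image e₁) (fun b => by
              simp only [Finset.mem_image]
              rintro ⟨a, -, ha⟩
              exact hdisj a b ha) D]
            exact max_eq_right (worstL_nonneg hnnR Zr)
      _ = Lmin PS₂ (fun b y => D (e₂ b) y) n := hZre.symm
      _ ≤ Lmin PS₂ (fun b y => D (e₂ b) y) (n+1) := Lmin_mono hPS₂ hmonoR n
      _ ≤ worstL (fun b y => D (e₂ b) y) Yr := Lmin_le hYrmem
      _ ≤ worstL D Y := by
            rw [hwY D]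
            exact le_max_right _ _
      _ = Lmin PS D (n+1) := hYe.symm
  · obtain ⟨k, hk⟩ : ∃ k, Yl.length = k + 1 := ⟨Yl.length - 1, by omega⟩
    obtain ⟨Zl, hZl, hZle⟩ := exists_Lmin hPS₁ (shiftD (fun a y => D (e₁ a) y) P₁) k
    obtain ⟨Zr, hZr, hZre⟩ := exists_Lmin hPS₂ (fun b y => D (e₂ b) y) Yr.length
    obtain ⟨hZllen, hZlmem⟩ := mem_listProfiles.1 hZl
    obtain ⟨hZrlen, hZrmem⟩ := mem_listProfiles.1 hZr
    have hZmem : (Zl.map fun P => P.image e₁) ++ (Zr.map fun P => P.image e₂)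
        ∈ listProfiles PS n :=
      mem_listProfiles.2 ⟨by simp only [List.length_append, List.length_map]; omega, by
        intro S hS
        rcases List.mem_append.1 hS with hS | hS
        · obtain ⟨Q, hQ, rfl⟩ := List.mem_map.1 hS
          exact Finset.mem_union_left _ (Finset.mem_image_of_mem _ (hZlmem _ hQ))
        · obtain ⟨Q, hQ, rfl⟩ := List.mem_map.1 hS
          exact Finset.mem_union_right _ (Finset.mem_image_of_mem _ (hZrmem _ hQ))⟩
    have hYlmem : Yl ∈ listProfiles PS₁ (k+1) := mem_listProfiles.2 ⟨hk, hYl⟩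
    have hYrmem : Yr ∈ listProfiles PS₂ Yr.length := mem_listProfiles.2 ⟨rfl, hYr⟩
    calc Lmin PS (shiftD D (P₁.image e₁)) n
        ≤ worstL (shiftD D (P₁.image e₁))
            ((Zl.map fun P => P.image e₁) ++ (Zr.map fun P => P.image e₂)) := Lmin_le hZmem
      _ = max (worstL (shiftD (fun a y => D (e₁ a) y) P₁) Zl)
            (worstL (fun b y => D (e₂ b) y) Zr) := by
            rw [par_combine h₁ h₂ hdisj Zl Zr (shiftD D (P₁.image e₁)) (shiftD_nonneg hnn _),
              shift_res_self h₁, shift_res_other (fun b => by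
                simp only [Finset.mem_image]
                rintro ⟨a, -, ha⟩
                exact hdisj a b ha)]
      _ ≤ max (worstL (fun a y => D (e₁ a) y) Yl) (worstL (fun b y => D (e₂ b) y) Yr) := by
            apply max_le_max
            · rw [← hZle]
              exact le_trans (IH₁ _ hmonoL hnnL P₁ hP₁ k) (Lmin_le hYlmem)
            · rw [← hZre]
              exact Lmin_le hYrmem
      _ = worstL D Y := (hwY D).symm
      _ = Lmin PS D (n+1) := hYe.symm

end ExclAux

theorem excl (t : EPTree) : ExclProp t.paths := by
  induction t with
  | edge =>
      intro d hm hnn P hP n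
      cases n with
      | zero => rw [Lmin_zero]; exact Lmin_nonneg (paths_nonempty _) hnn 1
      | succ k =>
          letI : Unique (EPTree.edge.Arc) := ⟨⟨()⟩, fun a => rfl⟩
          rw [paths_edge] at hP
          replace hP := Finset.mem_singleton.1 hP
          subst hP
          have hPS : (EPTree.edge.paths).Nonempty := paths_nonempty _
          obtain ⟨Y, hY, hYe⟩ := exists_Lmin hPS d (k+2)
          obtain ⟨hYlen, hYmem⟩ := mem_listProfiles.1 hY
          obtain ⟨Z, hZ⟩ := listProfiles_nonempty hPS (k+1)
          obtain ⟨hZlen, hZmem⟩ := mem_listProfiles.1 hZ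
          have hYuniv : ∀ S ∈ Y, S = Finset.univ := fun S hS => by
            have := hYmem S hS
            rw [paths_edge] at this
            exact Finset.mem_singleton.1 this
          have hZuniv : ∀ S ∈ Z, S = Finset.univ := fun S hS => by
            have := hZmem S hS
            rw [paths_edge] at this
            exact Finset.mem_singleton.1 this
          have hYne : Y ≠ [] := by intro h; rw [h] at hYlen; simp at hYlen
          have hZne : Z ≠ [] := by intro h; rw [h] at hZlen; simp at hZlen
          calc Lmin EPTree.edge.paths (shiftD d Finset.univ) (k+1)
              ≤ worstL (shiftD d Finset.univ) Z := Lmin_le hZ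
            _ = d default (k+2) := by
                rw [worst_univ_profile Z _ (shiftD_nonneg hnn _) hZuniv, if_neg hZne, hZlen]
                simp [shiftD]
            _ = worstL d Y := by
                rw [worst_univ_profile Y d hnn hYuniv, if_neg hYne, hYlen]
            _ = Lmin EPTree.edge.paths d (k+2) := hYe.symm
  | parallel t₁ t₂ ih₁ ih₂ =>
      intro d hm hnn P hP n
      rw [paths_parallel] at hP ⊢
      rcases Finset.mem_union.1 hP with hP' | hP'
      · obtain ⟨P₁, hP₁, rfl⟩ := Finset.mem_image.1 hP'
        exact excl_par_aux Sum.inl_injective Sum.inr_injective (fun a b => Sum.inl_ne_inr)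
          (paths_nonempty t₁) (paths_nonempty t₂) ih₁ d hm hnn P₁ hP₁ n
      · obtain ⟨P₂, hP₂, rfl⟩ := Finset.mem_image.1 hP'
        rw [Finset.union_comm]
        exact excl_par_aux Sum.inr_injective Sum.inl_injective (fun a b => Sum.inr_ne_inl)
          (paths_nonempty t₂) (paths_nonempty t₁) ih₂ d hm hnn P₂ hP₂ n
  | extHead t ih =>
      intro d hm hnn P hP n
      rw [paths_extHead] at hP ⊢
      exact excl_ext_aux Sum.inr_injective (fun a => Sum.inr_ne_inl)
        (paths_nonempty t) ih d hm hnn P hP n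
  | extTail t ih =>
      intro d hm hnn P hP n
      rw [paths_extTail] at hP ⊢
      exact excl_ext_aux Sum.inl_injective (fun a => Sum.inl_ne_inr)
        (paths_nonempty t) ih d hm hnn P hP n

end EPWork
namespace EPWork

variable {α : Type} [DecidableEq α]

/-- Subgame-perfect outcomes, list version. -/
def SPOL (PS : Finset (Finset α)) : ℕ → (α → ℕ → ℝ) → List (Finset α) → Prop
  | 0, _, X => X = []
  | n+1, d, X => ∃ (P : Finset α) (T : List (Finset α)) (f : Finset α → List (Finset α)),
      X = P :: T ∧ P ∈ PS ∧ (∀ Q ∈ PS, SPOL PS n (shiftD d Q) (f Q)) ∧ f P = T ∧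
      ∀ Q ∈ PS, pcost d P T ≤ pcost d Q (f Q)

/-- Greedy (1-lookahead) outcomes, list version. -/
def GreedyL (PS : Finset (Finset α)) : ℕ → (α → ℕ → ℝ) → List (Finset α) → Prop
  | 0, _, X => X = []
  | n+1, d, X => ∃ (P : Finset α) (T : List (Finset α)),
      X = P :: T ∧ P ∈ PS ∧ (∀ Q ∈ PS, pcost d P [] ≤ pcost d Q []) ∧
      GreedyL PS n (shiftD d P) T

lemma spoL_mem {PS : Finset (Finset α)} :
    ∀ {n : ℕ} {d : α → ℕ → ℝ} {X : List (Finset α)},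
      SPOL PS n d X → X ∈ listProfiles PS n := by
  intro n
  induction n with
  | zero => intro d X hX; rw [hX]; simp [listProfiles]
  | succ n ih =>
      intro d X hX
      obtain ⟨P, T, f, rfl, hP, hf, hfP, -⟩ := hX
      have hT := ih (hfP ▸ hf P hP)
      obtain ⟨hlen, hmem⟩ := mem_listProfiles.1 hT
      refine mem_listProfiles.2 ⟨by simp [hlen], ?_⟩
      intro S hS
      rcases List.mem_cons.1 hS with rfl | hS
      · exact hP
      · exact hmem _ hS

lemma greedyL_mem {PS : Finset (Finset α)} :
    ∀ {n : ℕ} {d : α → ℕ → ℝ} {X : List (Finset α)},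
      GreedyL PS n d X → X ∈ listProfiles PS n := by
  intro n
  induction n with
  | zero => intro d X hX; rw [hX]; simp [listProfiles]
  | succ n ih =>
      intro d X hX
      obtain ⟨P, T, rfl, hP, -, hT⟩ := hX
      obtain ⟨hlen, hmem⟩ := mem_listProfiles.1 (ih hT)
      refine mem_listProfiles.2 ⟨by simp [hlen], ?_⟩
      intro S hS
      rcases List.mem_cons.1 hS with rfl | hS
      · exact hP
      · exact hmem _ hS

/-- One-player bound: a minimiser of the load-1 cost is below the optimal worst cost. -/
lemma argmin_le_Lmin_one {PS : Finset (Finset α)} (hPS : PS.Nonempty)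
    {d : α → ℕ → ℝ} (hnn : NonnegD d) {Q : Finset α}
    (hQmin : ∀ R ∈ PS, pcost d Q [] ≤ pcost d R []) :
    pcost d Q [] ≤ Lmin PS d 1 := by
  apply le_Lmin hPS
  intro X hX
  obtain ⟨hlen, hmem⟩ := mem_listProfiles.1 hX
  cases X with
  | nil => simp at hlen
  | cons R X' =>
      have : X' = [] := by simpa using hlen
      subst this
      exact le_trans (hQmin R (hmem R (by simp))) (le_max_left _ _)

theorem spoL_worst (t : EPTree) :
    ∀ (n : ℕ) (d : t.Arc → ℕ → ℝ), MonoD d → NonnegD d →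
      ∀ X, SPOL t.paths n d X → worstL d X = Lmin t.paths d n := by
  intro n
  induction n with
  | zero =>
      intro d _ _ X hX
      rw [hX, Lmin_zero]
      rfl
  | succ n ih =>
      intro d hm hnn X hX
      have hXmem := spoL_mem hX
      obtain ⟨P, T, f, rfl, hP, hf, hfP, hopt⟩ := hX
      have hT : SPOL t.paths n (shiftD d P) T := hfP ▸ hf P hP
      have ihT := ih (shiftD d P) (shiftD_mono hm P) (shiftD_nonneg hnn P) T hT
      apply le_antisymm
      · rw [worstL_cons]
        apply max_le
        · obtain ⟨Q, hQ, hQmin⟩ :=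
            Finset.exists_min_image t.paths (fun Q => pcost d Q []) (paths_nonempty t)
          have h1 : pcost d P T ≤ pcost d Q (f Q) := hopt Q hQ
          have hfQ : SPOL t.paths n (shiftD d Q) (f Q) := hf Q hQ
          cases n with
          | zero =>
              have hfQnil : f Q = [] := hfQ
              rw [hfQnil] at h1
              exact le_trans h1 (argmin_le_Lmin_one (paths_nonempty t) hnn hQmin)
          | succ m =>
              obtain ⟨hflen, hfmem⟩ := mem_listProfiles.1 (spoL_mem hfQ)
              have hfQne : f Q ≠ [] := by
                intro h; rw [h] at hflen; simp at hflen
              have h2 := maxHead t d hm hnn Q hQ hQmin (f Q) hfmem hfQne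
              have h3 : worstL (shiftD d Q) (f Q) = Lmin t.paths (shiftD d Q) (m+1) :=
                ih _ (shiftD_mono hm Q) (shiftD_nonneg hnn Q) _ hfQ
              exact le_trans h1 (le_trans h2 (le_trans (le_of_eq h3)
                (excl t d hm hnn Q hQ (m+1))))
        · rw [ihT]
          exact excl t d hm hnn P hP n
      · exact Lmin_le hXmem

theorem greedyL_worst (t : EPTree) :
    ∀ (n : ℕ) (d : t.Arc → ℕ → ℝ), MonoD d → NonnegD d →
      ∀ X, GreedyL t.paths n d X → worstL d X = Lmin t.paths d n := by
  intro n
  induction n with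
  | zero =>
      intro d _ _ X hX
      rw [hX, Lmin_zero]
      rfl
  | succ n ih =>
      intro d hm hnn X hX
      have hXmem := greedyL_mem hX
      obtain ⟨P, T, rfl, hP, hmin, hT⟩ := hX
      have ihT := ih (shiftD d P) (shiftD_mono hm P) (shiftD_nonneg hnn P) T hT
      apply le_antisymm
      · rw [worstL_cons]
        apply max_le
        · cases n with
          | zero =>
              have hTnil : T = [] := hT
              rw [hTnil]
              exact argmin_le_Lmin_one (paths_nonempty t) hnn hmin
          | succ m =>
              obtain ⟨hTlen, hTmem⟩ := mem_listProfiles.1 (greedyL_mem hT)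
              have hTne : T ≠ [] := by
                intro h; rw [h] at hTlen; simp at hTlen
              have h2 := maxHead t d hm hnn P hP hmin T hTmem hTne
              exact le_trans h2 (le_trans (le_of_eq ihT) (excl t d hm hnn P hP (m+1)))
        · rw [ihT]
          exact excl t d hm hnn P hP n
      · exact Lmin_le hXmem

end EPWork
namespace EPWork

variable {R : Type} [DecidableEq R] [Fintype R]

lemma card_filter_eq_congL :
    ∀ {n : ℕ} (A : Fin n → Finset R) (r : R),
      (Finset.univ.filter fun i => r ∈ A i).card = congL (List.ofFn A) r := by
  intro n
  induction n with
  | zero => intro A r; simp [congL]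
  | succ n ih =>
      intro A r
      rw [Finset.card_filter, Fin.sum_univ_succ, ← Finset.card_filter,
        ih (fun i => A i.succ), List.ofFn_succ, congL_cons]
      by_cases h : r ∈ A 0 <;> simp [h] <;> omega

lemma congestion_eq {n : ℕ} (G : CGame R n) (A : Fin n → Finset R) (r : R) :
    G.congestion A r = congL (List.ofFn A) r :=
  card_filter_eq_congL A r

variable (t : EPTree)

lemma cost_zero {n : ℕ} (d : t.Arc → ℕ → ℝ) (A : Fin (n+1) → Finset t.Arc) :
    (SNCGep t d (n+1)).cost A 0 = pcost d (A 0) (List.ofFn (Fin.tail A)) := by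
  unfold CGame.cost pcost
  refine Finset.sum_congr rfl fun r hr => ?_
  rw [congestion_eq, List.ofFn_succ, congL_cons, if_pos hr]
  rfl

lemma cost_cons_zero {n : ℕ} (d : t.Arc → ℕ → ℝ) (a : Finset t.Arc)
    (T : Fin n → Finset t.Arc) :
    (SNCGep t d (n+1)).cost (Fin.cons a T) 0 = pcost d a (List.ofFn T) := by
  rw [cost_zero]
  simp [Fin.tail_cons]

lemma cost_succ {n : ℕ} (d : t.Arc → ℕ → ℝ) (A : Fin (n+1) → Finset t.Arc) (i : Fin n) :
    (SNCGep t d (n+1)).cost A i.succ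
      = (SNCGep t (shiftD d (A 0)) n).cost (Fin.tail A) i := by
  unfold CGame.cost
  refine Finset.sum_congr rfl fun r hr => ?_
  rw [congestion_eq, congestion_eq, List.ofFn_succ, congL_cons]
  rfl

lemma cost_nonneg {n : ℕ} (d : t.Arc → ℕ → ℝ) (hnn : NonnegD d)
    (A : Fin n → Finset t.Arc) (i : Fin n) : 0 ≤ (SNCGep t d n).cost A i :=
  Finset.sum_nonneg fun r _ => hnn r _

lemma worstCost_set {n : ℕ} (G : CGame R n) (A : Fin n → Finset R) :
    {y | ∃ i, y = G.cost A i} = Set.range (G.cost A) := by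
  ext y
  simp [Set.range, eq_comm]

lemma worstCost_zero (G : CGame R 0) (A : Fin 0 → Finset R) : G.worstCost A = 0 := by
  unfold CGame.worstCost
  rw [show {y | ∃ i : Fin 0, y = G.cost A i} = ∅ from by
    ext y; simp]
  exact Real.sSup_empty

lemma worstCost_succ {n : ℕ} (d : t.Arc → ℕ → ℝ) (hnn : NonnegD d)
    (A : Fin (n+1) → Finset t.Arc) :
    (SNCGep t d (n+1)).worstCost A
      = max ((SNCGep t d (n+1)).cost A 0)
          ((SNCGep t (shiftD d (A 0)) n).worstCost (Fin.tail A)) := by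
  unfold CGame.worstCost
  rw [worstCost_set]
  have htail : Fin.tail ((SNCGep t d (n+1)).cost A)
      = (SNCGep t (shiftD d (A 0)) n).cost (Fin.tail A) := by
    funext i
    exact cost_succ t d A i
  conv_lhs => rw [← Fin.cons_self_tail ((SNCGep t d (n+1)).cost A)]
  rw [Fin.range_cons, htail]
  cases n with
  | zero =>
      have h1 : Set.range ((SNCGep t (shiftD d (A 0)) 0).cost (Fin.tail A)) = ∅ := by
        ext y; simp
      have h2 : {y | ∃ i : Fin 0, y = (SNCGep t (shiftD d (A 0)) 0).cost (Fin.tail A) i}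
          = (∅ : Set ℝ) := by ext y; simp
      rw [h1, h2, Real.sSup_empty, insert_empty_eq, csSup_singleton,
        max_eq_left (cost_nonneg t d hnn A 0)]
  | succ m =>
      rw [csSup_insert (Set.finite_range _).bddAbove (Set.range_nonempty _)]
      rw [worstCost_set]

lemma worstCost_eq : ∀ (n : ℕ) (d : t.Arc → ℕ → ℝ), NonnegD d →
    ∀ (A : Fin n → Finset t.Arc),
      (SNCGep t d n).worstCost A = worstL d (List.ofFn A) := by
  intro n
  induction n with
  | zero => intro d _ A; rw [worstCost_zero]; rfl
  | succ n ih =>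
      intro d hnn A
      rw [worstCost_succ t d hnn A, cost_zero,
        ih (shiftD d (A 0)) (shiftD_nonneg hnn _) (Fin.tail A), List.ofFn_succ, worstL_cons]
      rfl

lemma subgame_eq {n : ℕ} (d : t.Arc → ℕ → ℝ) (a : Finset t.Arc) :
    (SNCGep t d (n+1)).subgame a = SNCGep t (shiftD d a) n := rfl

lemma isSPO_spoL : ∀ (n : ℕ) (d : t.Arc → ℕ → ℝ) (A : Fin n → Finset t.Arc),
    CGame.IsSPO (SNCGep t d n) A → SPOL t.paths n d (List.ofFn A) := by
  intro n
  induction n with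
  | zero => intro d A _; rfl
  | succ n ih =>
      intro d A hA
      obtain ⟨hA0, f, hf, hfA, hopt⟩ := hA
      refine ⟨A 0, List.ofFn (Fin.tail A), fun Q => List.ofFn (f Q),
        List.ofFn_succ (f := A), hA0, ?_, ?_, ?_⟩
      · intro Q hQ
        exact ih (shiftD d Q) (f Q) (hf Q hQ)
      · show List.ofFn (f (A 0)) = List.ofFn (Fin.tail A)
        rw [hfA]
      · intro Q hQ
        have h := hopt Q hQ
        rw [cost_cons_zero, cost_cons_zero] at h
        rwa [hfA] at h

lemma one_player_cost (G : CGame R 1) (A : Fin 1 → Finset R) :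
    G.cost A 0 = ∑ r ∈ A 0, G.delay r 1 := by
  unfold CGame.cost
  refine Finset.sum_congr rfl fun r hr => ?_
  congr 1
  unfold CGame.congestion
  rw [show (Finset.univ : Finset (Fin 1)) = {0} from rfl, Finset.filter_singleton, if_pos hr]
  rfl

lemma spo_one : ∀ {m : ℕ} (hm : m = 1) (G : CGame R m) (B : Fin m → Finset R),
    CGame.IsSPO G B → ∀ (i0 : Fin m),
      B i0 ∈ G.actions i0 ∧
        ∀ a ∈ G.actions i0, ∑ r ∈ B i0, G.delay r 1 ≤ ∑ r ∈ a, G.delay r 1 := by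
  rintro m rfl G B hB i0
  obtain ⟨hB0, f, hf, hfB, hopt⟩ := hB
  have hi0 : i0 = 0 := Subsingleton.elim _ _
  subst hi0
  refine ⟨hB0, ?_⟩
  intro a ha
  have h := hopt a ha
  rw [one_player_cost, one_player_cost] at h
  simpa using h

lemma isKLA_greedyL : ∀ (n : ℕ) (d : t.Arc → ℕ → ℝ) (A : Fin n → Finset t.Arc),
    CGame.IsKLA 1 (SNCGep t d n) A → GreedyL t.paths n d (List.ofFn A) := by
  intro n
  induction n with
  | zero => intro d A _; rfl
  | succ n ih =>
      intro d A hA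
      obtain ⟨⟨hk, B, hSPO, hB0⟩, htail⟩ := hA
      have hone := spo_one (by omega) _ B hSPO ⟨0, hk⟩
      rw [hB0] at hone
      obtain ⟨hA0, hmin⟩ := hone
      refine ⟨A 0, List.ofFn (Fin.tail A), List.ofFn_succ (f := A), hA0, ?_, ?_⟩
      · intro Q hQ
        exact hmin Q hQ
      · exact ih (shiftD d (A 0)) (Fin.tail A) htail

lemma reorder_eq {n : ℕ} (d : t.Arc → ℕ → ℝ) (σ : Equiv.Perm (Fin n)) :
    (SNCGep t d n).reorder σ = SNCGep t d n := rfl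

lemma cost_comp {n : ℕ} (d : t.Arc → ℕ → ℝ) (A : Fin n → Finset t.Arc)
    (σ : Equiv.Perm (Fin n)) (i : Fin n) :
    (SNCGep t d n).cost (A ∘ σ) i = (SNCGep t d n).cost A (σ i) := by
  unfold CGame.cost
  refine Finset.sum_congr rfl fun r hr => ?_
  congr 1
  unfold CGame.congestion
  apply Finset.card_bij (fun i _ => σ i)
  · intro a ha
    simp only [Finset.mem_filter, Finset.mem_univ, true_and] at ha ⊢
    exact ha
  · intro a _ b _ h
    exact σ.injective h
  · intro b hb
    refine ⟨σ.symm b, ?_, by simp⟩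
    simp only [Finset.mem_filter, Finset.mem_univ, true_and] at hb ⊢
    simpa using hb

lemma worstCost_comp {n : ℕ} (d : t.Arc → ℕ → ℝ) (A : Fin n → Finset t.Arc)
    (σ : Equiv.Perm (Fin n)) :
    (SNCGep t d n).worstCost (A ∘ σ) = (SNCGep t d n).worstCost A := by
  unfold CGame.worstCost
  congr 1
  ext y
  constructor
  · rintro ⟨i, rfl⟩
    exact ⟨σ i, cost_comp t d A σ i⟩
  · rintro ⟨i, rfl⟩
    refine ⟨σ.symm i, ?_⟩
    rw [cost_comp, Equiv.apply_symm_apply]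

end EPWork
/-- For every SNCG on an extension-parallel graph, every
subgame-perfect outcome has optimal egalitarian social cost: its worst cost equals the
worst cost of every 1-lookahead outcome. -/
theorem ep_spo_optimal_egalitarian (t : EPTree) (d : t.Arc → ℕ → ℝ)
    (hmono : ∀ r, Monotone (d r)) (hnonneg : ∀ r m, 0 ≤ d r m)
    (n : ℕ) (A : Fin n → Finset t.Arc)
    (hA : CGame.IsSPOutcome (SNCGep t d n) A)
    (B : Fin n → Finset t.Arc) (hB : CGame.IsKLO 1 (SNCGep t d n) B) :
    CGame.worstCost (SNCGep t d n) A = CGame.worstCost (SNCGep t d n) B := by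
  obtain ⟨σ, hσ⟩ := hA
  obtain ⟨τ, hτ⟩ := hB
  have hm : EPWork.MonoD d := hmono
  have hn : EPWork.NonnegD d := hnonneg
  rw [EPWork.reorder_eq] at hσ hτ
  have h1 := EPWork.spoL_worst t n d hm hn _ (EPWork.isSPO_spoL t n d (A ∘ σ) hσ)
  have h2 := EPWork.greedyL_worst t n d hm hn _ (EPWork.isKLA_greedyL t n d (B ∘ τ) hτ)
  calc CGame.worstCost (SNCGep t d n) A
      = CGame.worstCost (SNCGep t d n) (A ∘ σ) := (EPWork.worstCost_comp t d A σ).symm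
    _ = EPWork.worstL d (List.ofFn (A ∘ σ)) := EPWork.worstCost_eq t n d hn (A ∘ σ)
    _ = EPWork.Lmin t.paths d n := h1
    _ = EPWork.worstL d (List.ofFn (B ∘ τ)) := h2.symm
    _ = CGame.worstCost (SNCGep t d n) (B ∘ τ) := (EPWork.worstCost_eq t n d hn _).symm
    _ = CGame.worstCost (SNCGep t d n) B := EPWork.worstCost_comp t d B τ
end

section
/- Let G be a generic symmetric cost-sharing game with n players and common action set 𝒜, and let k ∈ {1,…,n}. Let P_k be the unique minimizer of Σ_{r∈A} d_r(k) over A ∈ 𝒜. Then every k-lookahead outcome of G equals (P_k,…,P_k), and this outcome is a Nash equilibrium of G. In particular, every subgame-perfect outcome of G equals (P_n,…,P_n) and minimizes the social cost over all outcomes. -/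
set_option linter.unusedSectionVars false

section Aux

open CGame Finset

variable {R : Type} [DecidableEq R] [Fintype R]

/-- count of previously played actions containing `r` -/
def cntg {t : ℕ} (g : Fin t → Finset R) (r : R) : ℕ :=
  (Finset.univ.filter fun i => r ∈ g i).card

lemma cntg_zero (g : Fin 0 → Finset R) (r : R) : cntg g r = 0 := by
  simp [cntg]

lemma cntg_cons {t : ℕ} (a : Finset R) (g : Fin t → Finset R) (r : R) :
    cntg (Fin.cons a g) r = (if r ∈ a then 1 else 0) + cntg g r := by
  unfold cntg
  rw [Finset.card_filter, Finset.card_filter, Fin.sum_univ_succ]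
  simp

lemma cntg_const {s : ℕ} (P : Finset R) (r : R) :
    cntg (fun _ : Fin s => P) r = if r ∈ P then s else 0 := by
  simp [cntg, Finset.filter_const]
  split <;> simp

variable (𝒜 : Finset (Finset R)) (d : R → ℕ → ℝ)

/-- the symmetric game with `m` players, common action set `𝒜`, and delays shifted by `c` -/
def mkg (m : ℕ) (c : R → ℕ) : CGame R m := ⟨fun _ => 𝒜, fun r y => d r (y + c r)⟩

lemma subgame_mkg {m t : ℕ} (g : Fin t → Finset R) (a : Finset R) :
    (mkg 𝒜 d (m + 1) (cntg g)).subgame a = mkg 𝒜 d m (cntg (Fin.cons a g)) := by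
  unfold mkg CGame.subgame
  congr 1
  funext r y
  rw [cntg_cons]
  by_cases h : r ∈ a <;> simp [h] <;> congr 1 <;> omega

lemma truncate_mkg {m : ℕ} (c : R → ℕ) (k : ℕ) :
    (mkg 𝒜 d m c).truncate k = mkg 𝒜 d (min k m) c := rfl

lemma mk_delay {n : ℕ} (a : Fin n → Finset (Finset R)) (δ : R → ℕ → ℝ) :
    (CGame.mk a δ).delay = δ := rfl

/-- genericity implies that `Q ↦ ∑_{r ∈ Q} d_r(m + cnt_g(r))` is injective on `𝒜`. -/
lemma gen_inj {n : ℕ} (hgen : CGame.Generic (⟨fun _ => 𝒜, d⟩ : CGame R n))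
    {m t : ℕ} (hm : 1 ≤ m) (g : Fin t → Finset R) (hg : ∀ i, g i ∈ 𝒜)
    (htm : t + m ≤ n) {Q1 Q2 : Finset R} (h1 : Q1 ∈ 𝒜) (h2 : Q2 ∈ 𝒜) (hne : Q1 ≠ Q2) :
    ∑ r ∈ Q1, d r (m + cntg g r) ≠ ∑ r ∈ Q2, d r (m + cntg g r) := by
  classical
  set e : Fin (t + m) ↪ Fin n := Fin.castLEEmb htm with he
  set s : Finset (Fin n) := Finset.univ.map e with hs
  set AQ : Finset R → Fin n → Finset R :=
    fun Q i => if h : (i : ℕ) < t then g ⟨i, h⟩ else Q with hAQ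
  have hmem : ∀ Q, Q ∈ 𝒜 → ∀ i, AQ Q i ∈ 𝒜 := by
    intro Q hQ i
    simp only [hAQ]
    split
    · exact hg _
    · exact hQ
  have hjlt : t < t + m := by omega
  set j : Fin n := e ⟨t, hjlt⟩ with hjdef
  have hjs : j ∈ s := by simp [hs]; exact ⟨⟨t, hjlt⟩, rfl⟩
  have hjval : (j : ℕ) = t := rfl
  have hAj : ∀ Q, AQ Q j = Q := by
    intro Q
    simp only [hAQ]
    rw [dif_neg (by omega)]
  have hA1 : ∀ (Q : Finset R) (i : Fin t), AQ Q (e (Fin.castAdd m i)) = g i := by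
    intro Q i
    have hv : ((e (Fin.castAdd m i)) : ℕ) = (i : ℕ) := rfl
    simp only [hAQ]
    rw [dif_pos (show ((e (Fin.castAdd m i)) : ℕ) < t by rw [hv]; exact i.isLt)]
    exact congrArg g (Fin.ext hv)
  have hA2 : ∀ (Q : Finset R) (i : Fin m), AQ Q (e (Fin.natAdd t i)) = Q := by
    intro Q i
    have hv : ((e (Fin.natAdd t i)) : ℕ) = t + (i : ℕ) := rfl
    simp only [hAQ]
    rw [dif_neg (by omega)]
  have hcount : ∀ (Q : Finset R) (r : R),
      (s.filter fun i => r ∈ AQ Q i).card = cntg g r + (if r ∈ Q then m else 0) := by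
    intro Q r
    rw [hs, Finset.filter_map, Finset.card_map, Finset.card_filter, Fin.sum_univ_add]
    congr 1
    · rw [cntg, Finset.card_filter]
      apply Finset.sum_congr rfl
      intro i _
      simp only [Function.comp_apply, hA1]
    · have : ∀ i : Fin m, (if ((fun i => r ∈ AQ Q i) ∘ e) (Fin.natAdd t i) then 1 else 0)
          = (if r ∈ Q then 1 else 0) := by
        intro i
        simp only [Function.comp_apply, hA2]
      rw [Finset.sum_congr rfl fun i _ => this i]
      by_cases hq : r ∈ Q <;> simp [hq]
  have hcost : ∀ Q, Q ∈ 𝒜 →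
      CGame.costOn (⟨fun _ => 𝒜, d⟩ : CGame R n) s (AQ Q) j = ∑ r ∈ Q, d r (m + cntg g r) := by
    intro Q hQ
    unfold CGame.costOn
    rw [hAj]
    apply Finset.sum_congr rfl
    intro r hr
    rw [mk_delay, hcount, if_pos hr]
    congr 1
    omega
  have hneval := hgen s (AQ Q1) (AQ Q2) (fun i _ => hmem Q1 h1 i) (fun i _ => hmem Q2 h2 i)
    j hjs (by rw [hAj, hAj]; exact hne)
  rw [hcost Q1 h1, hcost Q2 h2] at hneval
  exact hneval

lemma congestion_cons {m : ℕ} (G : CGame R (m + 1)) (a Q : Finset R)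
    (B : Fin m → Finset R) (hB : ∀ i, B i = Q) (r : R) :
    G.congestion (Fin.cons a B) r
      = (if r ∈ a then 1 else 0) + (if r ∈ Q then m else 0) := by
  unfold CGame.congestion
  rw [Finset.card_filter, Fin.sum_univ_succ]
  simp only [Fin.cons_zero, Fin.cons_succ, hB]
  by_cases hq : r ∈ Q <;> by_cases ha : r ∈ a <;> simp [hq, ha]

lemma cost_cons_const {m : ℕ} (c : R → ℕ) (a Q : Finset R)
    (B : Fin m → Finset R) (hB : ∀ i, B i = Q) :
    (mkg 𝒜 d (m + 1) c).cost (Fin.cons a B) 0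
      = ∑ r ∈ a, d r ((1 + if r ∈ Q then m else 0) + c r) := by
  unfold CGame.cost
  simp only [Fin.cons_zero]
  apply Finset.sum_congr rfl
  intro r hr
  rw [congestion_cons (mkg 𝒜 d (m + 1) c) a Q B hB, if_pos hr]
  rfl

lemma congestion_const {m : ℕ} (G : CGame R m) (Q : Finset R) (r : R) :
    G.congestion (fun _ => Q) r = if r ∈ Q then m else 0 := by
  unfold CGame.congestion
  by_cases h : r ∈ Q <;> simp [h, Finset.filter_const]

lemma congestion_update {m : ℕ} (G : CGame R m) (Q B : Finset R) (i : Fin m) (r : R) :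
    G.congestion (Function.update (fun _ => Q) i B) r
      = (if r ∈ Q then m - 1 else 0) + (if r ∈ B then 1 else 0) := by
  unfold CGame.congestion
  rw [Finset.card_filter, ← Finset.sum_erase_add _ _ (Finset.mem_univ i)]
  have h1 : ∀ j ∈ Finset.univ.erase i,
      (if r ∈ Function.update (fun _ => Q) i B j then 1 else 0)
        = (if r ∈ Q then 1 else 0) := by
    intro j hj
    rw [Function.update_of_ne (Finset.mem_erase.mp hj).1]
  rw [Finset.sum_congr rfl h1, Function.update_self]
  congr 1
  by_cases hq : r ∈ Q <;>
    simp [hq, Finset.card_erase_of_mem]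

/-- In the symmetric cost-sharing game with `m` players and shifts coming from previously
played actions `g`, every SPO is constant equal to a minimizer of `∑_{r∈Q} d_r(m + cnt_g r)`. -/
lemma spo_const {n : ℕ} (h𝒜 : 𝒜.Nonempty) (hanti : ∀ r, Antitone (d r))
    (hgen : CGame.Generic (⟨fun _ => 𝒜, d⟩ : CGame R n)) :
    ∀ m t (g : Fin t → Finset R), (∀ i, g i ∈ 𝒜) → t + m ≤ n →
      ∀ A : Fin m → Finset R, CGame.IsSPO (mkg 𝒜 d m (cntg g)) A →
      ∃ P ∈ 𝒜, (∀ Q ∈ 𝒜, ∑ r ∈ P, d r (m + cntg g r) ≤ ∑ r ∈ Q, d r (m + cntg g r)) ∧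
        ∀ i, A i = P := by
  intro m
  induction m with
  | zero =>
    intro t g hg htm A _
    obtain ⟨P, hP, hmin⟩ := Finset.exists_min_image 𝒜
      (fun Q => ∑ r ∈ Q, d r (0 + cntg g r)) h𝒜
    exact ⟨P, hP, hmin, fun i => i.elim0⟩
  | succ m ih =>
    intro t g hg htm A hA
    obtain ⟨hA0, f, hf, hfA0, hbest⟩ := hA
    obtain ⟨P, hPmem, hPmin⟩ := Finset.exists_min_image 𝒜
      (fun Q => ∑ r ∈ Q, d r ((m + 1) + cntg g r)) h𝒜
    have hPstrict : ∀ Q ∈ 𝒜, Q ≠ P →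
        ∑ r ∈ P, d r ((m + 1) + cntg g r) < ∑ r ∈ Q, d r ((m + 1) + cntg g r) := by
      intro Q hQ hne
      exact lt_of_le_of_ne (hPmin Q hQ)
        (Ne.symm (gen_inj 𝒜 d hgen (by omega) g hg (by omega) hQ hPmem hne))
    have hsub : ∀ a, a ∈ 𝒜 → CGame.IsSPO (mkg 𝒜 d m (cntg (Fin.cons a g))) (f a) := by
      intro a ha
      rw [← subgame_mkg]
      exact hf a ha
    have hconsmem : ∀ a, a ∈ 𝒜 → ∀ i : Fin (t + 1), (Fin.cons a g : Fin (t+1) → Finset R) i ∈ 𝒜 := by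
      intro a ha i
      refine Fin.cases ?_ ?_ i
      · simpa using ha
      · intro j; simpa using hg j
    obtain ⟨QP, hQPmem, hQPmin, hQPconst⟩ :=
      ih (t + 1) (Fin.cons P g) (hconsmem P hPmem) (by omega) (f P) (hsub P hPmem)
    have hQP : QP = P := by
      by_contra hne
      have h1 : ∑ r ∈ QP, d r ((m + 1) + cntg g r)
          ≤ ∑ r ∈ QP, d r (m + cntg (Fin.cons P g) r) := by
        apply Finset.sum_le_sum
        intro r _
        apply hanti r
        rw [cntg_cons]
        split <;> omega
      have h2 := hQPmin P hPmem
      have h3 : ∑ r ∈ P, d r (m + cntg (Fin.cons P g) r)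
          = ∑ r ∈ P, d r ((m + 1) + cntg g r) := by
        apply Finset.sum_congr rfl
        intro r hr
        rw [cntg_cons, if_pos hr]
        congr 1
        omega
      have h4 := hPstrict QP hQPmem hne
      linarith
    have hcostP : (mkg 𝒜 d (m + 1) (cntg g)).cost (Fin.cons P (f P)) 0
        = ∑ r ∈ P, d r ((m + 1) + cntg g r) := by
      rw [cost_cons_const 𝒜 d (cntg g) P QP (f P) hQPconst]
      apply Finset.sum_congr rfl
      intro r hr
      rw [hQP, if_pos hr]
      congr 1
      omega
    have hcostA0ge : ∑ r ∈ A 0, d r ((m + 1) + cntg g r)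
        ≤ (mkg 𝒜 d (m + 1) (cntg g)).cost (Fin.cons (A 0) (f (A 0))) 0 := by
      obtain ⟨Q0, hQ0mem, _, hQ0const⟩ :=
        ih (t + 1) (Fin.cons (A 0) g) (hconsmem (A 0) hA0) (by omega) (f (A 0))
          (hsub (A 0) hA0)
      rw [cost_cons_const 𝒜 d (cntg g) (A 0) Q0 (f (A 0)) hQ0const]
      apply Finset.sum_le_sum
      intro r _
      apply hanti r
      split <;> omega
    have hA0P : A 0 = P := by
      by_contra hne
      have hb := hbest P hPmem
      rw [hcostP] at hb
      have hstrict := hPstrict (A 0) hA0 hne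
      linarith
    refine ⟨P, hPmem, hPmin, ?_⟩
    intro i
    refine Fin.cases hA0P (fun j => ?_) i
    have htail : Fin.tail A j = QP := by
      rw [← hfA0, hA0P]
      exact hQPconst j
    rw [← hQP]
    exact htail

/-- The minimizer at level `k` strictly minimizes shifted objectives with `m' ≤ k ≤ m' + s`. -/
lemma pk_strict (hanti : ∀ r, Antitone (d r)) {k : ℕ} (Pk : Finset R)
    (hPkmin : ∀ Q ∈ 𝒜, Q ≠ Pk → ∑ r ∈ Pk, d r k < ∑ r ∈ Q, d r k)
    {m' s : ℕ} (h1 : m' ≤ k) (h2 : k ≤ m' + s)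
    {Q : Finset R} (hQ : Q ∈ 𝒜) (hne : Q ≠ Pk) :
    ∑ r ∈ Pk, d r (m' + s) < ∑ r ∈ Q, d r (m' + if r ∈ Pk then s else 0) := by
  have key : ∑ r ∈ Pk \ Q, d r k < ∑ r ∈ Q \ Pk, d r k := by
    have h := hPkmin Q hQ hne
    rw [← Finset.sum_inter_add_sum_sdiff Pk Q (fun r => d r k),
        ← Finset.sum_inter_add_sum_sdiff Q Pk (fun r => d r k),
        Finset.inter_comm] at h
    linarith
  have hL : ∑ r ∈ Pk, d r (m' + s)
      = ∑ r ∈ Pk ∩ Q, d r (m' + s) + ∑ r ∈ Pk \ Q, d r (m' + s) :=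
    (Finset.sum_inter_add_sum_sdiff Pk Q _).symm
  have hR : ∑ r ∈ Q, d r (m' + if r ∈ Pk then s else 0)
      = ∑ r ∈ Pk ∩ Q, d r (m' + s) + ∑ r ∈ Q \ Pk, d r m' := by
    rw [← Finset.sum_inter_add_sum_sdiff Q Pk (fun r => d r (m' + if r ∈ Pk then s else 0))]
    congr 1
    · rw [Finset.inter_comm]
      apply Finset.sum_congr rfl
      intro r hr
      rw [if_pos (Finset.mem_inter.mp hr).1]
    · apply Finset.sum_congr rfl
      intro r hr
      rw [if_neg (Finset.mem_sdiff.mp hr).2, Nat.add_zero]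
  have e1 : ∑ r ∈ Pk \ Q, d r (m' + s) ≤ ∑ r ∈ Pk \ Q, d r k :=
    Finset.sum_le_sum fun r _ => hanti r h2
  have e2 : ∑ r ∈ Q \ Pk, d r k ≤ ∑ r ∈ Q \ Pk, d r m' :=
    Finset.sum_le_sum fun r _ => hanti r h1
  rw [hL, hR]
  linarith

/-- Every `k`-lookahead play (after `s` players already committed to `Pk`) is constant `Pk`. -/
lemma kla_const {n : ℕ} (h𝒜 : 𝒜.Nonempty) (hanti : ∀ r, Antitone (d r))
    (hgen : CGame.Generic (⟨fun _ => 𝒜, d⟩ : CGame R n))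
    {k : ℕ} (hk1 : 1 ≤ k) (hkn : k ≤ n) (Pk : Finset R) (hPkmem : Pk ∈ 𝒜)
    (hPkmin : ∀ Q ∈ 𝒜, Q ≠ Pk → ∑ r ∈ Pk, d r k < ∑ r ∈ Q, d r k) :
    ∀ m s, s + m = n →
      ∀ A : Fin m → Finset R,
        CGame.IsKLA k (mkg 𝒜 d m (cntg (fun _ : Fin s => Pk))) A → ∀ i, A i = Pk := by
  intro m
  induction m with
  | zero => intro s h A hA i; exact i.elim0
  | succ m ih =>
    intro s hs A hA
    obtain ⟨⟨hk0, B, hB, hB0⟩, htail⟩ := hA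
    rw [truncate_mkg] at hB
    obtain ⟨P', hP'mem, hP'min, hP'const⟩ :=
      spo_const 𝒜 d h𝒜 hanti hgen (min k (m + 1)) s (fun _ => Pk) (fun _ => hPkmem)
        (by omega) B hB
    have hP'Pk : P' = Pk := by
      by_contra hne
      have hstrict := pk_strict 𝒜 d hanti Pk hPkmin (m' := min k (m + 1)) (s := s)
        (by omega) (by omega) hP'mem hne
      have hmin := hP'min Pk hPkmem
      have eL : ∑ r ∈ Pk, d r (min k (m + 1) + cntg (fun _ : Fin s => Pk) r)
          = ∑ r ∈ Pk, d r (min k (m + 1) + s) := by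
        apply Finset.sum_congr rfl
        intro r hr
        rw [cntg_const, if_pos hr]
      have eR : ∑ r ∈ P', d r (min k (m + 1) + cntg (fun _ : Fin s => Pk) r)
          = ∑ r ∈ P', d r (min k (m + 1) + if r ∈ Pk then s else 0) := by
        apply Finset.sum_congr rfl
        intro r _
        rw [cntg_const]
      rw [eL, eR] at hmin
      linarith
    have hA0 : A 0 = Pk := by
      rw [← hB0, hP'const ⟨0, hk0⟩]
      exact hP'Pk
    have htail2 := htail
    rw [hA0] at htail2
    have htail' : CGame.IsKLA k (mkg 𝒜 d m (cntg (fun _ : Fin (s + 1) => Pk))) (Fin.tail A) := by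
      have hcons : (fun _ : Fin (s + 1) => Pk) = Fin.cons Pk (fun _ : Fin s => Pk) := by
        funext i
        refine Fin.cases ?_ ?_ i <;> simp
      rw [hcons, ← subgame_mkg]
      exact htail2
    intro i
    refine Fin.cases hA0 (fun j => ih (s + 1) (by omega) (Fin.tail A) htail' j) i

end Aux

/-- In a generic symmetric cost-sharing game, every `k`-lookahead
outcome equals `(P_k,…,P_k)` where `P_k` is the unique minimizer of `∑_{r∈A} d_r(k)`,
and is a Nash equilibrium; in particular every subgame-perfect outcome equals
`(P_n,…,P_n)` and minimizes the social cost. -/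
theorem generic_symmetric_costsharing {R : Type} [DecidableEq R] [Fintype R] {n : ℕ}
    (𝒜 : Finset (Finset R)) (h𝒜 : 𝒜.Nonempty) (d : R → ℕ → ℝ)
    (hanti : ∀ r, Antitone (d r))
    (hnonneg : ∀ r m, 0 ≤ d r m)
    (hgen : CGame.Generic (⟨fun _ => 𝒜, d⟩ : CGame R n))
    (k : ℕ) (hk1 : 1 ≤ k) (hkn : k ≤ n)
    (Pk : Finset R) (hPk : Pk ∈ 𝒜)
    (hPkmin : ∀ Q ∈ 𝒜, Q ≠ Pk → ∑ r ∈ Pk, d r k < ∑ r ∈ Q, d r k)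
    (Pn : Finset R) (hPn : Pn ∈ 𝒜)
    (hPnmin : ∀ Q ∈ 𝒜, Q ≠ Pn → ∑ r ∈ Pn, d r n < ∑ r ∈ Q, d r n) :
    (∀ A, CGame.IsKLO k (⟨fun _ => 𝒜, d⟩ : CGame R n) A →
      A = (fun _ => Pk) ∧ CGame.IsNash (⟨fun _ => 𝒜, d⟩ : CGame R n) A) ∧
    (∀ A, CGame.IsSPOutcome (⟨fun _ => 𝒜, d⟩ : CGame R n) A →
      A = (fun _ => Pn) ∧
      ∀ B, CGame.IsOutcome (⟨fun _ => 𝒜, d⟩ : CGame R n) B →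
        CGame.SC (⟨fun _ => 𝒜, d⟩ : CGame R n) A ≤ CGame.SC (⟨fun _ => 𝒜, d⟩ : CGame R n) B) := by
  classical
  have hGk : mkg 𝒜 d n (cntg (fun _ : Fin 0 => Pk)) = (⟨fun _ => 𝒜, d⟩ : CGame R n) := by
    unfold mkg
    simp only [cntg_zero, Nat.add_zero]
  have hreorder : ∀ σ : Equiv.Perm (Fin n),
      CGame.reorder (⟨fun _ => 𝒜, d⟩ : CGame R n) σ = ⟨fun _ => 𝒜, d⟩ := fun σ => rfl
  constructor
  · intro A hKLO
    obtain ⟨σ, hσ⟩ := hKLO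
    rw [hreorder σ, ← hGk] at hσ
    have hconstσ := kla_const 𝒜 d h𝒜 hanti hgen hk1 hkn Pk hPk hPkmin n 0 (by omega) (A ∘ σ) hσ
    have hconst : ∀ j, A j = Pk := by
      intro j
      have h := hconstσ (σ.symm j)
      simpa using h
    have hAeq : A = fun _ => Pk := funext hconst
    subst hAeq
    refine ⟨rfl, fun i => hPk, ?_⟩
    intro i B hB
    have hcostA : CGame.cost (⟨fun _ => 𝒜, d⟩ : CGame R n) (fun _ => Pk) i
        = ∑ r ∈ Pk, d r n := by
      unfold CGame.cost
      apply Finset.sum_congr rfl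
      intro r hr
      rw [mk_delay, congestion_const, if_pos hr]
    have hcostB : CGame.cost (⟨fun _ => 𝒜, d⟩ : CGame R n) (Function.update (fun _ => Pk) i B) i
        = ∑ r ∈ B, d r ((if r ∈ Pk then n - 1 else 0) + 1) := by
      unfold CGame.cost
      rw [Function.update_self]
      apply Finset.sum_congr rfl
      intro r hr
      rw [mk_delay, congestion_update, if_pos hr]
    by_cases hBP : B = Pk
    · subst hBP
      have hupd : Function.update (fun _ : Fin n => B) i B = fun _ => B :=
        Function.update_eq_self i _
      rw [hupd]
    · have hstrict := pk_strict 𝒜 d hanti Pk hPkmin (m' := 1) (s := n - 1) hk1 (by omega) hB hBP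
      rw [hcostA, hcostB]
      have e1 : ∑ r ∈ Pk, d r n = ∑ r ∈ Pk, d r (1 + (n - 1)) := by
        apply Finset.sum_congr rfl
        intro r _
        congr 1
        omega
      have e2 : ∑ r ∈ B, d r ((if r ∈ Pk then n - 1 else 0) + 1)
          = ∑ r ∈ B, d r (1 + if r ∈ Pk then n - 1 else 0) := by
        apply Finset.sum_congr rfl
        intro r _
        congr 1
        exact Nat.add_comm _ _
      rw [e1, e2]
      exact le_of_lt hstrict
  · intro A hSPOut
    obtain ⟨σ, hσ⟩ := hSPOut
    rw [hreorder σ, ← hGk] at hσ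
    obtain ⟨P', hP'mem, hP'min, hP'const⟩ :=
      spo_const 𝒜 d h𝒜 hanti hgen n 0 (fun _ : Fin 0 => Pk) (fun i => i.elim0) (by omega)
        (A ∘ σ) hσ
    have e : ∀ Q : Finset R,
        ∑ r ∈ Q, d r (n + cntg (fun _ : Fin 0 => Pk) r) = ∑ r ∈ Q, d r n := by
      intro Q
      apply Finset.sum_congr rfl
      intro r _
      rw [cntg_zero, Nat.add_zero]
    have hP'Pn : P' = Pn := by
      by_contra hne
      have h1 := hPnmin P' hP'mem hne
      have h2 := hP'min Pn hPn
      rw [e, e] at h2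
      linarith
    have hconst : ∀ j, A j = Pn := by
      intro j
      have h := hP'const (σ.symm j)
      rw [hP'Pn] at h
      simpa using h
    have hAeq : A = fun _ => Pn := funext hconst
    subst hAeq
    refine ⟨rfl, ?_⟩
    intro B hB
    have hcostA : ∀ i : Fin n, CGame.cost (⟨fun _ => 𝒜, d⟩ : CGame R n) (fun _ => Pn) i
        = ∑ r ∈ Pn, d r n := by
      intro i
      unfold CGame.cost
      apply Finset.sum_congr rfl
      intro r hr
      rw [mk_delay, congestion_const, if_pos hr]
    have hcong : ∀ r, CGame.congestion (⟨fun _ => 𝒜, d⟩ : CGame R n) B r ≤ n := by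
      intro r
      unfold CGame.congestion
      calc (Finset.univ.filter fun i => r ∈ B i).card
          ≤ Finset.univ.card := Finset.card_filter_le _ _
        _ = n := by simp
    have hbound : ∀ i : Fin n, ∑ r ∈ Pn, d r n
        ≤ CGame.cost (⟨fun _ => 𝒜, d⟩ : CGame R n) B i := by
      intro i
      have s1 : ∑ r ∈ Pn, d r n ≤ ∑ r ∈ B i, d r n := by
        by_cases h : B i = Pn
        · rw [h]
        · exact le_of_lt (hPnmin (B i) (hB i) h)
      have s2 : ∑ r ∈ B i, d r n ≤ CGame.cost (⟨fun _ => 𝒜, d⟩ : CGame R n) B i := by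
        unfold CGame.cost
        apply Finset.sum_le_sum
        intro r _
        rw [mk_delay]
        exact hanti r (hcong r)
      linarith
    unfold CGame.SC
    apply Finset.sum_le_sum
    intro i _
    rw [hcostA i]
    exact hbound i
end

section
/- Let G be a congestion game with n players and let A be an outcome such that for every outcome B and every player i with B_i ≠ A_i, c_i(A) < c_i(B). Then for every ordering of the players, A (correspondingly reordered) is the unique subgame-perfect outcome of G with respect to that order. -/
namespace CGame

variable {R : Type} [DecidableEq R] [Fintype R] {n : ℕ}

lemma congestion_cons (G : CGame R (n + 1)) (a : Finset R) (B : Fin n → Finset R) (r : R) :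
    G.congestion (Fin.cons a B) r
      = (Finset.univ.filter fun i : Fin n => r ∈ B i).card + (if r ∈ a then 1 else 0) := by
  unfold congestion
  rw [Finset.card_filter, Finset.card_filter, Fin.sum_univ_succ]
  simp [Fin.cons_succ, Fin.cons_zero, add_comm]

lemma cost_subgame (G : CGame R (n + 1)) (a : Finset R) (B : Fin n → Finset R) (i : Fin n) :
    (G.subgame a).cost B i = G.cost (Fin.cons a B) i.succ := by
  unfold cost subgame
  simp only [Fin.cons_succ]
  refine Finset.sum_congr rfl fun r _ => ?_
  rw [congestion_cons]
  rfl

lemma spo_isOutcome : ∀ {n : ℕ} (G : CGame R n) (A : Fin n → Finset R),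
    IsSPO G A → IsOutcome G A
  | 0, _, _, _ => fun i => i.elim0
  | n + 1, G, A, h => by
    obtain ⟨h0, f, hf, hfA, _⟩ := h
    intro i
    refine Fin.cases h0 (fun j => ?_) i
    have := spo_isOutcome (G.subgame (A 0)) (f (A 0)) (hf _ h0)
    rw [hfA] at this
    exact this j

lemma spo_exists : ∀ {n : ℕ} (G : CGame R n), (∀ i, (G.actions i).Nonempty) →
    ∃ A, IsSPO G A
  | 0, _, _ => ⟨fun i => i.elim0, trivial⟩
  | n + 1, G, hne => by
    choose f hf using fun a : Finset R =>
      spo_exists (G.subgame a) (fun i => hne i.succ)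
    obtain ⟨a₀, ha₀, hmin⟩ :=
      (G.actions 0).exists_min_image (fun a => G.cost (Fin.cons a (f a)) 0) (hne 0)
    refine ⟨Fin.cons a₀ (f a₀), ha₀, f, fun a _ => hf a, ?_, ?_⟩
    · simp [Fin.tail_cons]
    · intro a ha
      simpa using hmin a ha

lemma dominant_main : ∀ {n : ℕ} (G : CGame R n), (∀ i, (G.actions i).Nonempty) →
    ∀ A : Fin n → Finset R, G.IsOutcome A →
    (∀ B, G.IsOutcome B → ∀ i, B i ≠ A i → G.cost A i < G.cost B i) →
    IsSPO G A ∧ ∀ C, IsSPO G C → C = A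
  | 0, _, _, A, _, _ => ⟨trivial, fun C _ => funext fun i => i.elim0⟩
  | n + 1, G, hne, A, hA, hdom => by
    classical
    have hne' : ∀ i, ((G.subgame (A 0)).actions i).Nonempty := fun i => hne i.succ
    have hA' : (G.subgame (A 0)).IsOutcome (Fin.tail A) := fun i => hA i.succ
    have hdom' : ∀ B, (G.subgame (A 0)).IsOutcome B → ∀ i, B i ≠ Fin.tail A i →
        (G.subgame (A 0)).cost (Fin.tail A) i < (G.subgame (A 0)).cost B i := by
      intro B hB i hBi
      have hfull : G.IsOutcome (Fin.cons (A 0) B) := by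
        intro j
        refine Fin.cases (by simpa using hA 0) (fun k => by simpa [subgame] using hB k) j
      have := hdom (Fin.cons (A 0) B) hfull i.succ (by simpa [Fin.tail] using hBi)
      rw [cost_subgame, cost_subgame, Fin.cons_self_tail]
      exact this
    obtain ⟨hSPO', huniq'⟩ :=
      dominant_main (G.subgame (A 0)) hne' (Fin.tail A) hA' hdom'
    choose g hg using fun a : Finset R =>
      spo_exists (G.subgame a) (fun i => hne i.succ)
    set f : Finset R → (Fin n → Finset R) :=
      fun a => if a = A 0 then Fin.tail A else g a with hfdef
    have hfA0 : f (A 0) = Fin.tail A := by simp [hfdef]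
    have hf : ∀ a ∈ G.actions 0, IsSPO (G.subgame a) (f a) := by
      intro a _
      by_cases h : a = A 0
      · subst h; rw [hfA0]; exact hSPO'
      · simpa [hfdef, h] using hg a
    have hmin : ∀ a ∈ G.actions 0,
        G.cost (Fin.cons (A 0) (f (A 0))) 0 ≤ G.cost (Fin.cons a (f a)) 0 := by
      intro a ha
      rw [hfA0, Fin.cons_self_tail]
      by_cases h : a = A 0
      · subst h; rw [hfA0, Fin.cons_self_tail]
      · have hout : G.IsOutcome (Fin.cons a (f a)) := by
          intro j
          refine Fin.cases (by simpa using ha) (fun k => ?_) j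
          have := spo_isOutcome _ _ (hf a ha) k
          simpa [subgame] using this
        exact le_of_lt (hdom _ hout 0 (by simpa using h))
    have hSPO : IsSPO G A := ⟨hA 0, f, hf, hfA0, hmin⟩
    refine ⟨hSPO, fun C hC => ?_⟩
    obtain ⟨hC0, gC, hgC, hgC0, hmc⟩ := hC
    have hCout : G.IsOutcome C := spo_isOutcome G C ⟨hC0, gC, hgC, hgC0, hmc⟩
    have hCA0 : C 0 = A 0 := by
      by_contra hne0
      have h1 := hmc (A 0) (hA 0)
      have h2 : gC (A 0) = Fin.tail A := huniq' _ (hgC (A 0) (hA 0))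
      rw [h2, Fin.cons_self_tail, hgC0, Fin.cons_self_tail] at h1
      exact absurd h1 (not_le.mpr (hdom C hCout 0 hne0))
    have h3 := hgC (C 0) hC0
    rw [hgC0, hCA0] at h3
    have hT : Fin.tail C = Fin.tail A := huniq' _ h3
    calc C = Fin.cons (C 0) (Fin.tail C) := (Fin.cons_self_tail C).symm
      _ = Fin.cons (A 0) (Fin.tail A) := by rw [hCA0, hT]
      _ = A := Fin.cons_self_tail A

lemma cost_reorder (G : CGame R n) (σ : Equiv.Perm (Fin n)) (B : Fin n → Finset R)
    (i : Fin n) : (G.reorder σ).cost (B ∘ σ) i = G.cost B (σ i) := by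
  unfold cost reorder congestion
  refine Finset.sum_congr rfl fun r _ => ?_
  show G.delay r _ = G.delay r _
  congr 1
  refine Finset.card_bij' (fun i _ => σ i) (fun j _ => σ.symm j) ?_ ?_ ?_ ?_ <;> simp

end CGame

/-- If `A` is an outcome such that every player playing a different
action in any other outcome is strictly worse off there, then for every ordering of the
players, `A` (correspondingly reordered) is the unique subgame-perfect outcome. -/
theorem dominant_outcome_unique_SPO {R : Type} [DecidableEq R] [Fintype R] {n : ℕ}
    (G : CGame R n)
    (hne : ∀ i, (G.actions i).Nonempty)
    (A : Fin n → Finset R) (hA : G.IsOutcome A)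
    (hdom : ∀ B, G.IsOutcome B → ∀ i, B i ≠ A i → G.cost A i < G.cost B i)
    (σ : Equiv.Perm (Fin n)) :
    CGame.IsSPO (G.reorder σ) (A ∘ σ) ∧
    ∀ C, CGame.IsSPO (G.reorder σ) C → C = A ∘ σ := by
  refine CGame.dominant_main (G.reorder σ) (fun i => hne (σ i)) (A ∘ σ)
    (fun i => hA (σ i)) ?_
  intro B' hB' i hBi
  have hBσ : B' = (B' ∘ ⇑σ.symm) ∘ ⇑σ := by
    funext j; simp
  have hBout : G.IsOutcome (B' ∘ ⇑σ.symm) := by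
    intro j
    have := hB' (σ.symm j)
    simpa [CGame.reorder] using this
  have hkey := hdom (B' ∘ ⇑σ.symm) hBout (σ i) (by simpa using hBi)
  rw [CGame.cost_reorder]
  calc (G.reorder σ).cost B' i = (G.reorder σ).cost ((B' ∘ ⇑σ.symm) ∘ ⇑σ) i := by
        rw [← hBσ]
    _ = G.cost (B' ∘ ⇑σ.symm) (σ i) := CGame.cost_reorder ..
    _ > G.cost A (σ i) := hkey
end
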